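/- arXiv:2205.12355 — 4 statements merged into one kernel-verified Lean document; each statement's English description precedes it below -/
import Mathlib

section
/- (Theorem 3.4, part (i): global existence of the Riccati solution when u₁ ≤ χ.) Let u₁ ∈ ℝ with u₁ ≤ L and suppose there exists x* ∈ ℝ with u₁ ≤ x* ≤ L and G(x*) ≤ 0. Then the initial value problem v(0) = u₁, v′(t) = G(v(t)) has a global solution on [0,∞): there exists a differentiable v : [0,∞) → ℝ with v(0) = u₁, v′(t) = G(v(t)) for all t ≥ 0, and v(t) ≤ max(u₁, x*) ≤ L for all t ≥ 0. -/
open MeasureTheory Real Set Filter Topology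

private lemma ineq_conv {p q w1 w2 x : ℝ} (hp : 0 ≤ p) (hq : 0 ≤ q) (hpq : p + q = 1) :
    Real.exp ((p * w1 + q * w2) * x) - 1 - (p * w1 + q * w2) * x ≤
      p * (Real.exp (w1 * x) - 1 - w1 * x) + q * (Real.exp (w2 * x) - 1 - w2 * x) := by
  have harg : (p * w1 + q * w2) * x = p * (w1 * x) + q * (w2 * x) := by ring
  have hcx := convexOn_exp.2 (Set.mem_univ (w1 * x)) (Set.mem_univ (w2 * x)) hp hq hpq
  simp only [smul_eq_mul] at hcx
  rw [harg]
  nlinarith [hcx]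

private lemma ineq_small {w x : ℝ} (hx0 : 0 < x) (hx1 : x ≤ 1) :
    |Real.exp (w * x) - 1 - w * x| ≤ w ^ 2 * (Real.exp |w| + 1 + |w| + 1) * x ^ 2 := by
  have hwx : |w * x| ≤ |w| := by
    rw [abs_mul, abs_of_pos hx0]
    nlinarith [abs_nonneg w]
  rcases le_or_gt |w * x| 1 with h | h
  · have h2 := Real.abs_exp_sub_one_sub_id_le h
    nlinarith [Real.exp_pos |w|, abs_nonneg w, sq_nonneg (w * x),
      mul_nonneg (sq_nonneg w) (sq_nonneg x)]
  · have h2 : Real.exp (w * x) ≤ Real.exp |w| :=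
      Real.exp_le_exp.2 (le_trans (le_abs_self _) hwx)
    have h6 : |Real.exp (w * x) - 1 - w * x| ≤ Real.exp |w| + 1 + |w| := by
      rw [abs_le]
      constructor
      · nlinarith [Real.exp_pos (w * x), neg_abs_le (w * x), le_abs_self (w * x), hwx]
      · nlinarith [neg_abs_le (w * x), le_abs_self (w * x), hwx, h2]
    have h7 : 1 ≤ w ^ 2 * x ^ 2 := by nlinarith [sq_abs (w * x)]
    nlinarith [Real.exp_pos |w|, abs_nonneg w]

private lemma ineq_large {w x : ℝ} (hx : 0 < x) :
    |Real.exp (w * x) - 1 - w * x| ≤ Real.exp (w * x) + 1 + |w| * x := by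
  rw [abs_le]
  constructor
  · nlinarith [Real.exp_pos (w * x), mul_le_mul_of_nonneg_right (neg_abs_le w) hx.le,
      mul_le_mul_of_nonneg_right (le_abs_self w) hx.le]
  · nlinarith [Real.exp_pos (w * x), mul_le_mul_of_nonneg_right (neg_abs_le w) hx.le,
      mul_le_mul_of_nonneg_right (le_abs_self w) hx.le]

private lemma ineq_exp_sub_one {y : ℝ} : Real.exp y - 1 ≤ y * Real.exp y := by
  have hprod : Real.exp (-y) * Real.exp y = 1 := by rw [← Real.exp_add]; simp
  nlinarith [Real.add_one_le_exp (-y), Real.exp_pos y]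

private lemma ineq_xexp_small {w x : ℝ} (hw : 0 < w) (hx0 : 0 < x) (hx1 : x ≤ 1) :
    |x * (Real.exp (w * x) - 1)| ≤ w * Real.exp w * x ^ 2 := by
  have h1 : Real.exp (w * x) - 1 ≤ w * x * Real.exp (w * x) := ineq_exp_sub_one
  have h2 : Real.exp (w * x) ≤ Real.exp w := Real.exp_le_exp.2 (by nlinarith)
  have hwx0 : 0 ≤ w * x := by positivity
  have h3 : (0:ℝ) ≤ x * (Real.exp (w * x) - 1) := by
    nlinarith [Real.add_one_le_exp (w * x)]
  rw [abs_of_nonneg h3]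
  nlinarith [mul_le_mul_of_nonneg_left h1 hx0.le,
    mul_le_mul_of_nonneg_left (mul_le_mul_of_nonneg_left h2 hwx0) hx0.le]

private lemma ineq_xexp_large {w x : ℝ} (hw : 0 < w) (hx : 1 < x) :
    |x * (Real.exp (w * x) - 1)| ≤ x * Real.exp (w * x) := by
  have hx0 : (0:ℝ) < x := by linarith
  have h3 : (0:ℝ) ≤ x * (Real.exp (w * x) - 1) := by
    nlinarith [Real.add_one_le_exp (w * x), mul_pos hw hx0]
  rw [abs_of_nonneg h3]
  nlinarith

private lemma ineq_incr {w' w x : ℝ} (h0 : 0 ≤ w') (h1 : w' ≤ w) (hx : 0 < x) :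
    0 ≤ (Real.exp (w * x) - 1 - w * x) - (Real.exp (w' * x) - 1 - w' * x) := by
  have hprod : Real.exp (w' * x) * Real.exp ((w - w') * x) = Real.exp (w * x) := by
    rw [← Real.exp_add]; ring_nf
  nlinarith [hprod, Real.add_one_le_exp ((w - w') * x),
    Real.one_le_exp (mul_nonneg h0 hx.le), mul_nonneg (sub_nonneg.2 h1) hx.le]

private lemma ineq_diff {w' w x : ℝ} (h1 : w' ≤ w) (hx : 0 < x) :
    (Real.exp (w * x) - 1 - w * x) - (Real.exp (w' * x) - 1 - w' * x) ≤
      (w - w') * (x * (Real.exp (w * x) - 1)) := by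
  have hprod : Real.exp (w * x) * Real.exp ((w' - w) * x) = Real.exp (w' * x) := by
    rw [← Real.exp_add]; ring_nf
  nlinarith [hprod, Real.add_one_le_exp ((w' - w) * x), Real.exp_pos (w * x)]

private lemma ineq_comb {bb s aa cc p w1 w2 P0 P1 P2 : ℝ} (hs : 0 ≤ s) (hp : 0 ≤ p)
    (hp1 : p ≤ 1) (hP : P0 ≤ p * P1 + (1 - p) * P2) :
    -bb * (p * w1 + (1 - p) * w2) + s / 2 * (p * w1 + (1 - p) * w2) ^ 2 + P0 +
        aa * (p * w1 + (1 - p) * w2) + cc ≤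
      p * (-bb * w1 + s / 2 * w1 ^ 2 + P1 + aa * w1 + cc) +
        (1 - p) * (-bb * w2 + s / 2 * w2 ^ 2 + P2 + aa * w2 + cc) := by
  have hkey : 0 ≤ s / 2 * (p * (1 - p) * (w1 - w2) ^ 2) :=
    mul_nonneg (by positivity) (mul_nonneg (mul_nonneg hp (by linarith)) (sq_nonneg _))
  nlinarith [hP, hkey]


private lemma logint {C K d : ℝ} (hK : K ≠ 0) {a b : ℝ} (hab : a ≤ b)
    (hpa : 0 < C + K * (d - a)) (hpb : 0 < C + K * (d - b)) :
    ∫ u in a..b, (C + K * (d - u))⁻¹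
      = (Real.log (C + K * (d - a)) - Real.log (C + K * (d - b))) / K := by
  have hpos : ∀ u ∈ Icc a b, 0 < C + K * (d - u) := by
    intro u hu
    rcases le_total 0 K with h | h
    · nlinarith [hu.1, hu.2]
    · nlinarith [hu.1, hu.2]
  have hderiv : ∀ u ∈ uIcc a b,
      HasDerivAt (fun u => -Real.log (C + K * (d - u)) / K) (C + K * (d - u))⁻¹ u := by
    intro u hu
    rw [uIcc_of_le hab] at hu
    have h0 : HasDerivAt (fun u : ℝ => C + K * (d - u)) (-K) u := by
      simpa using (((hasDerivAt_id u).const_sub d).const_mul K).const_add C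
    have h1 := (Real.hasDerivAt_log (hpos u hu).ne').comp u h0
    have h2 := h1.neg.div_const K
    have h3 : -((C + K * (d - u))⁻¹ * -K) / K = (C + K * (d - u))⁻¹ := by
      field_simp
    rw [← h3]; exact h2
  have hcont : ContinuousOn (fun u => (C + K * (d - u))⁻¹) (uIcc a b) := by
    apply ContinuousOn.inv₀
    · exact (continuous_const.add (continuous_const.mul (continuous_const.sub continuous_id))).continuousOn
    · intro u hu; rw [uIcc_of_le hab] at hu; exact (hpos u hu).ne'
  rw [intervalIntegral.integral_eq_sub_of_hasDerivAt hderiv hcont.intervalIntegrable]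
  ring

private lemma div_aux (g : ℝ → ℝ) {u₁ z K : ℝ} (huz : u₁ < z) (hK : 0 < K)
    (hgc : ContinuousOn g (Ico u₁ z)) (hgpos : ∀ u ∈ Ico u₁ z, 0 < g u)
    (hbound : ∀ u ∈ Ico u₁ z, g u ≤ K * (z - u)) (T : ℝ) :
    ∃ y, u₁ ≤ y ∧ y < z ∧ T ≤ ∫ u in u₁..y, (g u)⁻¹ := by
  set T' := max T 0 with hT'
  set y := z - (z - u₁) * Real.exp (-(K * T')) with hy
  have hT'0 : 0 ≤ T' := le_max_right T 0
  have hexple : Real.exp (-(K * T')) ≤ 1 := Real.exp_le_one_iff.2 (by nlinarith)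
  have hexppos := Real.exp_pos (-(K * T'))
  have hy1 : u₁ ≤ y := by nlinarith
  have hy2 : y < z := by nlinarith
  refine ⟨y, hy1, hy2, ?_⟩
  have hsub : Icc u₁ y ⊆ Ico u₁ z := fun u hu => ⟨hu.1, lt_of_le_of_lt hu.2 hy2⟩
  have hzu : ∀ u ∈ Icc u₁ y, 0 < z - u := fun u hu => by
    have := (hsub hu).2; linarith
  have hcomp : ∀ u ∈ Icc u₁ y, (0 + K * (z - u))⁻¹ ≤ (g u)⁻¹ := by
    intro u hu
    have h1 := hgpos u (hsub hu)
    have h2 := hbound u (hsub hu)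
    rw [zero_add]
    exact inv_anti₀ h1 h2
  have hint1 : IntervalIntegrable (fun u => ((0:ℝ) + K * (z - u))⁻¹) volume u₁ y := by
    apply ContinuousOn.intervalIntegrable
    apply ContinuousOn.inv₀
    · exact (continuous_const.add (continuous_const.mul (continuous_const.sub continuous_id))).continuousOn
    · intro u hu; rw [uIcc_of_le hy1] at hu
      have := hzu u hu
      exact (by nlinarith : (0:ℝ) < 0 + K * (z - u)).ne'
  have hint2 : IntervalIntegrable (fun u => (g u)⁻¹) volume u₁ y := by
    apply ContinuousOn.intervalIntegrable
    apply ContinuousOn.inv₀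
    · refine hgc.mono ?_
      rw [uIcc_of_le hy1]; exact hsub
    · intro u hu; rw [uIcc_of_le hy1] at hu
      exact (hgpos u (hsub hu)).ne'
  have hmono := intervalIntegral.integral_mono_on hy1 hint1 hint2 hcomp
  have hpa : (0:ℝ) < 0 + K * (z - u₁) := by nlinarith
  have hpb : (0:ℝ) < 0 + K * (z - y) := by nlinarith
  rw [logint (ne_of_gt hK) hy1 hpa hpb] at hmono
  have hzy : z - y = (z - u₁) * Real.exp (-(K * T')) := by rw [hy]; ring
  have hlog : Real.log (0 + K * (z - y)) = Real.log (0 + K * (z - u₁)) + -(K * T') := by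
    rw [zero_add, zero_add, hzy,
      show K * ((z - u₁) * Real.exp (-(K * T'))) = K * (z - u₁) * Real.exp (-(K * T')) by ring,
      Real.log_mul (by nlinarith : (0:ℝ) < K * (z - u₁)).ne' (Real.exp_ne_zero _), Real.log_exp]
  have hval : (Real.log (0 + K * (z - u₁)) - Real.log (0 + K * (z - y))) / K = T' := by
    rw [hlog]; field_simp; ring
  rw [hval] at hmono
  exact le_trans (le_max_left T 0) hmono

private lemma div_aux2 (g : ℝ → ℝ) {u₁ C K : ℝ} (hC : 0 < C) (hK : 0 < K)
    (hgc : ContinuousOn g (Ici u₁)) (hgpos : ∀ u, u₁ ≤ u → 0 < g u)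
    (hbound : ∀ u, u₁ ≤ u → g u ≤ C + K * (u - u₁)) (T : ℝ) :
    ∃ y, u₁ ≤ y ∧ T ≤ ∫ u in u₁..y, (g u)⁻¹ := by
  set T' := max T 0 with hT'
  have hT'0 : 0 ≤ T' := le_max_right T 0
  set y := u₁ + (C / K) * (Real.exp (K * T') - 1) with hy
  have h1 : (1:ℝ) ≤ Real.exp (K * T') := Real.one_le_exp (by positivity)
  have hCK : 0 < C / K := div_pos hC hK
  have hy1 : u₁ ≤ y := by
    rw [hy]
    have := mul_nonneg hCK.le (sub_nonneg.2 h1)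
    linarith
  refine ⟨y, hy1, ?_⟩
  have hposline : ∀ u ∈ Icc u₁ y, 0 < C + -K * (u₁ - u) := by
    intro u hu; have := hu.1; nlinarith
  have hcomp : ∀ u ∈ Icc u₁ y, (C + -K * (u₁ - u))⁻¹ ≤ (g u)⁻¹ := by
    intro u hu
    have h2 := hgpos u hu.1
    have h3 := hbound u hu.1
    have : g u ≤ C + -K * (u₁ - u) := by nlinarith
    exact inv_anti₀ h2 this
  have hint1 : IntervalIntegrable (fun u => (C + -K * (u₁ - u))⁻¹) volume u₁ y := by
    apply ContinuousOn.intervalIntegrable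
    apply ContinuousOn.inv₀
    · exact (continuous_const.add (continuous_const.mul (continuous_const.sub continuous_id))).continuousOn
    · intro u hu; rw [uIcc_of_le hy1] at hu; exact (hposline u hu).ne'
  have hint2 : IntervalIntegrable (fun u => (g u)⁻¹) volume u₁ y := by
    apply ContinuousOn.intervalIntegrable
    apply ContinuousOn.inv₀
    · refine hgc.mono ?_
      rw [uIcc_of_le hy1]; exact fun u hu => hu.1
    · intro u hu; rw [uIcc_of_le hy1] at hu
      exact (hgpos u hu.1).ne'
  have hmono := intervalIntegral.integral_mono_on hy1 hint1 hint2 hcomp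
  have hyy : C + -K * (u₁ - y) = C * Real.exp (K * T') := by
    rw [hy]; field_simp; ring
  have hpa : (0:ℝ) < C + -K * (u₁ - u₁) := by simpa using hC
  have hpb : (0:ℝ) < C + -K * (u₁ - y) := by rw [hyy]; positivity
  rw [logint (by linarith : -K ≠ 0) hy1 hpa hpb] at hmono
  have hlog : Real.log (C + -K * (u₁ - y)) = Real.log C + K * T' := by
    rw [hyy, Real.log_mul hC.ne' (Real.exp_ne_zero _), Real.log_exp]
  have hval : (Real.log (C + -K * (u₁ - u₁)) - Real.log (C + -K * (u₁ - y))) / -K = T' := by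
    rw [hlog, show C + -K * (u₁ - u₁) = C by ring]
    field_simp
    ring
  rw [hval] at hmono
  exact le_trans (le_max_left T 0) hmono


private lemma core_ode (g : ℝ → ℝ) (u₁ : ℝ) (s : Set ℝ)
    (hs : IsOpen s) (hcv : Convex ℝ s) (hu : u₁ ∈ s) (hu1' : u₁ - 1 ∈ s)
    (hgc : ContinuousOn g (s ∩ Ici u₁))
    (hgpos : ∀ w ∈ s ∩ Ici u₁, 0 < g w)
    (hdiv : ∀ T : ℝ, ∃ y ∈ s, u₁ ≤ y ∧ T ≤ ∫ u in u₁..y, (g u)⁻¹) :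
    ∃ v : ℝ → ℝ, v 0 = u₁ ∧ (∀ t, 0 ≤ t → HasDerivAt v (g (v t)) t) ∧
      ∀ t, 0 ≤ t → v t ∈ s ∧ u₁ ≤ v t := by
  classical
  set g' : ℝ → ℝ := fun w => g (max w u₁) with hg'def
  have hmem : ∀ w ∈ s, max w u₁ ∈ s ∩ Ici u₁ := by
    intro w hw
    refine ⟨?_, mem_Ici.2 (le_max_right _ _)⟩
    rcases le_total w u₁ with h | h
    · rwa [max_eq_right h]
    · rwa [max_eq_left h]
  have hg'c : ContinuousOn g' s := by
    intro w hw
    have hmax : ContinuousWithinAt (fun y : ℝ => max y u₁) s w :=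
      (continuous_id.max continuous_const).continuousWithinAt
    have := ContinuousWithinAt.comp (f := fun y : ℝ => max y u₁) (g := g)
      (hgc _ (hmem w hw)) hmax (fun y hy => hmem y hy)
    exact this
  have hg'pos : ∀ w ∈ s, 0 < g' w := fun w hw => hgpos _ (hmem w hw)
  have hinvc : ContinuousOn (fun u => (g' u)⁻¹) s := hg'c.inv₀ fun w hw => (hg'pos w hw).ne'
  set F : ℝ → ℝ := fun y => ∫ u in u₁..y, (g' u)⁻¹ with hFdef
  have hIcc : ∀ y ∈ s, uIcc u₁ y ⊆ s := fun y hy => hcv.ordConnected.uIcc_subset hu hy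
  have hF' : ∀ y ∈ s, HasDerivAt F (g' y)⁻¹ y := by
    intro y hy
    exact intervalIntegral.integral_hasDerivAt_right
      ((hinvc.mono (hIcc y hy)).intervalIntegrable)
      (ContinuousOn.stronglyMeasurableAtFilter hs hinvc y hy)
      (hinvc.continuousAt (hs.mem_nhds hy))
  have hFcont : ContinuousOn F s := fun y hy => (hF' y hy).continuousAt.continuousWithinAt
  have hFmono : StrictMonoOn F s := by
    apply strictMonoOn_of_deriv_pos hcv hFcont
    intro x hx
    rw [hs.interior_eq] at hx
    rw [(hF' x hx).deriv]
    exact inv_pos.2 (hg'pos x hx)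
  have hFu : F u₁ = 0 := intervalIntegral.integral_same
  set ε := F (u₁ - 1) with hεdef
  have hε : ε < 0 := by
    have := hFmono hu1' hu (by linarith)
    rw [hFu] at this; linarith
  have hex : ∀ t : ℝ, ε ≤ t → ∃ y, y ∈ s ∧ F y = t := by
    intro t ht
    obtain ⟨y₀, hy₀s, hy₀ge, hy₀⟩ := hdiv (max t 0)
    have hFy₀ : max t 0 ≤ F y₀ := by
      have hcong : ∀ x ∈ uIcc u₁ y₀, (g x)⁻¹ = (g' x)⁻¹ := by
        intro x hx
        rw [uIcc_of_le hy₀ge] at hx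
        have : max x u₁ = x := max_eq_left hx.1
        rw [hg'def]
        simp only [this]
      calc max t 0 ≤ ∫ u in u₁..y₀, (g u)⁻¹ := hy₀
        _ = F y₀ := intervalIntegral.integral_congr hcong
    have hsub : Icc (u₁ - 1) y₀ ⊆ s := hcv.ordConnected.out hu1' hy₀s
    have hmean := intermediate_value_Icc (by linarith : u₁ - 1 ≤ y₀) (hFcont.mono hsub)
    have htmem : t ∈ Icc (F (u₁ - 1)) (F y₀) := ⟨ht, le_trans (le_max_left _ _) hFy₀⟩
    obtain ⟨y, hy, hFy⟩ := hmean htmem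
    exact ⟨y, hsub hy, hFy⟩
  set v : ℝ → ℝ := fun t => if h : ε ≤ t then (hex t h).choose else u₁ with hvdef
  have hv : ∀ t, ∀ h : ε ≤ t, v t ∈ s ∧ F (v t) = t := by
    intro t h
    have : v t = (hex t h).choose := by rw [hvdef]; simp only [dif_pos h]
    rw [this]
    exact (hex t h).choose_spec
  have hvu : ∀ t, ε ≤ t → 0 ≤ t → u₁ ≤ v t := by
    intro t h ht0
    by_contra hlt
    push_neg at hlt
    have := hFmono (hv t h).1 hu hlt
    rw [hFu, (hv t h).2] at this
    linarith
  have hv0 : v 0 = u₁ := by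
    have h0 : ε ≤ 0 := hε.le
    refine hFmono.injOn (hv 0 h0).1 hu ?_
    rw [(hv 0 h0).2, hFu]
  have hvcont : ∀ t, ε < t → ContinuousAt v t := by
    intro t ht
    have hts : v t ∈ s := (hv t ht.le).1
    have hFt : F (v t) = t := (hv t ht.le).2
    rw [Metric.continuousAt_iff]
    intro δ hδ
    obtain ⟨r, hr, hball⟩ := Metric.isOpen_iff.1 hs (v t) hts
    set r' := min (r / 2) (δ / 2) with hr'def
    have hr'pos : 0 < r' := lt_min (by linarith) (by linarith)
    have hr'r : r' < r := lt_of_le_of_lt (min_le_left _ _) (by linarith)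
    have hr'δ : r' < δ := lt_of_le_of_lt (min_le_right _ _) (by linarith)
    have hmem1 : v t - r' ∈ s := by
      apply hball
      rw [Metric.mem_ball, Real.dist_eq, show v t - r' - v t = -r' by ring, abs_neg,
        abs_of_pos hr'pos]
      exact hr'r
    have hmem2 : v t + r' ∈ s := by
      apply hball
      rw [Metric.mem_ball, Real.dist_eq, show v t + r' - v t = r' by ring, abs_of_pos hr'pos]
      exact hr'r
    have ha : F (v t - r') < t := by
      have := hFmono hmem1 hts (by linarith)
      rwa [hFt] at this
    have hb : t < F (v t + r') := by
      have := hFmono hts hmem2 (by linarith)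
      rwa [hFt] at this
    refine ⟨min (min (t - F (v t - r')) (F (v t + r') - t)) (t - ε),
      lt_min (lt_min (by linarith) (by linarith)) (by linarith), ?_⟩
    intro x hx
    rw [Real.dist_eq] at hx
    have hx1 : |x - t| < t - ε := lt_of_lt_of_le hx (min_le_right _ _)
    have hx2 : |x - t| < t - F (v t - r') :=
      lt_of_lt_of_le hx (le_trans (min_le_left _ _) (min_le_left _ _))
    have hx3 : |x - t| < F (v t + r') - t :=
      lt_of_lt_of_le hx (le_trans (min_le_left _ _) (min_le_right _ _))
    rw [abs_lt] at hx1 hx2 hx3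
    have hxε : ε < x := by linarith [hx1.1]
    have hxs := hv x hxε.le
    have hxa : F (v t - r') < x := by linarith [hx2.1]
    have hxb : x < F (v t + r') := by linarith [hx3.2]
    have h1 : v t - r' < v x := by
      by_contra h
      push_neg at h
      have hle : F (v x) ≤ F (v t - r') := by
        rcases lt_or_eq_of_le h with h' | h'
        · exact (hFmono hxs.1 hmem1 h').le
        · rw [h']
      rw [hxs.2] at hle
      linarith
    have h2 : v x < v t + r' := by
      by_contra h
      push_neg at h
      have hle : F (v t + r') ≤ F (v x) := by
        rcases lt_or_eq_of_le h with h' | h'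
        · exact (hFmono hmem2 hxs.1 h').le
        · rw [h']
      rw [hxs.2] at hle
      linarith
    rw [Real.dist_eq, abs_lt]
    constructor <;> nlinarith
  have hderiv : ∀ t, 0 ≤ t → HasDerivAt v (g (v t)) t := by
    intro t ht0
    have htε : ε < t := lt_of_lt_of_le hε ht0
    have hts := (hv t htε.le).1
    have hvget := hvu t htε.le ht0
    have h1 : HasDerivAt F (g' (v t))⁻¹ (v t) := hF' _ hts
    have hne : (g' (v t))⁻¹ ≠ 0 := inv_ne_zero (hg'pos _ hts).ne'
    have hfg : ∀ᶠ y in 𝓝 t, F (v y) = y := by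
      have hnb : Ioi ε ∈ 𝓝 t := isOpen_Ioi.mem_nhds htε
      filter_upwards [hnb] with y hy
      exact (hv y (le_of_lt hy)).2
    have h2 := HasDerivAt.of_local_left_inverse (hvcont t htε) h1 hne hfg
    rw [inv_inv] at h2
    have hgg : g' (v t) = g (v t) := by
      rw [hg'def]
      simp only [max_eq_left hvget]
    rwa [hgg] at h2
  exact ⟨v, hv0, hderiv, fun t ht =>
    ⟨(hv t (le_trans hε.le ht)).1, hvu t (le_trans hε.le ht) ht⟩⟩
set_option maxHeartbeats 1000000 in
/-- Theorem 3.4(i), global existence: if `u₁ ≤ L` and there exists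
`x*` with `u₁ ≤ x* ≤ L` and `G(x*) ≤ 0`, then the Riccati equation `v' = G(v)`, `v(0) = u₁`
has a global solution on `[0, ∞)` staying below `max(u₁, x*) ≤ L`. -/
theorem statement3 (μ : Measure ℝ) (b σ a c : ℝ) (hσ : 0 ≤ σ)
    (hμ0 : μ (Set.Iic 0) = 0)
    (hμint : Integrable (fun x => min (x ^ 2) x) μ)
    (L : EReal) (hL : 0 < L)
    (hexp : ∀ u : ℝ, (u : EReal) ≤ L →
      IntegrableOn (fun x => Real.exp (u * x)) (Set.Ici 1) μ)
    (hass : ∀ l : ℝ, L = (l : EReal) →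
      IntegrableOn (fun x => x * Real.exp (l * x)) (Set.Ici 1) μ)
    (G : ℝ → ℝ)
    (hG : G = fun w => -b * w + σ ^ 2 / 2 * w ^ 2 +
      (∫ x in Set.Ioi (0 : ℝ), (Real.exp (w * x) - 1 - w * x) ∂μ) + a * w + c)
    (u₁ xstar : ℝ) (hu₁ : (u₁ : EReal) ≤ L)
    (hx1 : u₁ ≤ xstar) (hx2 : (xstar : EReal) ≤ L) (hx3 : G xstar ≤ 0) :
    ∃ v : ℝ → ℝ, v 0 = u₁ ∧
      (∀ t ∈ Set.Ici (0 : ℝ), HasDerivWithinAt v (G (v t)) (Set.Ici 0) t) ∧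
      (∀ t ∈ Set.Ici (0 : ℝ), v t ≤ max u₁ xstar) ∧
      ((max u₁ xstar : ℝ) : EReal) ≤ L := by
  have hmax : max u₁ xstar = xstar := max_eq_right hx1
  -- ## basic integrability facts
  have hxin : IntegrableOn (fun x : ℝ => x) (Ici 1) μ := by
    refine (hμint.integrableOn (s := Ici 1)).congr ?_
    filter_upwards [ae_restrict_mem measurableSet_Ici] with x hx
    have : (1:ℝ) ≤ x := hx
    exact min_eq_right (by nlinarith)
  have hsqin : IntegrableOn (fun x : ℝ => x ^ 2) (Ioc 0 1) μ := by
    refine (hμint.integrableOn (s := Ioc 0 1)).congr ?_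
    filter_upwards [ae_restrict_mem measurableSet_Ioc] with x hx
    exact min_eq_left (by nlinarith [hx.1, hx.2])
  have h1in : IntegrableOn (fun _ : ℝ => (1:ℝ)) (Ici 1) μ := by
    refine hxin.mono' aestronglyMeasurable_const ?_
    filter_upwards [ae_restrict_mem measurableSet_Ici] with x hx
    have : (1:ℝ) ≤ x := hx
    rw [norm_one]; exact this
  have hIoi : Ioc (0:ℝ) 1 ∪ Ioi 1 = Ioi 0 := Ioc_union_Ioi_eq_Ioi zero_le_one
  have hint : ∀ w : ℝ, (w : EReal) ≤ L →
      IntegrableOn (fun x => Real.exp (w * x) - 1 - w * x) (Ioi 0) μ := by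
    intro w hw
    rw [← hIoi]
    refine IntegrableOn.union ?_ ?_
    · refine Integrable.mono' (hsqin.const_mul (w ^ 2 * (Real.exp |w| + 1 + |w| + 1)))
        ((by fun_prop : Continuous fun x : ℝ => Real.exp (w * x) - 1 - w * x).aestronglyMeasurable) ?_
      filter_upwards [ae_restrict_mem measurableSet_Ioc] with x hx
      rw [Real.norm_eq_abs]
      exact ineq_small hx.1 hx.2
    · have he := (hexp w hw).mono_set Ioi_subset_Ici_self
      have h1' := h1in.mono_set Ioi_subset_Ici_self
      have hx0' : IntegrableOn (fun x : ℝ => |w| * x) (Ici 1) μ := hxin.const_mul |w|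
      have hx' := hx0'.mono_set Ioi_subset_Ici_self
      refine Integrable.mono' ((he.add h1').add hx')
        ((by fun_prop : Continuous fun x : ℝ => Real.exp (w * x) - 1 - w * x).aestronglyMeasurable) ?_
      filter_upwards [ae_restrict_mem measurableSet_Ioi] with x hx
      have hx1' : (1:ℝ) < x := hx
      rw [Real.norm_eq_abs]
      exact ineq_large (by linarith)
  -- ## Ψ notation
  obtain ⟨Ψ, hΨ⟩ : ∃ Ψ : ℝ → ℝ, ∀ ww : ℝ,
      Ψ ww = ∫ x in Ioi (0:ℝ), (Real.exp (ww * x) - 1 - ww * x) ∂μ :=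
    ⟨fun ww => ∫ x in Ioi (0:ℝ), (Real.exp (ww * x) - 1 - ww * x) ∂μ, fun _ => rfl⟩
  have hGeq : ∀ ww : ℝ, G ww = -b * ww + σ ^ 2 / 2 * ww ^ 2 + Ψ ww + a * ww + c := by
    intro ww; rw [hG, hΨ]
  -- ## convexity
  have hGconv : ∀ x' : ℝ, (x' : EReal) ≤ L → ConvexOn ℝ (Iic x') G := by
    intro x' hx'
    refine ⟨convex_Iic x', ?_⟩
    intro w1 h1 w2 h2 p q hp hq hpq
    simp only [smul_eq_mul]
    rw [mem_Iic] at h1 h2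
    have hw1L : (w1 : EReal) ≤ L := le_trans (EReal.coe_le_coe_iff.2 h1) hx'
    have hw2L : (w2 : EReal) ≤ L := le_trans (EReal.coe_le_coe_iff.2 h2) hx'
    have hcomb : p * w1 + q * w2 ≤ x' := by
      have hxx : p * x' + q * x' = x' := by linear_combination x' * hpq
      have hm1 := mul_le_mul_of_nonneg_left h1 hp
      have hm2 := mul_le_mul_of_nonneg_left h2 hq
      linarith
    have hcombL : ((p * w1 + q * w2 : ℝ) : EReal) ≤ L :=
      le_trans (EReal.coe_le_coe_iff.2 hcomb) hx'
    have hi0 := hint _ hcombL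
    have hi1 := hint w1 hw1L
    have hi2 := hint w2 hw2L
    have hΨle : Ψ (p * w1 + q * w2) ≤ p * Ψ w1 + q * Ψ w2 := by
      simp only [hΨ]
      rw [← integral_const_mul, ← integral_const_mul,
        ← integral_add (hi1.const_mul p) (hi2.const_mul q)]
      refine integral_mono hi0 ((hi1.const_mul p).add (hi2.const_mul q)) ?_
      intro x
      exact ineq_conv hp hq hpq
    have hq' : q = 1 - p := by linarith
    rw [hGeq, hGeq, hGeq, hq']
    rw [hq'] at hΨle
    exact ineq_comb (sq_nonneg σ) hp (by linarith) hΨle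
  -- ## continuity at interior points
  have hcontAt : ∀ w : ℝ, (w : EReal) < L → ContinuousAt G w := by
    intro w hw
    obtain ⟨x', hwx', hx'L⟩ : ∃ x' : ℝ, w < x' ∧ (x' : EReal) ≤ L := by
      rcases EReal.lt_iff_exists_real_btwn.1 hw with ⟨x', h1, h2⟩
      exact ⟨x', EReal.coe_lt_coe_iff.1 h1, h2.le⟩
    have hco := (hGconv x' hx'L).continuousOn_interior
    rw [interior_Iic] at hco
    exact hco.continuousAt (isOpen_Iio.mem_nhds hwx')
  -- ## continuity from the left at the boundary
  have hcontW : ∀ w : ℝ, (w : EReal) ≤ L → ContinuousWithinAt G (Iic w) w := by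
    intro w hw
    rcases lt_or_eq_of_le hw with hlt | heq
    · exact (hcontAt w hlt).continuousWithinAt
    · have hl0 : (0:ℝ) < w := by exact_mod_cast heq ▸ hL
      have hup : IntegrableOn (fun x => x * (Real.exp (w * x) - 1)) (Ioi 0) μ := by
        rw [← hIoi]
        refine IntegrableOn.union ?_ ?_
        · refine Integrable.mono' (hsqin.const_mul (w * Real.exp w))
            ((by fun_prop : Continuous fun x : ℝ => x * (Real.exp (w * x) - 1)).aestronglyMeasurable) ?_
          filter_upwards [ae_restrict_mem measurableSet_Ioc] with x hx
          rw [Real.norm_eq_abs]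
          exact ineq_xexp_small hl0 hx.1 hx.2
        · refine Integrable.mono' ((hass w heq.symm).mono_set Ioi_subset_Ici_self)
            ((by fun_prop : Continuous fun x : ℝ => x * (Real.exp (w * x) - 1)).aestronglyMeasurable) ?_
          filter_upwards [ae_restrict_mem measurableSet_Ioi] with x hx
          rw [Real.norm_eq_abs]
          exact ineq_xexp_large hl0 hx
      set D := ∫ x in Ioi (0:ℝ), x * (Real.exp (w * x) - 1) ∂μ with hDdef
      have hΨest : ∀ w', 0 ≤ w' → w' ≤ w → |Ψ w' - Ψ w| ≤ (w - w') * D := by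
        intro w' h0 h1
        have hw'L : (w' : EReal) ≤ L := le_trans (EReal.coe_le_coe_iff.2 h1) hw
        have hi1 := hint w' hw'L
        have hi2 := hint w hw
        have hsub : Ψ w - Ψ w' = ∫ x in Ioi (0:ℝ),
            ((Real.exp (w * x) - 1 - w * x) - (Real.exp (w' * x) - 1 - w' * x)) ∂μ := by
          rw [hΨ w, hΨ w']
          exact (integral_sub hi2 hi1).symm
        have hb1 : 0 ≤ Ψ w - Ψ w' := by
          rw [hsub]
          refine integral_nonneg_of_ae ?_
          filter_upwards [ae_restrict_mem measurableSet_Ioi] with x hx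
          exact ineq_incr h0 h1 hx
        have hb2 : Ψ w - Ψ w' ≤ (w - w') * D := by
          rw [hsub, hDdef, ← integral_const_mul]
          refine integral_mono_ae (hi2.sub hi1) (hup.const_mul _) ?_
          filter_upwards [ae_restrict_mem measurableSet_Ioi] with x hx
          exact ineq_diff h1 hx
        rw [abs_sub_comm, abs_of_nonneg hb1]
        exact hb2
      have hΨcw : ContinuousWithinAt Ψ (Iic w) w := by
        have ht : Tendsto (fun w' => Ψ w' - Ψ w) (𝓝[Iic w] w) (𝓝 0) := by
          apply squeeze_zero_norm' (a := fun w' => (w - w') * D)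
          · have hev1 : ∀ᶠ w' in 𝓝[Iic w] w, 0 < w' :=
              eventually_nhdsWithin_of_eventually_nhds (eventually_gt_nhds hl0)
            have hev2 : ∀ᶠ w' in 𝓝[Iic w] w, w' ≤ w :=
              eventually_mem_nhdsWithin.mono fun x hx => hx
            filter_upwards [hev1, hev2] with w' h1' h2'
            rw [Real.norm_eq_abs]
            exact hΨest w' h1'.le h2'
          · have hcont2 : Tendsto (fun w' : ℝ => (w - w') * D) (𝓝 w) (𝓝 ((w - w) * D)) :=
              Continuous.tendsto (by fun_prop) w
            have hzero : (w - w) * D = 0 := by ring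
            rw [hzero] at hcont2
            exact hcont2.mono_left nhdsWithin_le_nhds
        exact tendsto_sub_nhds_zero_iff.1 ht
      have hG1 : ContinuousWithinAt (fun ww : ℝ => -b * ww + σ ^ 2 / 2 * ww ^ 2) (Iic w) w :=
        (by fun_prop : Continuous fun ww : ℝ => -b * ww + σ ^ 2 / 2 * ww ^ 2).continuousWithinAt
      have hG2 := (hG1.add hΨcw).add
        ((by fun_prop : Continuous fun ww : ℝ => a * ww).continuousWithinAt)
      have hG3 := hG2.add (continuousWithinAt_const : ContinuousWithinAt (fun _ : ℝ => c) (Iic w) w)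
      refine hG3.congr (fun y _ => ?_) ?_ <;> rw [hGeq] <;> rfl
  -- ## chord inequality
  have hchord : ∀ {p1 p2 u : ℝ}, p1 ≤ xstar → p2 ≤ xstar → p1 < p2 → u ∈ Icc p1 p2 →
      G u ≤ (p2 - u) / (p2 - p1) * G p1 + (u - p1) / (p2 - p1) * G p2 := by
    intro p1 p2 u hp1 hp2 h12 hu
    have hcv := hGconv xstar hx2
    have hne : p2 - p1 ≠ 0 := sub_ne_zero.2 h12.ne'
    have hp : 0 ≤ (p2 - u) / (p2 - p1) := div_nonneg (by linarith [hu.2]) (by linarith)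
    have hq : 0 ≤ (u - p1) / (p2 - p1) := div_nonneg (by linarith [hu.1]) (by linarith)
    have hpq : (p2 - u) / (p2 - p1) + (u - p1) / (p2 - p1) = 1 := by
      field_simp
      ring
    have h := hcv.2 (mem_Iic.2 hp1) (mem_Iic.2 hp2) hp hq hpq
    simp only [smul_eq_mul] at h
    have harg : (p2 - u) / (p2 - p1) * p1 + (u - p1) / (p2 - p1) * p2 = u := by
      field_simp; ring
    rwa [harg] at h
  -- ## main case split
  rcases lt_trichotomy (G u₁) 0 with hneg | hzero | hpos
  · -- decreasing case : G u₁ < 0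
    have hGIic : ContinuousOn G (Iic u₁) := by
      intro ww hww
      rcases lt_or_eq_of_le (mem_Iic.1 hww) with h | h
      · exact (hcontAt ww (lt_of_lt_of_le (EReal.coe_lt_coe_iff.2 h) hu₁)).continuousWithinAt
      · subst h; exact hcontW ww hu₁
    set g : ℝ → ℝ := fun u => -G (-u) with hgdef
    have hgt : ContinuousOn g (Ici (-u₁)) := by
      intro u hu
      have hmap : MapsTo (fun y : ℝ => -y) (Ici (-u₁)) (Iic u₁) := by
        intro y hy
        have : -u₁ ≤ y := hy
        simp only [mem_Iic]; linarith
      have hnegc : ContinuousWithinAt (fun y : ℝ => -y) (Ici (-u₁)) u :=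
        continuous_neg.continuousWithinAt
      have hcw : ContinuousWithinAt G (Iic u₁) (-u) := hGIic (-u) (hmap hu)
      exact (ContinuousWithinAt.comp (f := fun y : ℝ => -y) (g := G) hcw hnegc hmap).neg
    by_cases hS' : ∃ ww, ww ≤ u₁ ∧ 0 ≤ G ww
    · -- the set {G ≥ 0} below u₁ is nonempty; let α be its sup, a zero of G
      obtain ⟨w₀, hw₀1, hw₀2⟩ := hS'
      have hS'ne : {ww | ww ≤ u₁ ∧ 0 ≤ G ww}.Nonempty := ⟨w₀, hw₀1, hw₀2⟩
      have hS'bd : BddAbove {ww | ww ≤ u₁ ∧ 0 ≤ G ww} := ⟨u₁, fun ww hww => hww.1⟩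
      set α := sSup {ww | ww ≤ u₁ ∧ 0 ≤ G ww} with hα
      have hα1 : α ≤ u₁ := csSup_le hS'ne fun ww hww => hww.1
      have hα2 : α < u₁ := by
        rcases lt_or_eq_of_le hα1 with h | h
        · exact h
        · exfalso
          have hGneg0 : (0:ℝ) < -G u₁ := by linarith
          set B := max (G (u₁ - 1) - G u₁) 0 with hB
          have hBnn : (0:ℝ) ≤ B := le_max_right _ _
          have hBle : G (u₁ - 1) - G u₁ ≤ B := le_max_left _ _
          have hB1 : (0:ℝ) < B + 1 := by linarith
          set δ := min 1 (-G u₁ / (2 * (B + 1))) with hδdef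
          have hδpos : 0 < δ := lt_min one_pos (div_pos hGneg0 (by linarith))
          have hδ1 : δ ≤ 1 := min_le_left _ _
          have hδ2 : δ ≤ -G u₁ / (2 * (B + 1)) := min_le_right _ _
          have hδB : δ * (B + 1) ≤ -G u₁ / 2 := by
            have h3 := mul_le_mul_of_nonneg_right hδ2 hB1.le
            have heq2 : -G u₁ / (2 * (B + 1)) * (B + 1) = -G u₁ / 2 := by
              field_simp [hB1.ne']
            rw [heq2] at h3
            exact h3
          obtain ⟨ww, hwwS, hwwgt⟩ := exists_lt_of_lt_csSup hS'ne
            (show u₁ - δ < sSup {ww | ww ≤ u₁ ∧ 0 ≤ G ww} by rw [← hα, h]; linarith)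
          have hwwle : ww ≤ u₁ := hwwS.1
          have hwwlt : ww < u₁ := by
            rcases lt_or_eq_of_le hwwle with h' | h'
            · exact h'
            · exfalso; rw [h'] at hwwS; have := hwwS.2; linarith
          have hch := hchord (by linarith : u₁ - 1 ≤ xstar) hx1
            (by linarith : u₁ - 1 < u₁) ⟨by linarith, hwwle⟩
          have hden : u₁ - (u₁ - 1) = 1 := by ring
          rw [hden, div_one, div_one] at hch
          have hch2 : G ww ≤ G u₁ + (u₁ - ww) * (G (u₁ - 1) - G u₁) := by
            nlinarith [hch]
          have h5' : 0 < u₁ - ww := by linarith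
          have h4' : u₁ - ww ≤ δ := by linarith
          have h6 : (u₁ - ww) * (G (u₁ - 1) - G u₁) ≤ δ * B :=
            le_trans (mul_le_mul_of_nonneg_left hBle h5'.le)
              (mul_le_mul_of_nonneg_right h4' hBnn)
          have h7 : (0:ℝ) ≤ G ww := hwwS.2
          nlinarith [hδpos]
      have hαL : (α : EReal) < L :=
        lt_of_lt_of_le (EReal.coe_lt_coe_iff.2 (lt_of_lt_of_le hα2 hx1)) hx2
      have hcα : ContinuousAt G α := hcontAt α hαL
      have hGneg' : ∀ ww, α < ww → ww ≤ u₁ → G ww < 0 := by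
        intro ww h1 h2
        by_contra hcon
        push_neg at hcon
        have : ww ≤ α := le_csSup hS'bd ⟨h2, hcon⟩
        linarith
      have hGα : G α = 0 := by
        have hle : G α ≤ 0 := by
          by_contra hcon
          push_neg at hcon
          have hev := hcα.eventually_mem (isOpen_Ioi.mem_nhds (mem_Ioi.2 hcon))
          obtain ⟨δ, hδ, hball⟩ := Metric.eventually_nhds_iff.1 hev
          set s₀ := min (δ / 2) ((u₁ - α) / 2) with hs₀
          have hs₀pos : 0 < s₀ := lt_min (by linarith) (by linarith)
          have hs₀le1 : s₀ ≤ δ / 2 := min_le_left _ _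
          have hs₀le2 : s₀ ≤ (u₁ - α) / 2 := min_le_right _ _
          have h1 : α < α + s₀ := by linarith
          have h2 : α + s₀ ≤ u₁ := by linarith
          have h3 : G (α + s₀) < 0 := hGneg' (α + s₀) h1 h2
          have h4 : dist (α + s₀) α < δ := by
            rw [Real.dist_eq, abs_of_pos (by linarith : 0 < α + s₀ - α)]
            linarith
          have := mem_Ioi.1 (hball h4)
          linarith
        have hge : 0 ≤ G α := by
          by_contra hcon
          push_neg at hcon
          have hev := hcα.eventually_mem (isOpen_Iio.mem_nhds (mem_Iio.2 hcon))
          obtain ⟨δ, hδ, hball⟩ := Metric.eventually_nhds_iff.1 hev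
          obtain ⟨ww, hwwS, hwwgt⟩ := exists_lt_of_lt_csSup hS'ne
            (show α - δ / 2 < sSup {ww | ww ≤ u₁ ∧ 0 ≤ G ww} by rw [← hα]; linarith)
          have h2 : ww ≤ α := le_csSup hS'bd hwwS
          have h4 : dist ww α < δ := by
            rw [Real.dist_eq, abs_lt]
            constructor <;> linarith
          have := mem_Iio.1 (hball h4)
          linarith [hwwS.2]
        linarith
      have hslope : ∀ ww, α < ww → ww ≤ u₁ → -G ww ≤ (G (α - 1) - G α) * (ww - α) := by
        intro ww h1 h2
        have hs := (hGconv xstar hx2).slope_mono_adjacent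
          (mem_Iic.2 (by linarith : α - 1 ≤ xstar))
          (mem_Iic.2 (by linarith : ww ≤ xstar)) (by linarith : α - 1 < α) h1
        have hden : α - (α - 1) = 1 := by ring
        rw [hden, div_one] at hs
        have h3 : 0 < ww - α := by linarith
        rw [le_div_iff₀ h3] at hs
        nlinarith [hs]
      have hK'pos : 0 < G (α - 1) - G α := by
        have := hslope u₁ hα2 le_rfl
        nlinarith
      have hzt : -u₁ < -α := by linarith
      have hgposT : ∀ u ∈ Ico (-u₁) (-α), 0 < g u := by
        intro u hu
        have h9 := hGneg' (-u) (by have := hu.2; linarith)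
          (by have := hu.1; linarith)
        show (0:ℝ) < -G (-u)
        linarith
      have hbdT : ∀ u ∈ Ico (-u₁) (-α), g u ≤ (G (α - 1) - G α) * (-α - u) := by
        intro u hu
        have h9 := hslope (-u) (by have := hu.2; linarith) (by have := hu.1; linarith)
        show -G (-u) ≤ (G (α - 1) - G α) * (-α - u)
        nlinarith [h9]
      have hgcT : ContinuousOn g (Ico (-u₁) (-α)) := hgt.mono fun u hu => hu.1
      obtain ⟨vt, hvt0, hvtd, hvtm⟩ := core_ode g (-u₁) (Iio (-α)) isOpen_Iio (convex_Iio _)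
        (mem_Iio.2 hzt) (by simp only [mem_Iio]; linarith)
        (fun u hu => (hgt u hu.2).mono inter_subset_right)
        (fun ww hww => hgposT ww ⟨hww.2, hww.1⟩)
        (fun T => by
          obtain ⟨y, hy1, hy2, hy3⟩ := div_aux g hzt hK'pos hgcT hgposT hbdT T
          exact ⟨y, mem_Iio.2 hy2, hy1, hy3⟩)
      refine ⟨fun t => -vt t, by simp [hvt0], ?_, ?_, by rw [hmax]; exact hx2⟩
      · intro t ht
        have hd := (hvtd t ht).neg
        have hval : -g (vt t) = G (-vt t) := by simp [hgdef]
        rw [hval] at hd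
        exact hd.hasDerivWithinAt
      · intro t ht
        have h5 := (hvtm t ht).2
        show -vt t ≤ max u₁ xstar
        rw [hmax]
        linarith
    · -- G < 0 everywhere below u₁
      push_neg at hS'
      have hGnegAll : ∀ ww, ww ≤ u₁ → G ww < 0 := by
        intro ww h
        have := hS' ww h
        linarith
      have hCCpos : 0 < -G (u₁ - 1) + |G (u₁ - 1) - G (u₁ - 2)| := by
        have := hGnegAll (u₁ - 1) (by linarith)
        have := abs_nonneg (G (u₁ - 1) - G (u₁ - 2))
        linarith
      have hKKpos : 0 < max (G u₁ - G (u₁ - 1)) 0 + 1 := by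
        linarith [le_max_right (G u₁ - G (u₁ - 1)) (0:ℝ)]
      have hlin : ∀ ww, ww ≤ u₁ → -G ww ≤ (-G (u₁ - 1) + |G (u₁ - 1) - G (u₁ - 2)|) +
          (max (G u₁ - G (u₁ - 1)) 0 + 1) * (u₁ - ww) := by
        intro ww hww
        rcases lt_trichotomy ww (u₁ - 1) with h | h | h
        · have hs := (hGconv xstar hx2).slope_mono_adjacent
            (mem_Iic.2 (by linarith : ww ≤ xstar)) (mem_Iic.2 hx1)
            (h : ww < u₁ - 1) (by linarith : u₁ - 1 < u₁)
          have hden : u₁ - (u₁ - 1) = 1 := by ring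
          rw [hden, div_one] at hs
          have h3 : 0 < u₁ - 1 - ww := by linarith
          rw [div_le_iff₀ h3] at hs
          have h4 : (G u₁ - G (u₁ - 1)) * (u₁ - 1 - ww) ≤
              max (G u₁ - G (u₁ - 1)) 0 * (u₁ - 1 - ww) :=
            mul_le_mul_of_nonneg_right (le_max_left _ _) h3.le
          have h6 : (0:ℝ) ≤ max (G u₁ - G (u₁ - 1)) 0 := le_max_right _ _
          have h7 : u₁ - 1 - ww ≤ u₁ - ww := by linarith
          have h5 : max (G u₁ - G (u₁ - 1)) 0 * (u₁ - 1 - ww) ≤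
              (max (G u₁ - G (u₁ - 1)) 0 + 1) * (u₁ - ww) := by
            nlinarith [mul_le_mul_of_nonneg_left h7 h6]
          have h8 := abs_nonneg (G (u₁ - 1) - G (u₁ - 2))
          linarith
        · rw [h]
          have h8 := abs_nonneg (G (u₁ - 1) - G (u₁ - 2))
          nlinarith [hKKpos]
        · have hs := (hGconv xstar hx2).slope_mono_adjacent
            (mem_Iic.2 (by linarith : u₁ - 2 ≤ xstar)) (mem_Iic.2 (by linarith : ww ≤ xstar))
            (by linarith : u₁ - 2 < u₁ - 1) h
          have hden : u₁ - 1 - (u₁ - 2) = 1 := by ring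
          rw [hden, div_one] at hs
          have h3 : 0 < ww - (u₁ - 1) := by linarith
          rw [le_div_iff₀ h3] at hs
          have h4 : ww - (u₁ - 1) ≤ 1 := by linarith
          have h5 := neg_abs_le (G (u₁ - 1) - G (u₁ - 2))
          nlinarith [abs_nonneg (G (u₁ - 1) - G (u₁ - 2)),
            mul_le_mul_of_nonneg_right h5 h3.le,
            mul_le_of_le_one_right (abs_nonneg (G (u₁ - 1) - G (u₁ - 2))) h4,
            mul_nonneg hKKpos.le (sub_nonneg.2 hww)]
      have hbdT : ∀ u, -u₁ ≤ u → g u ≤ (-G (u₁ - 1) + |G (u₁ - 1) - G (u₁ - 2)|) +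
          (max (G u₁ - G (u₁ - 1)) 0 + 1) * (u - -u₁) := by
        intro u hu
        have h9 := hlin (-u) (by linarith)
        show -G (-u) ≤ _
        nlinarith [h9]
      have hgposT : ∀ u, -u₁ ≤ u → 0 < g u := by
        intro u hu
        have h9 := hGnegAll (-u) (by linarith)
        show (0:ℝ) < -G (-u)
        linarith
      obtain ⟨vt, hvt0, hvtd, hvtm⟩ := core_ode g (-u₁) univ isOpen_univ convex_univ
        (mem_univ _) (mem_univ _)
        (by rw [univ_inter]; exact hgt)
        (fun ww hww => hgposT ww hww.2)
        (fun T => by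
          obtain ⟨y, hy1, hy2⟩ := div_aux2 g hCCpos hKKpos hgt hgposT hbdT T
          exact ⟨y, mem_univ y, hy1, hy2⟩)
      refine ⟨fun t => -vt t, by simp [hvt0], ?_, ?_, by rw [hmax]; exact hx2⟩
      · intro t ht
        have hd := (hvtd t ht).neg
        have hval : -g (vt t) = G (-vt t) := by simp [hgdef]
        rw [hval] at hd
        exact hd.hasDerivWithinAt
      · intro t ht
        have h5 := (hvtm t ht).2
        show -vt t ≤ max u₁ xstar
        rw [hmax]
        linarith
  · -- stationary case : G u₁ = 0
    refine ⟨fun _ => u₁, rfl, ?_, ?_, by rw [hmax]; exact hx2⟩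
    · intro t ht
      have hc : HasDerivWithinAt (fun _ : ℝ => u₁) 0 (Ici 0) t := hasDerivWithinAt_const t _ u₁
      simpa [hzero] using hc
    · intro t ht; exact le_max_left _ _
  · -- increasing case : 0 < G u₁
    have hu₁xs : u₁ < xstar := by
      rcases lt_or_eq_of_le hx1 with h | h
      · exact h
      · exfalso; rw [h] at hpos; linarith
    have hSne : {ww | ww ∈ Icc u₁ xstar ∧ G ww ≤ 0}.Nonempty := ⟨xstar, ⟨hx1, le_refl _⟩, hx3⟩
    have hSbd : BddBelow {ww | ww ∈ Icc u₁ xstar ∧ G ww ≤ 0} := ⟨u₁, fun ww hww => hww.1.1⟩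
    set z := sInf {ww | ww ∈ Icc u₁ xstar ∧ G ww ≤ 0} with hz
    have hz1 : u₁ ≤ z := le_csInf hSne fun ww hww => hww.1.1
    have hz2 : z ≤ xstar := csInf_le hSbd ⟨⟨hx1, le_refl _⟩, hx3⟩
    have hGpos : ∀ ww, u₁ ≤ ww → ww < z → 0 < G ww := by
      intro ww h1 h2
      by_contra hcon
      push_neg at hcon
      have : z ≤ ww := csInf_le hSbd ⟨⟨h1, by linarith⟩, hcon⟩
      linarith
    have hzL : ∀ ww : ℝ, ww < z → (ww : EReal) < L := fun ww h =>
      lt_of_lt_of_le (EReal.coe_lt_coe_iff.2 (lt_of_lt_of_le h hz2)) hx2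
    have hGz : G z ≤ 0 := by
      rcases lt_or_eq_of_le hz2 with h | h
      · by_contra hcon
        push_neg at hcon
        have hca : ContinuousAt G z :=
          hcontAt z (lt_of_lt_of_le (EReal.coe_lt_coe_iff.2 h) hx2)
        have hev := hca.eventually_mem (isOpen_Ioi.mem_nhds (mem_Ioi.2 hcon))
        obtain ⟨δ, hδ, hball⟩ := Metric.eventually_nhds_iff.1 hev
        obtain ⟨ww, hwwS, hwwlt⟩ := exists_lt_of_csInf_lt hSne
          (show sInf {ww | ww ∈ Icc u₁ xstar ∧ G ww ≤ 0} < z + δ by rw [← hz]; linarith)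
        have hwwz : z ≤ ww := csInf_le hSbd hwwS
        have h4 : dist ww z < δ := by
          rw [Real.dist_eq, abs_of_nonneg (by linarith)]
          linarith
        have := mem_Ioi.1 (hball h4)
        linarith [hwwS.2]
      · rw [h]; exact hx3
    have hu₁z : u₁ < z := by
      rcases lt_or_eq_of_le hz1 with h | h
      · exact h
      · exfalso; rw [← h] at hGz; linarith
    have hKBpos : 0 < G u₁ / (z - u₁) := div_pos hpos (by linarith)
    have hbd : ∀ u ∈ Ico u₁ z, G u ≤ G u₁ / (z - u₁) * (z - u) := by
      intro u hu
      have hch := hchord (le_of_lt hu₁xs) hz2 hu₁z ⟨hu.1, hu.2.le⟩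
      have hq0 : 0 ≤ (u - u₁) / (z - u₁) := div_nonneg (by linarith [hu.1]) (by linarith)
      have h2 : (u - u₁) / (z - u₁) * G z ≤ 0 := mul_nonpos_of_nonneg_of_nonpos hq0 hGz
      have h3 : (z - u) / (z - u₁) * G u₁ = G u₁ / (z - u₁) * (z - u) := by ring
      linarith
    have hgcB : ContinuousOn G (Iio z ∩ Ici u₁) := fun ww hww =>
      (hcontAt ww (hzL ww hww.1)).continuousWithinAt
    have hgposB : ∀ ww ∈ Iio z ∩ Ici u₁, 0 < G ww := fun ww hww => hGpos ww hww.2 hww.1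
    obtain ⟨v, hv0, hvd, hvm⟩ := core_ode G u₁ (Iio z) isOpen_Iio (convex_Iio z)
      (mem_Iio.2 hu₁z) (by simp only [mem_Iio]; linarith)
      hgcB hgposB
      (fun T => by
        obtain ⟨y, hy1, hy2, hy3⟩ := div_aux G hu₁z hKBpos
          (hgcB.mono fun u hu => ⟨hu.2, hu.1⟩)
          (fun u hu => hGpos u hu.1 hu.2) hbd T
        exact ⟨y, mem_Iio.2 hy2, hy1, hy3⟩)
    refine ⟨v, hv0, ?_, ?_, by rw [hmax]; exact hx2⟩
    · intro t ht
      exact (hvd t ht).hasDerivWithinAt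
    · intro t ht
      have := mem_Iio.1 (hvm t ht).1
      rw [hmax]
      linarith
end

section
/- (Corollary 3.5 in Riccati form, case ψ∧φ < ∞.) Assume L < ∞. Then the following are equivalent: (a) for every u₁ ≤ L there exists a global solution of the Riccati equation starting at u₁ that stays in the domain, i.e. a differentiable v : [0,∞) → ℝ with v(0) = u₁, v′(t) = G(v(t)) and v(t) ≤ L for all t ≥ 0; (b) G(L) ≤ 0, i.e. Φ(L) + a·L + c ≤ 0. -/
open MeasureTheory Real Set Filter Topology intervalIntegral

lemma core_ode_s9 (g : ℝ → ℝ) (u₁ : ℝ) (J : Set ℝ)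
    (hu₁ : u₁ ∈ J) (hJle : J ⊆ Set.Iic u₁)
    (hJoc : J.OrdConnected)
    (hJnm : ∀ w ∈ J, ∃ w' ∈ J, w' < w)
    (hgc : Continuous g)
    (hgneg : ∀ w, w ∈ J ∪ Set.Ici u₁ → g w < 0)
    (hunb : ∀ T : ℝ, ∃ w ∈ J, T ≤ ∫ s in w..u₁, (-(g s))⁻¹) :
    ∃ v : ℝ → ℝ, v 0 = u₁ ∧ (∀ t, 0 ≤ t → HasDerivAt v (g (v t)) t) ∧
      (∀ t, 0 ≤ t → v t ∈ J) := by
  set D : Set ℝ := J ∪ Set.Ici u₁ with hD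
  have hu₁D : u₁ ∈ D := Or.inr (le_refl u₁)
  have hup : ∀ w ∈ D, ∀ w', w ≤ w' → w' ∈ D := by
    rintro w hw w' hww'
    rcases le_or_gt u₁ w' with h | h
    · exact Or.inr h
    · rcases hw with hw | hw
      · exact Or.inl (hJoc.out hw hu₁ ⟨hww', h.le⟩)
      · exact absurd (le_trans hw hww') h.not_ge
  have hlow : ∀ w ∈ D, ∃ w' < w, Set.Ioi w' ⊆ D := by
    rintro w hw
    have hex : ∃ w' ∈ J, w' < w := by
      rcases hw with hw | hw
      · exact hJnm w hw
      · obtain ⟨w', hw'J, hw'lt⟩ := hJnm u₁ hu₁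
        exact ⟨w', hw'J, lt_of_lt_of_le hw'lt hw⟩
    obtain ⟨w', hw'J, hlt⟩ := hex
    exact ⟨w', hlt, fun y hy => hup w' (Or.inl hw'J) y (le_of_lt hy)⟩
  have hDopen : IsOpen D := by
    rw [isOpen_iff_mem_nhds]
    intro w hw
    obtain ⟨w', hlt, hsub⟩ := hlow w hw
    exact Filter.mem_of_superset (Ioi_mem_nhds hlt) hsub
  set h : ℝ → ℝ := fun s => (-(g s))⁻¹ with hh
  have hpos : ∀ w ∈ D, 0 < h w := fun w hw => inv_pos.mpr (neg_pos.mpr (hgneg w hw))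
  have hconth : ∀ w ∈ D, ContinuousAt h w := fun w hw =>
    ((hgc.continuousAt).neg).inv₀ (ne_of_gt (neg_pos.mpr (hgneg w hw)))
  have hcontOn : ContinuousOn h D := fun w hw => (hconth w hw).continuousWithinAt
  have hIccD : ∀ x ∈ D, ∀ y ∈ D, Set.uIcc x y ⊆ D := by
    intro x hx y hy z hz
    rcases le_total x y with hxy | hxy
    · rw [Set.uIcc_of_le hxy] at hz; exact hup x hx z hz.1
    · rw [Set.uIcc_of_ge hxy] at hz; exact hup y hy z hz.1
  have hint : ∀ x ∈ D, ∀ y ∈ D, IntervalIntegrable h volume x y := fun x hx y hy =>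
    (hcontOn.mono (hIccD x hx y hy)).intervalIntegrable
  set F : ℝ → ℝ := fun w => ∫ s in w..u₁, h s with hF
  have hFderiv : ∀ w ∈ D, HasDerivAt F (-(h w)) w := by
    intro w hw
    have h1 : HasDerivAt (fun u => ∫ s in u₁..u, h s) (h w) w :=
      intervalIntegral.integral_hasDerivAt_right (hint u₁ hu₁D w hw)
        ((hcontOn.stronglyMeasurableAtFilter hDopen) w hw) (hconth w hw)
    have heq : F = fun u => -(∫ s in u₁..u, h s) := by
      funext u; exact intervalIntegral.integral_symm u₁ u
    rw [heq]; exact h1.neg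
  have hFanti : StrictAntiOn F D := by
    intro x hx y hy hxy
    have hadd : (∫ s in x..y, h s) + (∫ s in y..u₁, h s) = ∫ s in x..u₁, h s :=
      intervalIntegral.integral_add_adjacent_intervals (hint x hx y hy) (hint y hy u₁ hu₁D)
    have hposint : 0 < ∫ s in x..y, h s := by
      apply intervalIntegral.intervalIntegral_pos_of_pos_on (hint x hx y hy)
      · intro s hs
        exact hpos s (hup x hx s hs.1.le)
      · exact hxy
    have : F x = (∫ s in x..y, h s) + F y := by rw [hF]; simp only []; rw [← hadd]
    rw [this]; linarith
  have hF0 : F u₁ = 0 := intervalIntegral.integral_same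
  have hu₁1D : u₁ + 1 ∈ D := hup u₁ hu₁D _ (by linarith)
  set c₁ : ℝ := F (u₁ + 1) with hc₁def
  have hc₁ : c₁ < 0 := by
    have := hFanti hu₁D hu₁1D (lt_add_one u₁)
    rwa [hF0] at this
  have hsurj : ∀ t, c₁ ≤ t → ∃ w ∈ D, F w = t := by
    intro t ht
    obtain ⟨w₀, hw₀J, hw₀⟩ := hunb (max t 0)
    have hw₀D : w₀ ∈ D := Or.inl hw₀J
    have hle : w₀ ≤ u₁ + 1 := le_trans (hJle hw₀J) (by linarith)
    have hIccsub : Set.Icc w₀ (u₁ + 1) ⊆ D := fun z hz => hup w₀ hw₀D z hz.1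
    have hcontF : ContinuousOn F (Set.Icc w₀ (u₁ + 1)) := fun z hz =>
      ((hFderiv z (hIccsub hz)).continuousAt).continuousWithinAt
    have hmem : t ∈ Set.Icc (F (u₁ + 1)) (F w₀) :=
      ⟨ht, le_trans (le_max_left t 0) hw₀⟩
    obtain ⟨w, hwmem, hFw⟩ := intermediate_value_Icc' hle hcontF hmem
    exact ⟨w, hIccsub hwmem, hFw⟩
  set v : ℝ → ℝ := Function.invFunOn F D with hv
  have hvspec : ∀ t, c₁ ≤ t → v t ∈ D ∧ F (v t) = t := by
    intro t ht
    obtain ⟨w, hwD, hFw⟩ := hsurj t ht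
    exact ⟨Function.invFunOn_mem ⟨w, hwD, hFw⟩, Function.invFunOn_eq ⟨w, hwD, hFw⟩⟩
  have hinj : Set.InjOn F D := hFanti.injOn
  have hv0 : v 0 = u₁ := by
    refine hinj (hvspec 0 hc₁.le).1 hu₁D ?_
    rw [(hvspec 0 hc₁.le).2, hF0]
  have hvJ : ∀ t, 0 ≤ t → v t ∈ J := by
    intro t ht
    obtain ⟨hvD, hFv⟩ := hvspec t (le_trans hc₁.le ht)
    rcases hvD with hm | hm
    · exact hm
    · rcases eq_or_lt_of_le (Set.mem_Ici.mp hm) with heq | hlt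
      · rw [← heq]; exact hu₁
      · exfalso
        have := hFanti hu₁D (hvspec t (le_trans hc₁.le ht)).1 hlt
        rw [hF0, hFv] at this; linarith
  have hvcont : ∀ t, 0 ≤ t → ContinuousAt v t := by
    intro t ht
    rw [Metric.continuousAt_iff]
    intro ε hε
    obtain ⟨hwD, hFw⟩ := hvspec t (le_trans hc₁.le ht)
    obtain ⟨w', hw'lt, hw'sub⟩ := hlow (v t) hwD
    obtain ⟨w₁, hw₁gt, hw₁lt, hw₁ge⟩ : ∃ x, w' < x ∧ x < v t ∧ v t - ε / 2 ≤ x :=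
      ⟨max ((w' + v t) / 2) (v t - ε / 2), lt_of_lt_of_le (by linarith) (le_max_left _ _),
        max_lt (by linarith) (by linarith), le_max_right _ _⟩
    have hw₁D : w₁ ∈ D := hw'sub hw₁gt
    obtain ⟨w₂, hw₂eq⟩ : ∃ x : ℝ, x = v t + ε / 2 := ⟨_, rfl⟩
    have hw₂gt : v t < w₂ := by rw [hw₂eq]; linarith
    have hw₂D : w₂ ∈ D := hup (v t) hwD w₂ hw₂gt.le
    have h1 : t < F w₁ := by have := hFanti hw₁D hwD hw₁lt; rwa [hFw] at this
    have h2 : F w₂ < t := by have := hFanti hwD hw₂D hw₂gt; rwa [hFw] at this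
    have htc₁ : c₁ < t := lt_of_lt_of_le hc₁ ht
    refine ⟨min (min (F w₁ - t) (t - F w₂)) (t - c₁),
      lt_min (lt_min (by linarith) (by linarith)) (by linarith), ?_⟩
    intro t' hdist
    rw [Real.dist_eq] at hdist ⊢
    have habs := abs_lt.mp hdist
    have hd1 : t' - t < F w₁ - t :=
      lt_of_lt_of_le habs.2 (le_trans (min_le_left _ _) (min_le_left _ _))
    have hd2 : -(t - F w₂) < t' - t :=
      lt_of_le_of_lt (neg_le_neg (le_trans (min_le_left _ _) (min_le_right _ _))) habs.1
    have hd3 : -(t - c₁) < t' - t := lt_of_le_of_lt (neg_le_neg (min_le_right _ _)) habs.1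
    have ht'c₁ : c₁ < t' := by linarith
    obtain ⟨hvD', hFv'⟩ := hvspec t' ht'c₁.le
    have hlt1 : F w₂ < F (v t') := by rw [hFv']; linarith
    have hlt2 : F (v t') < F w₁ := by rw [hFv']; linarith
    have hgt : w₁ < v t' := by
      by_contra hle
      push_neg at hle
      have := hFanti.antitoneOn hvD' hw₁D hle
      linarith
    have hltw : v t' < w₂ := by
      by_contra hle
      push_neg at hle
      have := hFanti.antitoneOn hw₂D hvD' hle
      linarith
    rw [abs_lt]
    rw [hw₂eq] at hltw
    constructor <;> linarith
  have hvderiv : ∀ t, 0 ≤ t → HasDerivAt v (g (v t)) t := by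
    intro t ht
    obtain ⟨hwD, hFw⟩ := hvspec t (le_trans hc₁.le ht)
    have hF' : HasDerivAt F (-(h (v t))) (v t) := hFderiv _ hwD
    have hhpos := hpos _ hwD
    have hne : -(h (v t)) ≠ 0 := by simp only [neg_ne_zero]; exact ne_of_gt hhpos
    have hfg : ∀ᶠ y in 𝓝 t, F (v y) = y := by
      filter_upwards [Ioi_mem_nhds (lt_of_lt_of_le hc₁ ht)] with y hy
      exact (hvspec y (le_of_lt hy)).2
    have hder := HasDerivAt.of_local_left_inverse (hvcont t ht) hF' hne hfg
    have heq : (-(h (v t)))⁻¹ = g (v t) := by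
      rw [hh]; simp [inv_neg]
    rwa [heq] at hder
  exact ⟨v, hv0, hvderiv, hvJ⟩


lemma exp_sub_one_le' (y : ℝ) : Real.exp y - 1 ≤ y * Real.exp y := by
  have h := Real.add_one_le_exp (-y)
  rw [Real.exp_neg] at h
  have hp := Real.exp_pos y
  have hc : (Real.exp y)⁻¹ * Real.exp y = 1 := inv_mul_cancel₀ (ne_of_gt hp)
  nlinarith [mul_le_mul_of_nonneg_right h hp.le]

lemma abs_exp_sub_one_le' (y : ℝ) : |Real.exp y - 1| ≤ |y| * Real.exp |y| := by
  rcases le_or_gt 0 y with hy | hy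
  · rw [abs_of_nonneg hy, abs_of_nonneg (by nlinarith [Real.add_one_le_exp y] : 0 ≤ Real.exp y - 1)]
    exact exp_sub_one_le' y
  · have h1 : Real.exp y ≤ 1 := by
      rw [show (1:ℝ) = Real.exp 0 by simp]
      exact Real.exp_le_exp.mpr hy.le
    rw [abs_of_neg hy, abs_of_nonpos (by linarith : Real.exp y - 1 ≤ 0)]
    have h2 : (1:ℝ) ≤ Real.exp (-y) := by
      rw [show (1:ℝ) = Real.exp 0 by simp]
      exact Real.exp_le_exp.mpr (by linarith)
    nlinarith [Real.add_one_le_exp y, mul_le_mul_of_nonneg_left h2 (by linarith : (0:ℝ) ≤ -y)]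

lemma exp_taylor_nonneg' (y : ℝ) : 0 ≤ Real.exp y - 1 - y := by
  nlinarith [Real.add_one_le_exp y]

lemma exp_taylor_le' (y : ℝ) : Real.exp y - 1 - y ≤ y ^ 2 * (Real.exp y + 1) := by
  rcases le_or_gt 0 y with hy | hy
  · nlinarith [exp_sub_one_le' y, Real.exp_pos y, mul_le_mul_of_nonneg_left (exp_sub_one_le' y) hy]
  · nlinarith [exp_sub_one_le' y, Real.add_one_le_exp y, Real.exp_pos y,
      mul_le_mul_of_nonneg_left (Real.add_one_le_exp y) (neg_nonneg.mpr hy.le)]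

lemma pointwise_diff_bound' (w₁ w₂ x : ℝ) (hx : 0 ≤ x) (h21 : w₂ ≤ w₁) :
    |(Real.exp (w₁ * x) - 1 - w₁ * x) - (Real.exp (w₂ * x) - 1 - w₂ * x)| ≤
      (w₁ - w₂) * x * (|Real.exp (w₁ * x) - 1| + |Real.exp (w₂ * x) - 1|) := by
  have hΔ : 0 ≤ (w₁ - w₂) * x := mul_nonneg (by linarith) hx
  have he : Real.exp (w₂ * x) * Real.exp ((w₁ - w₂) * x) = Real.exp (w₁ * x) := by
    rw [← Real.exp_add]; congr 1; ring
  have hp2 := Real.exp_pos (w₂ * x)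
  have hup : Real.exp (w₁ * x) - 1 - w₁ * x - (Real.exp (w₂ * x) - 1 - w₂ * x) ≤
      (w₁ - w₂) * x * (Real.exp (w₁ * x) - 1) := by
    have h1 := exp_sub_one_le' ((w₁ - w₂) * x)
    nlinarith [mul_le_mul_of_nonneg_left h1 hp2.le]
  have hlo : (w₁ - w₂) * x * (Real.exp (w₂ * x) - 1) ≤
      Real.exp (w₁ * x) - 1 - w₁ * x - (Real.exp (w₂ * x) - 1 - w₂ * x) := by
    nlinarith [mul_le_mul_of_nonneg_left (exp_taylor_nonneg' ((w₁ - w₂) * x)) hp2.le]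
  have hA := le_abs_self (Real.exp (w₁ * x) - 1)
  have hB := neg_abs_le (Real.exp (w₂ * x) - 1)
  have hAn := abs_nonneg (Real.exp (w₁ * x) - 1)
  have hBn := abs_nonneg (Real.exp (w₂ * x) - 1)
  rw [abs_le]
  constructor
  · nlinarith [mul_le_mul_of_nonneg_left hB hΔ]
  · nlinarith [mul_le_mul_of_nonneg_left hA hΔ]

section Gfacts

variable {μ : Measure ℝ} {L : ℝ}

lemma int_sq' (hμint : Integrable (fun x => min (x ^ 2) x) μ) :
    IntegrableOn (fun x : ℝ => x ^ 2) (Set.Ioc 0 1) μ := by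
  refine (hμint.integrableOn (s := Set.Ioc 0 1)).congr_fun ?_ measurableSet_Ioc
  intro x hx
  simp only [min_eq_left]
  exact min_eq_left (by nlinarith [hx.1, hx.2])

lemma int_id' (hμint : Integrable (fun x => min (x ^ 2) x) μ) :
    IntegrableOn (fun x : ℝ => x) (Set.Ici 1) μ := by
  refine (hμint.integrableOn (s := Set.Ici 1)).congr_fun ?_ measurableSet_Ici
  intro x hx
  simp only [Set.mem_Ici] at hx
  exact min_eq_right (by nlinarith)

lemma int_f' (hL : 0 < L)
    (hsq : IntegrableOn (fun x : ℝ => x ^ 2) (Set.Ioc 0 1) μ)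
    (hone : IntegrableOn (fun _ : ℝ => (1 : ℝ)) (Set.Ici 1) μ)
    (hid : IntegrableOn (fun x : ℝ => x) (Set.Ici 1) μ)
    (hexpL : IntegrableOn (fun x => Real.exp (L * x)) (Set.Ici 1) μ)
    {w : ℝ} (hw : w ≤ L) :
    IntegrableOn (fun x => Real.exp (w * x) - 1 - w * x) (Set.Ioi 0) μ := by
  have hcont : Continuous (fun x => Real.exp (w * x) - 1 - w * x) :=
    ((Real.continuous_exp.comp (continuous_const.mul continuous_id)).sub continuous_const).sub
      (continuous_const.mul continuous_id)
  have hmeas : AEStronglyMeasurable (fun x => Real.exp (w * x) - 1 - w * x) μ :=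
    hcont.aestronglyMeasurable
  rw [show Set.Ioi (0:ℝ) = Set.Ioc 0 1 ∪ Set.Ioi 1 from (Set.Ioc_union_Ioi_eq_Ioi (by norm_num)).symm]
  apply IntegrableOn.union
  · refine Integrable.mono' (hsq.const_mul (w ^ 2 * (Real.exp |w| + 1))) hmeas.restrict ?_
    rw [ae_restrict_iff' measurableSet_Ioc]
    filter_upwards with x hx
    rw [Real.norm_eq_abs, abs_of_nonneg (exp_taylor_nonneg' _)]
    have h2 : Real.exp (w * x) ≤ Real.exp |w| := by
      apply Real.exp_le_exp.mpr
      calc w * x ≤ |w * x| := le_abs_self _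
        _ = |w| * |x| := abs_mul _ _
        _ ≤ |w| * 1 := by
            apply mul_le_mul_of_nonneg_left _ (abs_nonneg w)
            rw [abs_of_nonneg hx.1.le]; exact hx.2
        _ = |w| := mul_one _
    have h1 := exp_taylor_le' (w * x)
    have h3 := mul_le_mul_of_nonneg_left h2 (mul_nonneg (sq_nonneg w) (sq_nonneg x))
    nlinarith [h1, h3]
  · have hbound : IntegrableOn (fun x => Real.exp (L * x) + 1 + |w| * x) (Set.Ici 1) μ :=
      (hexpL.add hone).add (hid.const_mul |w|)
    refine Integrable.mono' (hbound.mono_set Set.Ioi_subset_Ici_self)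
      (hmeas.restrict (s := Set.Ioi 1)) ?_
    rw [ae_restrict_iff' measurableSet_Ioi]
    filter_upwards with x hx
    simp only [Set.mem_Ioi] at hx
    rw [Real.norm_eq_abs, abs_of_nonneg (exp_taylor_nonneg' _)]
    have h1 : Real.exp (w * x) ≤ Real.exp (L * x) :=
      Real.exp_le_exp.mpr (mul_le_mul_of_nonneg_right hw (by linarith))
    have h2 : -(w * x) ≤ |w| * x := by
      rw [show -(w * x) = -w * x by ring]
      exact mul_le_mul_of_nonneg_right (neg_le_abs w) (by linarith)
    linarith

lemma Phi_diff_le' (hL : 0 < L) {R : ℝ} (hLR : L ≤ R)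
    (hsq : IntegrableOn (fun x : ℝ => x ^ 2) (Set.Ioc 0 1) μ)
    (hone : IntegrableOn (fun _ : ℝ => (1 : ℝ)) (Set.Ici 1) μ)
    (hid : IntegrableOn (fun x : ℝ => x) (Set.Ici 1) μ)
    (hexpL : IntegrableOn (fun x => Real.exp (L * x)) (Set.Ici 1) μ)
    (hass : IntegrableOn (fun x => x * Real.exp (L * x)) (Set.Ici 1) μ)
    {w₁ w₂ : ℝ} (hw₁ : w₁ ∈ Set.Icc (-R) L) (hw₂ : w₂ ∈ Set.Icc (-R) L) (h21 : w₂ ≤ w₁) :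
    |(∫ x in Set.Ioi (0:ℝ), (Real.exp (w₁ * x) - 1 - w₁ * x) ∂μ) -
        ∫ x in Set.Ioi (0:ℝ), (Real.exp (w₂ * x) - 1 - w₂ * x) ∂μ| ≤
      (w₁ - w₂) * ((2 * R * Real.exp R) * (∫ x in Set.Ioc (0:ℝ) 1, x ^ 2 ∂μ) +
        2 * ∫ x in Set.Ioi (1:ℝ), x * Real.exp (L * x) ∂μ) := by
  have hR0 : 0 < R := lt_of_lt_of_le hL hLR
  have habs1 : |w₁| ≤ R := abs_le.mpr ⟨hw₁.1, hw₁.2.trans hLR⟩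
  have habs2 : |w₂| ≤ R := abs_le.mpr ⟨hw₂.1, hw₂.2.trans hLR⟩
  have hΔ : 0 ≤ w₁ - w₂ := by linarith
  have hf₁ := int_f' hL hsq hone hid hexpL hw₁.2
  have hf₂ := int_f' hL hsq hone hid hexpL hw₂.2
  set d := fun x => (Real.exp (w₁ * x) - 1 - w₁ * x) - (Real.exp (w₂ * x) - 1 - w₂ * x) with hd
  rw [← integral_sub hf₁ hf₂]
  have habs : |∫ x in Set.Ioi (0:ℝ), d x ∂μ| ≤ ∫ x in Set.Ioi (0:ℝ), |d x| ∂μ := by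
    simpa [Real.norm_eq_abs] using
      norm_integral_le_integral_norm (μ := μ.restrict (Set.Ioi 0)) d
  refine le_trans habs ?_
  have hsub1 : Set.Ioc (0:ℝ) 1 ⊆ Set.Ioi 0 := fun x hx => hx.1
  have hsub2 : Set.Ioi (1:ℝ) ⊆ Set.Ioi 0 := fun x hx => Set.mem_Ioi.mpr (lt_trans one_pos hx)
  have hd1 : IntegrableOn (fun x => |d x|) (Set.Ioc 0 1) μ :=
    ((hf₁.mono_set hsub1).sub (hf₂.mono_set hsub1)).abs
  have hd2 : IntegrableOn (fun x => |d x|) (Set.Ioi 1) μ :=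
    ((hf₁.mono_set hsub2).sub (hf₂.mono_set hsub2)).abs
  rw [show Set.Ioi (0:ℝ) = Set.Ioc 0 1 ∪ Set.Ioi 1 from (Set.Ioc_union_Ioi_eq_Ioi (by norm_num)).symm,
    setIntegral_union (Set.Ioc_disjoint_Ioi le_rfl) measurableSet_Ioi hd1 hd2]
  have hI1 : (∫ x in Set.Ioc (0:ℝ) 1, |d x| ∂μ) ≤
      (w₁ - w₂) * (2 * R * Real.exp R) * ∫ x in Set.Ioc (0:ℝ) 1, x ^ 2 ∂μ := by
    rw [← MeasureTheory.integral_const_mul]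
    refine setIntegral_mono_on hd1 (hsq.const_mul _) measurableSet_Ioc ?_
    intro x hx
    have hx0 : (0:ℝ) ≤ x := hx.1.le
    have key := pointwise_diff_bound' w₁ w₂ x hx0 h21
    have hb : ∀ w : ℝ, |w| ≤ R → |Real.exp (w * x) - 1| ≤ R * x * Real.exp R := by
      intro w hwR
      have h1 : |w * x| ≤ R * x := by
        rw [abs_mul, abs_of_nonneg hx0]
        exact mul_le_mul_of_nonneg_right hwR hx0
      have h1' : R * x ≤ R := by nlinarith [hx.2]
      calc |Real.exp (w * x) - 1| ≤ |w * x| * Real.exp |w * x| := abs_exp_sub_one_le' _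
        _ ≤ (R * x) * Real.exp R :=
            mul_le_mul h1 (Real.exp_le_exp.mpr (h1.trans h1')) (Real.exp_pos _).le (by positivity)
    have hA := hb w₁ habs1
    have hB := hb w₂ habs2
    calc |d x| ≤ (w₁ - w₂) * x * (|Real.exp (w₁ * x) - 1| + |Real.exp (w₂ * x) - 1|) := key
      _ ≤ (w₁ - w₂) * x * (R * x * Real.exp R + R * x * Real.exp R) :=
          mul_le_mul_of_nonneg_left (add_le_add hA hB) (mul_nonneg hΔ hx0)
      _ = (w₁ - w₂) * (2 * R * Real.exp R) * x ^ 2 := by ring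
  have hI2 : (∫ x in Set.Ioi (1:ℝ), |d x| ∂μ) ≤
      (w₁ - w₂) * 2 * ∫ x in Set.Ioi (1:ℝ), x * Real.exp (L * x) ∂μ := by
    rw [← MeasureTheory.integral_const_mul]
    refine setIntegral_mono_on hd2 ((hass.mono_set Set.Ioi_subset_Ici_self).const_mul _)
      measurableSet_Ioi ?_
    intro x hx
    simp only [Set.mem_Ioi] at hx
    have hx0 : (0:ℝ) ≤ x := by linarith
    have key := pointwise_diff_bound' w₁ w₂ x hx0 h21
    have hone' : (1:ℝ) ≤ Real.exp (L * x) := by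
      rw [show (1:ℝ) = Real.exp 0 by simp]
      exact Real.exp_le_exp.mpr (by positivity)
    have hb : ∀ w : ℝ, w ≤ L → |Real.exp (w * x) - 1| ≤ Real.exp (L * x) := by
      intro w hwL
      have h1 : Real.exp (w * x) ≤ Real.exp (L * x) :=
        Real.exp_le_exp.mpr (mul_le_mul_of_nonneg_right hwL hx0)
      rw [abs_le]
      constructor
      · nlinarith [Real.exp_pos (w * x)]
      · linarith
    have hA := hb w₁ hw₁.2
    have hB := hb w₂ hw₂.2
    calc |d x| ≤ (w₁ - w₂) * x * (|Real.exp (w₁ * x) - 1| + |Real.exp (w₂ * x) - 1|) := key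
      _ ≤ (w₁ - w₂) * x * (Real.exp (L * x) + Real.exp (L * x)) :=
          mul_le_mul_of_nonneg_left (add_le_add hA hB) (mul_nonneg hΔ hx0)
      _ = (w₁ - w₂) * 2 * (x * Real.exp (L * x)) := by ring
  calc (∫ x in Set.Ioc (0:ℝ) 1, |d x| ∂μ) + ∫ x in Set.Ioi (1:ℝ), |d x| ∂μ ≤
      (w₁ - w₂) * (2 * R * Real.exp R) * (∫ x in Set.Ioc (0:ℝ) 1, x ^ 2 ∂μ) +
        (w₁ - w₂) * 2 * ∫ x in Set.Ioi (1:ℝ), x * Real.exp (L * x) ∂μ := add_le_add hI1 hI2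
    _ = (w₁ - w₂) * ((2 * R * Real.exp R) * (∫ x in Set.Ioc (0:ℝ) 1, x ^ 2 ∂μ) +
        2 * ∫ x in Set.Ioi (1:ℝ), x * Real.exp (L * x) ∂μ) := by ring

lemma G_lip' (hL : 0 < L) {R : ℝ} (hLR : L ≤ R)
    (hsq : IntegrableOn (fun x : ℝ => x ^ 2) (Set.Ioc 0 1) μ)
    (hone : IntegrableOn (fun _ : ℝ => (1 : ℝ)) (Set.Ici 1) μ)
    (hid : IntegrableOn (fun x : ℝ => x) (Set.Ici 1) μ)
    (hexpL : IntegrableOn (fun x => Real.exp (L * x)) (Set.Ici 1) μ)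
    (hass : IntegrableOn (fun x => x * Real.exp (L * x)) (Set.Ici 1) μ)
    (b σ a c : ℝ) (Gf : ℝ → ℝ)
    (hGf : ∀ w, Gf w = -b * w + σ ^ 2 / 2 * w ^ 2 +
      (∫ x in Set.Ioi (0 : ℝ), (Real.exp (w * x) - 1 - w * x) ∂μ) + a * w + c) :
    ∃ K, 0 < K ∧ ∀ w₁ ∈ Set.Icc (-R) L, ∀ w₂ ∈ Set.Icc (-R) L,
      |Gf w₁ - Gf w₂| ≤ K * |w₁ - w₂| := by
  have hR0 : 0 < R := lt_of_lt_of_le hL hLR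
  set I₁ := ∫ x in Set.Ioc (0:ℝ) 1, x ^ 2 ∂μ with hI₁
  set I₂ := ∫ x in Set.Ioi (1:ℝ), x * Real.exp (L * x) ∂μ with hI₂
  have hI₁0 : 0 ≤ I₁ := setIntegral_nonneg measurableSet_Ioc (fun x _ => sq_nonneg x)
  have hI₂0 : 0 ≤ I₂ := setIntegral_nonneg measurableSet_Ioi
    (fun x hx => mul_nonneg (by exact le_trans zero_le_one (le_of_lt hx)) (Real.exp_pos _).le)
  refine ⟨|b| + |a| + σ ^ 2 * R + (2 * R * Real.exp R) * I₁ + 2 * I₂ + 1, by positivity, ?_⟩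
  have key : ∀ w₁ ∈ Set.Icc (-R) L, ∀ w₂ ∈ Set.Icc (-R) L, w₂ ≤ w₁ →
      |Gf w₁ - Gf w₂| ≤ (|b| + |a| + σ ^ 2 * R + (2 * R * Real.exp R) * I₁ + 2 * I₂ + 1) * (w₁ - w₂) := by
    intro w₁ hw₁ w₂ hw₂ h21
    have hΔ : 0 ≤ w₁ - w₂ := by linarith
    have hpoly : |(-b * w₁ + σ ^ 2 / 2 * w₁ ^ 2 + a * w₁) - (-b * w₂ + σ ^ 2 / 2 * w₂ ^ 2 + a * w₂)| ≤
        (|b| + |a| + σ ^ 2 * R) * (w₁ - w₂) := by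
      have : (-b * w₁ + σ ^ 2 / 2 * w₁ ^ 2 + a * w₁) - (-b * w₂ + σ ^ 2 / 2 * w₂ ^ 2 + a * w₂) =
          (w₁ - w₂) * (-b + a + σ ^ 2 / 2 * (w₁ + w₂)) := by ring
      rw [this, abs_mul, abs_of_nonneg hΔ, mul_comm]
      apply mul_le_mul_of_nonneg_right _ hΔ
      have h1 : |(-b + a) + σ ^ 2 / 2 * (w₁ + w₂)| ≤ |(-b) + a| + σ ^ 2 / 2 * |w₁ + w₂| := by
        refine le_trans (abs_add_le _ _) ?_
        rw [abs_mul, abs_of_nonneg (by positivity : (0:ℝ) ≤ σ ^ 2 / 2)]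
      have h2 : |(-b) + a| ≤ |b| + |a| := le_trans (abs_add_le _ _) (by rw [abs_neg])
      have h3 : |w₁ + w₂| ≤ 2 * R := by
        rw [abs_le]
        constructor
        · have := hw₁.1; have := hw₂.1; linarith
        · have := hw₁.2.trans hLR; have := hw₂.2.trans hLR; linarith
      have h4 : σ ^ 2 / 2 * |w₁ + w₂| ≤ σ ^ 2 * R := by nlinarith [sq_nonneg σ]
      calc |(-b + a) + σ ^ 2 / 2 * (w₁ + w₂)| ≤ |(-b) + a| + σ ^ 2 / 2 * |w₁ + w₂| := h1
        _ ≤ |b| + |a| + σ ^ 2 * R := by linarith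
    have hint := Phi_diff_le' hL hLR hsq hone hid hexpL hass hw₁ hw₂ h21
    have hGdiff : Gf w₁ - Gf w₂ =
        ((-b * w₁ + σ ^ 2 / 2 * w₁ ^ 2 + a * w₁) - (-b * w₂ + σ ^ 2 / 2 * w₂ ^ 2 + a * w₂)) +
        ((∫ x in Set.Ioi (0:ℝ), (Real.exp (w₁ * x) - 1 - w₁ * x) ∂μ) -
          ∫ x in Set.Ioi (0:ℝ), (Real.exp (w₂ * x) - 1 - w₂ * x) ∂μ) := by
      rw [hGf, hGf]; ring
    rw [hGdiff]
    calc |_ + _| ≤ _ := abs_add_le _ _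
      _ ≤ (|b| + |a| + σ ^ 2 * R) * (w₁ - w₂) +
          (w₁ - w₂) * ((2 * R * Real.exp R) * I₁ + 2 * I₂) := add_le_add hpoly hint
      _ ≤ (|b| + |a| + σ ^ 2 * R + (2 * R * Real.exp R) * I₁ + 2 * I₂ + 1) * (w₁ - w₂) := by nlinarith
  intro w₁ hw₁ w₂ hw₂
  rcases le_total w₂ w₁ with h | h
  · rw [abs_of_nonneg (by linarith : (0:ℝ) ≤ w₁ - w₂)]
    exact key w₁ hw₁ w₂ hw₂ h
  · rw [abs_sub_comm (Gf w₁), abs_sub_comm w₁, abs_of_nonneg (by linarith : (0:ℝ) ≤ w₂ - w₁)]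
    exact key w₂ hw₂ w₁ hw₁ h

lemma G_cont' (hL : 0 < L)
    (hsq : IntegrableOn (fun x : ℝ => x ^ 2) (Set.Ioc 0 1) μ)
    (hone : IntegrableOn (fun _ : ℝ => (1 : ℝ)) (Set.Ici 1) μ)
    (hid : IntegrableOn (fun x : ℝ => x) (Set.Ici 1) μ)
    (hexpL : IntegrableOn (fun x => Real.exp (L * x)) (Set.Ici 1) μ)
    (hass : IntegrableOn (fun x => x * Real.exp (L * x)) (Set.Ici 1) μ)
    (b σ a c : ℝ) (Gf : ℝ → ℝ)
    (hGf : ∀ w, Gf w = -b * w + σ ^ 2 / 2 * w ^ 2 +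
      (∫ x in Set.Ioi (0 : ℝ), (Real.exp (w * x) - 1 - w * x) ∂μ) + a * w + c) :
    ContinuousOn Gf (Set.Iic L) := by
  intro w hw
  simp only [Set.mem_Iic] at hw
  set R := |w| + L + 1 with hR
  have hR0 : 0 < R := by positivity
  have hLR : L ≤ R := by nlinarith [abs_nonneg w]
  obtain ⟨K, hK0, hK⟩ := G_lip' hL hLR hsq hone hid hexpL hass b σ a c Gf hGf
  have hnegR : -R < w := by nlinarith [neg_abs_le w]
  have hwmem : w ∈ Set.Icc (-R) L := ⟨hnegR.le, hw⟩
  have hcw : ContinuousWithinAt Gf (Set.Icc (-R) L) w := by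
    rw [Metric.continuousWithinAt_iff]
    intro ε hε
    refine ⟨ε / (K + 1), by positivity, fun y hy hyd => ?_⟩
    rw [Real.dist_eq] at hyd ⊢
    have h1 := hK y hy w hwmem
    have h2 : K * |y - w| < K * (ε / (K + 1)) := mul_lt_mul_of_pos_left hyd hK0
    have h3 : K * (ε / (K + 1)) < ε := by
      have h5 : K / (K + 1) < 1 := (div_lt_one (by positivity)).mpr (by linarith)
      calc K * (ε / (K + 1)) = K / (K + 1) * ε := by ring
        _ < 1 * ε := by nlinarith
        _ = ε := one_mul ε
    linarith
  refine hcw.mono_of_mem_nhdsWithin ?_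
  rw [mem_nhdsWithin]
  exact ⟨Set.Ioi (-R), isOpen_Ioi, hnegR, fun y hy => ⟨le_of_lt hy.1, hy.2⟩⟩

lemma G_lower' (b σ a c : ℝ) (Gf : ℝ → ℝ)
    (hGf : ∀ w, Gf w = -b * w + σ ^ 2 / 2 * w ^ 2 +
      (∫ x in Set.Ioi (0 : ℝ), (Real.exp (w * x) - 1 - w * x) ∂μ) + a * w + c) (w : ℝ) :
    (a - b) * w + c ≤ Gf w := by
  rw [hGf]
  have h1 : (0:ℝ) ≤ ∫ x in Set.Ioi (0:ℝ), (Real.exp (w * x) - 1 - w * x) ∂μ :=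
    integral_nonneg (fun x => exp_taylor_nonneg' (w * x))
  nlinarith [sq_nonneg (σ * w)]

end Gfacts

set_option maxHeartbeats 2000000 in
/-- Corollary 3.5 in Riccati form, case `ψ ∧ φ < ∞`: when `L < ∞`, the
Riccati equation `v' = G(v)` admits, for every initial value `u₁ ≤ L`, a global solution
on `[0, ∞)` staying in `(-∞, L]` if and only if `G(L) ≤ 0`. -/
theorem statement9 (μ : Measure ℝ) (b σ a c : ℝ) (hσ : 0 ≤ σ)
    (hμ0 : μ (Set.Iic 0) = 0)
    (hμint : Integrable (fun x => min (x ^ 2) x) μ)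
    (L : ℝ) (hL : 0 < L)
    (hexp : ∀ u : ℝ, u ≤ L → IntegrableOn (fun x => Real.exp (u * x)) (Set.Ici 1) μ)
    (hass : IntegrableOn (fun x => x * Real.exp (L * x)) (Set.Ici 1) μ)
    (G : ℝ → ℝ)
    (hG : G = fun w => -b * w + σ ^ 2 / 2 * w ^ 2 +
      (∫ x in Set.Ioi (0 : ℝ), (Real.exp (w * x) - 1 - w * x) ∂μ) + a * w + c) :
    (∀ u₁ : ℝ, u₁ ≤ L →
      ∃ v : ℝ → ℝ, v 0 = u₁ ∧
        (∀ t ∈ Set.Ici (0 : ℝ), HasDerivWithinAt v (G (v t)) (Set.Ici 0) t) ∧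
        (∀ t ∈ Set.Ici (0 : ℝ), v t ≤ L)) ↔
    G L ≤ 0 := by
  have hGf : ∀ w, G w = -b * w + σ ^ 2 / 2 * w ^ 2 +
      (∫ x in Set.Ioi (0 : ℝ), (Real.exp (w * x) - 1 - w * x) ∂μ) + a * w + c := by
    intro w; rw [hG]
  clear hG
  set Gf := G with hGfset
  have hsq := int_sq' hμint
  have hid := int_id' hμint
  have hone : IntegrableOn (fun _ : ℝ => (1 : ℝ)) (Set.Ici 1) μ := by
    refine (hexp 0 hL.le).congr_fun ?_ measurableSet_Ici
    intro x _; simp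
  have hexpL := hexp L le_rfl
  have hGcont : ContinuousOn Gf (Set.Iic L) :=
    G_cont' hL hsq hone hid hexpL hass b σ a c Gf hGf
  have hGlow : ∀ w, (a - b) * w + c ≤ Gf w := G_lower' b σ a c Gf hGf
  constructor
  · -- forward direction
    intro hall
    obtain ⟨v, hv0, hvd, hvle⟩ := hall L le_rfl
    have hd0 := hvd 0 Set.self_mem_Ici
    rw [hv0] at hd0
    rw [hasDerivWithinAt_iff_tendsto_slope] at hd0
    have hset : Set.Ici (0:ℝ) \ {0} = Set.Ioi 0 := by
      ext x
      simp only [Set.mem_diff, Set.mem_Ici, Set.mem_singleton_iff, Set.mem_Ioi]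
      constructor
      · rintro ⟨h1, h2⟩; exact lt_of_le_of_ne h1 (Ne.symm h2)
      · intro h
        refine ⟨h.le, fun he => ?_⟩
        rw [he] at h; exact lt_irrefl 0 h
    rw [hset] at hd0
    refine le_of_tendsto hd0 ?_
    filter_upwards [self_mem_nhdsWithin] with t ht
    simp only [Set.mem_Ioi] at ht
    have hle := hvle t (Set.mem_Ici.mpr ht.le)
    rw [slope_def_field, hv0, sub_zero]
    exact div_nonpos_iff.mpr (Or.inr ⟨by linarith, ht.le⟩)
  · -- backward direction
    intro hGL u₁ hu₁L
    rcases lt_trichotomy (Gf u₁) 0 with hneg | hzero | hpos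
    · -- decreasing case
      by_cases hS : ∃ w, w ≤ u₁ ∧ 0 ≤ Gf w
      ·
        obtain ⟨w₀, hw₀u, hw₀G⟩ := hS
        have hIccL : Set.Icc w₀ u₁ ⊆ Set.Iic L := fun x hx => Set.mem_Iic.mpr (le_trans hx.2 hu₁L)
        have hclosed : IsClosed (Set.Icc w₀ u₁ ∩ Gf ⁻¹' Set.Ici 0) :=
          (hGcont.mono hIccL).preimage_isClosed_of_isClosed isClosed_Icc isClosed_Ici
        have hne : (Set.Icc w₀ u₁ ∩ Gf ⁻¹' Set.Ici 0).Nonempty := ⟨w₀, ⟨le_rfl, hw₀u⟩, hw₀G⟩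
        have hbdd : BddAbove (Set.Icc w₀ u₁ ∩ Gf ⁻¹' Set.Ici 0) :=
          (bddAbove_Icc (a := w₀) (b := u₁)).mono Set.inter_subset_left
        set z := sSup (Set.Icc w₀ u₁ ∩ Gf ⁻¹' Set.Ici 0) with hzdef
        have hzS : z ∈ Set.Icc w₀ u₁ ∩ Gf ⁻¹' Set.Ici 0 := hclosed.csSup_mem hne hbdd
        have hw₀z : w₀ ≤ z := hzS.1.1
        have hzu : z ≤ u₁ := hzS.1.2
        have hzG : (0:ℝ) ≤ Gf z := hzS.2
        have hzlt : z < u₁ := by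
          rcases lt_or_eq_of_le hzu with h | h
          · exact h
          · exact absurd hzG (by rw [h]; exact not_le.mpr hneg)
        have hnegI : ∀ w ∈ Set.Ioc z u₁, Gf w < 0 := by
          intro w hw
          by_contra hcon
          push_neg at hcon
          have hwS : w ∈ Set.Icc w₀ u₁ ∩ Gf ⁻¹' Set.Ici 0 :=
            ⟨⟨le_trans hw₀z hw.1.le, hw.2⟩, hcon⟩
          exact absurd (le_csSup hbdd hwS) (not_le.mpr hw.1)
        have hzL : z ≤ L := le_trans hzu hu₁L
        have hz0 : Gf z = 0 := by
          refine le_antisymm ?_ hzG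
          have hczw : ContinuousWithinAt Gf (Set.Ioo z u₁) z :=
            (hGcont z (Set.mem_Iic.mpr hzL)).mono
              (fun x hx => Set.mem_Iic.mpr (le_trans hx.2.le hu₁L))
          haveI : (𝓝[Set.Ioo z u₁] z).NeBot := left_nhdsWithin_Ioo_neBot hzlt
          refine le_of_tendsto hczw ?_
          filter_upwards [self_mem_nhdsWithin] with x hx
          exact (hnegI x ⟨hx.1, hx.2.le⟩).le
        set R := |z| + |u₁| + L + 1 with hRdef
        have hR0 : 0 < R := by positivity
        have hLR : L ≤ R := by nlinarith [abs_nonneg z, abs_nonneg u₁]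
        obtain ⟨K, hK0, hK⟩ := G_lip' hL hLR hsq hone hid hexpL hass b σ a c Gf hGf
        have hmemIcc : ∀ s, z ≤ s → s ≤ u₁ → s ∈ Set.Icc (-R) L := by
          intro s h1 h2
          refine ⟨?_, le_trans h2 hu₁L⟩
          nlinarith [neg_abs_le z, abs_nonneg u₁]
        have hgc : Continuous (fun w => Gf (min w u₁)) := by
          have h1 : ContinuousOn Gf (Set.Iic u₁) :=
            hGcont.mono (fun x hx => Set.mem_Iic.mpr (le_trans (Set.mem_Iic.mp hx) hu₁L))
          exact h1.comp_continuous (continuous_id.min continuous_const)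
            (fun x => Set.mem_Iic.mpr (min_le_right x u₁))
        have hgneg : ∀ w, w ∈ Set.Ioc z u₁ ∪ Set.Ici u₁ → (fun w => Gf (min w u₁)) w < 0 := by
          rintro w (hw | hw)
          · simp only []
            rw [min_eq_left hw.2]
            exact hnegI w hw
          · simp only []
            rw [min_eq_right (Set.mem_Ici.mp hw)]
            exact hneg
        have hunb : ∀ T : ℝ, ∃ w ∈ Set.Ioc z u₁,
            T ≤ ∫ s in w..u₁, (-((fun w => Gf (min w u₁)) s))⁻¹ := by
          intro T
          set E := K * (|T| + 1) with hEdef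
          set w := z + (u₁ - z) * Real.exp (-E) with hwdef
          have hzu' : 0 < u₁ - z := by linarith
          have hexp1 : Real.exp (-E) ≤ 1 :=
            Real.exp_le_one_iff.mpr (by nlinarith [abs_nonneg T])
          have hwz : z < w := by nlinarith [mul_pos hzu' (Real.exp_pos (-E))]
          have hwu : w ≤ u₁ := by nlinarith [mul_le_of_le_one_right hzu'.le hexp1]
          refine ⟨w, ⟨hwz, hwu⟩, ?_⟩
          have hgs : ∀ s ∈ Set.Icc w u₁, 0 < -Gf (min s u₁) ∧ -Gf (min s u₁) ≤ K * (s - z) := by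
            intro s hs
            have hzs : z < s := lt_of_lt_of_le hwz hs.1
            rw [min_eq_left hs.2]
            refine ⟨by linarith [hnegI s ⟨hzs, hs.2⟩], ?_⟩
            have hlip := hK s (hmemIcc s hzs.le hs.2) z (hmemIcc z le_rfl hzu)
            rw [hz0, sub_zero, abs_of_nonneg (by linarith : (0:ℝ) ≤ s - z)] at hlip
            calc -Gf s ≤ |Gf s| := neg_le_abs _
              _ ≤ K * (s - z) := hlip
          have hcg : ContinuousOn (fun s => (-((fun w => Gf (min w u₁)) s))⁻¹)
              (Set.uIcc w u₁) := by
            rw [Set.uIcc_of_le hwu]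
            exact (hgc.neg.continuousOn).inv₀ (fun s hs => ne_of_gt (hgs s hs).1)
          have hi1 : IntervalIntegrable (fun s => (-((fun w => Gf (min w u₁)) s))⁻¹) volume w u₁ :=
            hcg.intervalIntegrable
          have hcg2 : ContinuousOn (fun s => (K * (s - z))⁻¹) (Set.uIcc w u₁) := by
            rw [Set.uIcc_of_le hwu]
            apply ContinuousOn.inv₀
            · exact (continuous_const.mul (continuous_id.sub continuous_const)).continuousOn
            · intro s hs
              exact ne_of_gt (mul_pos hK0 (by linarith [lt_of_lt_of_le hwz hs.1]))
          have hmono : (∫ s in w..u₁, (K * (s - z))⁻¹) ≤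
              ∫ s in w..u₁, (-((fun w => Gf (min w u₁)) s))⁻¹ := by
            apply intervalIntegral.integral_mono_on hwu hcg2.intervalIntegrable hi1
            intro s hs
            exact inv_anti₀ (hgs s hs).1 (hgs s hs).2
          have hcomp : (∫ s in w..u₁, (K * (s - z))⁻¹) = |T| + 1 := by
            have h1 : ∀ s : ℝ, (K * (s - z))⁻¹ = K⁻¹ * (s - z)⁻¹ := fun s => by rw [mul_inv]
            simp_rw [h1]
            rw [intervalIntegral.integral_const_mul]
            have h2 : (∫ s in w..u₁, (s - z)⁻¹) = ∫ x in (w - z)..(u₁ - z), x⁻¹ :=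
              intervalIntegral.integral_comp_sub_right (fun x => x⁻¹) z
            rw [h2, integral_inv (Set.notMem_uIcc_of_lt (by linarith) (by linarith))]
            have h3 : w - z = (u₁ - z) * Real.exp (-E) := by rw [hwdef]; ring
            rw [h3]
            have h4 : (u₁ - z) / ((u₁ - z) * Real.exp (-E)) = Real.exp E := by
              rw [div_mul_eq_div_mul_one_div, div_self (ne_of_gt hzu'), one_mul, one_div,
                ← Real.exp_neg, neg_neg]
            rw [h4, Real.log_exp, hEdef, inv_mul_cancel_left₀ hK0.ne']
          linarith [le_abs_self T]
        obtain ⟨v, hv0, hvd, hvJ⟩ := core_ode_s9 (fun w => Gf (min w u₁)) u₁ (Set.Ioc z u₁)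
          ⟨hzlt, le_rfl⟩ (fun w hw => Set.mem_Iic.mpr hw.2) Set.ordConnected_Ioc
          (fun w hw => ⟨(z + w) / 2, ⟨by linarith [hw.1], by linarith [hw.1, hw.2]⟩,
            by linarith [hw.1]⟩)
          hgc hgneg hunb
        refine ⟨v, hv0, ?_, ?_⟩
        · intro t ht
          have h1 := hvd t (Set.mem_Ici.mp ht)
          have h2 := hvJ t (Set.mem_Ici.mp ht)
          rw [min_eq_left h2.2] at h1
          exact h1.hasDerivWithinAt
        · intro t ht
          exact le_trans (hvJ t (Set.mem_Ici.mp ht)).2 hu₁L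
      ·
        push_neg at hS
        set C := |b - a| + |c| + 1 with hCdef
        have hC0 : 0 < C := by positivity
        have hgc : Continuous (fun w => Gf (min w u₁)) := by
          have h1 : ContinuousOn Gf (Set.Iic u₁) :=
            hGcont.mono (fun x hx => Set.mem_Iic.mpr (le_trans (Set.mem_Iic.mp hx) hu₁L))
          exact h1.comp_continuous (continuous_id.min continuous_const)
            (fun x => Set.mem_Iic.mpr (min_le_right x u₁))
        have hgneg' : ∀ s : ℝ, Gf (min s u₁) < 0 := fun s => hS _ (min_le_right _ _)
        have hunb : ∀ T : ℝ, ∃ w ∈ Set.Iic u₁,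
            T ≤ ∫ s in w..u₁, (-((fun w => Gf (min w u₁)) s))⁻¹ := by
          intro T
          set u₀ := min u₁ 0 with hu₀def
          have hu₀0 : u₀ ≤ 0 := min_le_right _ _
          have hu₀1 : u₀ ≤ u₁ := min_le_left _ _
          set E := C * (|T| + 1) with hEdef
          set w := 1 - (1 - u₀) * Real.exp E with hwdef
          have h1u₀ : (0:ℝ) < 1 - u₀ := by linarith
          have hexpE : 1 ≤ Real.exp E := by
            rw [show (1:ℝ) = Real.exp 0 by simp]
            exact Real.exp_le_exp.mpr (by positivity)
          have hwu₀ : w ≤ u₀ := by nlinarith [mul_le_mul_of_nonneg_left hexpE h1u₀.le]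
          have hwu₁ : w ≤ u₁ := le_trans hwu₀ hu₀1
          refine ⟨w, Set.mem_Iic.mpr hwu₁, ?_⟩
          have hcg : Continuous (fun s => (-((fun w => Gf (min w u₁)) s))⁻¹) :=
            (hgc.neg).inv₀ (fun s => ne_of_gt (by simpa using neg_pos.mpr (hgneg' s)))
          have hi1 : ∀ x y : ℝ,
              IntervalIntegrable (fun s => (-((fun w => Gf (min w u₁)) s))⁻¹) volume x y :=
            fun x y => hcg.intervalIntegrable x y
          have hsplit : (∫ s in w..u₀, (-((fun w => Gf (min w u₁)) s))⁻¹) +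
              (∫ s in u₀..u₁, (-((fun w => Gf (min w u₁)) s))⁻¹) =
              ∫ s in w..u₁, (-((fun w => Gf (min w u₁)) s))⁻¹ :=
            intervalIntegral.integral_add_adjacent_intervals (hi1 _ _) (hi1 _ _)
          have hpos2 : 0 ≤ ∫ s in u₀..u₁, (-((fun w => Gf (min w u₁)) s))⁻¹ :=
            intervalIntegral.integral_nonneg hu₀1
              (fun s _ => le_of_lt (inv_pos.mpr (by linarith [hgneg' s])))
          have hbound : ∀ s ∈ Set.Icc w u₀,
              (C * (1 - s))⁻¹ ≤ (-((fun w => Gf (min w u₁)) s))⁻¹ := by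
            intro s hs
            have hs0 : s ≤ 0 := le_trans hs.2 hu₀0
            have hsu₁ : s ≤ u₁ := le_trans hs.2 hu₀1
            have hlb := hGlow s
            simp only []
            rw [min_eq_left hsu₁]
            apply inv_anti₀
            · linarith [hS s hsu₁]
            · have h1 : (b - a) * s ≤ |b - a| * (-s) := by
                calc (b - a) * s ≤ |(b - a) * s| := le_abs_self _
                  _ = |b - a| * |s| := abs_mul _ _
                  _ = |b - a| * (-s) := by rw [abs_of_nonpos hs0]
              have h2 : -c ≤ |c| := neg_le_abs c
              nlinarith [abs_nonneg (b - a), abs_nonneg c]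
          have hi2 : IntervalIntegrable (fun s => (C * (1 - s))⁻¹) volume w u₀ := by
            apply ContinuousOn.intervalIntegrable
            rw [Set.uIcc_of_le hwu₀]
            apply ContinuousOn.inv₀
            · exact (continuous_const.mul (continuous_const.sub continuous_id)).continuousOn
            · intro s hs
              exact ne_of_gt (mul_pos hC0 (by linarith [hs.2]))
          have hmono : (∫ s in w..u₀, (C * (1 - s))⁻¹) ≤
              ∫ s in w..u₀, (-((fun w => Gf (min w u₁)) s))⁻¹ :=
            intervalIntegral.integral_mono_on hwu₀ hi2 (hi1 _ _) hbound
          have hcomp : (∫ s in w..u₀, (C * (1 - s))⁻¹) = |T| + 1 := by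
            have h1 : ∀ s : ℝ, (C * (1 - s))⁻¹ = C⁻¹ * (1 - s)⁻¹ := fun s => by rw [mul_inv]
            simp_rw [h1]
            rw [intervalIntegral.integral_const_mul]
            have h2 : (∫ s in w..u₀, (1 - s)⁻¹) = ∫ x in (1 - u₀)..(1 - w), x⁻¹ :=
              intervalIntegral.integral_comp_sub_left (fun x => x⁻¹) 1
            rw [h2, integral_inv (Set.notMem_uIcc_of_lt (by linarith) (by linarith))]
            have h3 : 1 - w = (1 - u₀) * Real.exp E := by rw [hwdef]; ring
            rw [h3]
            have h4 : (1 - u₀) * Real.exp E / (1 - u₀) = Real.exp E := by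
              rw [mul_comm, mul_div_assoc, div_self (ne_of_gt h1u₀), mul_one]
            rw [h4, Real.log_exp, hEdef, inv_mul_cancel_left₀ hC0.ne']
          linarith [le_abs_self T]
        obtain ⟨v, hv0, hvd, hvJ⟩ := core_ode_s9 (fun w => Gf (min w u₁)) u₁ (Set.Iic u₁)
          (Set.mem_Iic.mpr le_rfl) (fun w hw => hw) Set.ordConnected_Iic
          (fun w hw => ⟨w - 1, Set.mem_Iic.mpr (by linarith [Set.mem_Iic.mp hw]), by linarith⟩)
          hgc (fun w _ => hgneg' w) hunb
        refine ⟨v, hv0, ?_, ?_⟩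
        · intro t ht
          have h1 := hvd t (Set.mem_Ici.mp ht)
          have h2 := hvJ t (Set.mem_Ici.mp ht)
          rw [min_eq_left (Set.mem_Iic.mp h2)] at h1
          exact h1.hasDerivWithinAt
        · intro t ht
          exact le_trans (Set.mem_Iic.mp (hvJ t (Set.mem_Ici.mp ht))) hu₁L
    · -- equilibrium
      refine ⟨fun _ => u₁, rfl, fun t ht => ?_, fun t ht => hu₁L⟩
      simpa [hzero] using hasDerivWithinAt_const t (Set.Ici (0:ℝ)) u₁
    · -- increasing case
      have hu₁lt : u₁ < L := by
        rcases lt_or_eq_of_le hu₁L with h | h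
        · exact h
        · exfalso; rw [h] at hpos; linarith
      have hclosed : IsClosed (Set.Icc u₁ L ∩ Gf ⁻¹' Set.Iic 0) :=
        (hGcont.mono (fun x hx => Set.mem_Iic.mpr hx.2)).preimage_isClosed_of_isClosed
          isClosed_Icc isClosed_Iic
      have hne : (Set.Icc u₁ L ∩ Gf ⁻¹' Set.Iic 0).Nonempty := ⟨L, ⟨hu₁L, le_rfl⟩, hGL⟩
      have hbdd : BddBelow (Set.Icc u₁ L ∩ Gf ⁻¹' Set.Iic 0) :=
        (bddBelow_Icc).mono Set.inter_subset_left
      set z := sInf (Set.Icc u₁ L ∩ Gf ⁻¹' Set.Iic 0) with hzdef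
      have hzS : z ∈ Set.Icc u₁ L ∩ Gf ⁻¹' Set.Iic 0 := hclosed.csInf_mem hne hbdd
      have hu₁z : u₁ ≤ z := hzS.1.1
      have hzL : z ≤ L := hzS.1.2
      have hzG : Gf z ≤ 0 := hzS.2
      have hzgt : u₁ < z := by
        rcases lt_or_eq_of_le hu₁z with h | h
        · exact h
        · exact absurd hzG (by rw [← h]; exact not_le.mpr hpos)
      have hposI : ∀ w ∈ Set.Ico u₁ z, 0 < Gf w := by
        intro w hw
        by_contra hcon
        push_neg at hcon
        have hwS : w ∈ Set.Icc u₁ L ∩ Gf ⁻¹' Set.Iic 0 :=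
          ⟨⟨hw.1, le_trans hw.2.le hzL⟩, hcon⟩
        exact absurd (csInf_le hbdd hwS) (not_le.mpr hw.2)
      have hz0 : Gf z = 0 := by
        refine le_antisymm hzG ?_
        have hczw : ContinuousWithinAt Gf (Set.Ioo u₁ z) z :=
          (hGcont z (Set.mem_Iic.mpr hzL)).mono
            (fun x hx => Set.mem_Iic.mpr (le_trans hx.2.le hzL))
        haveI : (𝓝[Set.Ioo u₁ z] z).NeBot := right_nhdsWithin_Ioo_neBot hzgt
        refine ge_of_tendsto hczw ?_
        filter_upwards [self_mem_nhdsWithin] with x hx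
        exact (hposI x ⟨hx.1.le, hx.2⟩).le
      set R := |u₁| + L + 1 with hRdef
      have hR0 : 0 < R := by positivity
      have hLR : L ≤ R := by nlinarith [abs_nonneg u₁]
      obtain ⟨K, hK0, hK⟩ := G_lip' hL hLR hsq hone hid hexpL hass b σ a c Gf hGf
      have hmemIcc : ∀ s, u₁ ≤ s → s ≤ z → s ∈ Set.Icc (-R) L := by
        intro s h1 h2
        refine ⟨?_, le_trans h2 hzL⟩
        nlinarith [neg_abs_le u₁]
      have hgc : Continuous (fun w : ℝ => -Gf (min (max (-w) u₁) z)) := by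
        have h1 : ContinuousOn Gf (Set.Icc u₁ z) :=
          hGcont.mono (fun x hx => Set.mem_Iic.mpr (le_trans hx.2 hzL))
        have h2 : Continuous (fun w : ℝ => min (max (-w) u₁) z) :=
          (continuous_neg.max continuous_const).min continuous_const
        have h3 : ∀ w : ℝ, min (max (-w) u₁) z ∈ Set.Icc u₁ z :=
          fun w => ⟨le_min (le_max_right _ _) hu₁z, min_le_right _ _⟩
        exact (h1.comp_continuous h2 h3).neg
      have hgneg : ∀ w, w ∈ Set.Ioc (-z) (-u₁) ∪ Set.Ici (-u₁) →
          (fun w : ℝ => -Gf (min (max (-w) u₁) z)) w < 0 := by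
        rintro w (hw | hw)
        · have h1 : u₁ ≤ -w := by linarith [hw.2]
          have h2 : -w < z := by linarith [hw.1]
          simp only []
          rw [max_eq_left h1, min_eq_left h2.le]
          linarith [hposI (-w) ⟨h1, h2⟩]
        · have h1 : -w ≤ u₁ := by linarith [Set.mem_Ici.mp hw]
          simp only []
          rw [max_eq_right h1, min_eq_left hu₁z]
          linarith
      have hunb : ∀ T : ℝ, ∃ w ∈ Set.Ioc (-z) (-u₁),
          T ≤ ∫ s in w..(-u₁), (-((fun w : ℝ => -Gf (min (max (-w) u₁) z)) s))⁻¹ := by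
        intro T
        set E := K * (|T| + 1) with hEdef
        set w := -z + (z - u₁) * Real.exp (-E) with hwdef
        have hzu' : 0 < z - u₁ := by linarith
        have hexp1 : Real.exp (-E) ≤ 1 :=
          Real.exp_le_one_iff.mpr (by nlinarith [abs_nonneg T])
        have hwz : -z < w := by nlinarith [mul_pos hzu' (Real.exp_pos (-E))]
        have hwu : w ≤ -u₁ := by nlinarith [mul_le_of_le_one_right hzu'.le hexp1]
        refine ⟨w, ⟨hwz, hwu⟩, ?_⟩
        have hgs : ∀ s ∈ Set.Icc w (-u₁),
            0 < -(-Gf (min (max (-s) u₁) z)) ∧ -(-Gf (min (max (-s) u₁) z)) ≤ K * (z + s) := by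
          intro s hs
          have h1 : u₁ ≤ -s := by linarith [hs.2]
          have h2 : -s < z := by linarith [lt_of_lt_of_le hwz hs.1]
          rw [max_eq_left h1, min_eq_left h2.le, neg_neg]
          refine ⟨hposI (-s) ⟨h1, h2⟩, ?_⟩
          have hlip := hK (-s) (hmemIcc (-s) h1 h2.le) z (hmemIcc z hu₁z le_rfl)
          rw [hz0, sub_zero] at hlip
          have habs : |(-s) - z| = z + s := by
            rw [abs_of_nonpos (by linarith : (-s) - z ≤ 0)]; ring
          rw [habs] at hlip
          calc Gf (-s) ≤ |Gf (-s)| := le_abs_self _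
            _ ≤ K * (z + s) := hlip
        have hcg : ContinuousOn
            (fun s => (-((fun w : ℝ => -Gf (min (max (-w) u₁) z)) s))⁻¹)
            (Set.uIcc w (-u₁)) := by
          rw [Set.uIcc_of_le hwu]
          exact (hgc.neg.continuousOn).inv₀ (fun s hs => ne_of_gt (hgs s hs).1)
        have hi1 : IntervalIntegrable
            (fun s => (-((fun w : ℝ => -Gf (min (max (-w) u₁) z)) s))⁻¹) volume w (-u₁) :=
          hcg.intervalIntegrable
        have hcg2 : ContinuousOn (fun s => (K * (z + s))⁻¹) (Set.uIcc w (-u₁)) := by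
          rw [Set.uIcc_of_le hwu]
          apply ContinuousOn.inv₀
          · exact (continuous_const.mul (continuous_const.add continuous_id)).continuousOn
          · intro s hs
            exact ne_of_gt (mul_pos hK0 (by linarith [lt_of_lt_of_le hwz hs.1]))
        have hmono : (∫ s in w..(-u₁), (K * (z + s))⁻¹) ≤
            ∫ s in w..(-u₁), (-((fun w : ℝ => -Gf (min (max (-w) u₁) z)) s))⁻¹ := by
          apply intervalIntegral.integral_mono_on hwu hcg2.intervalIntegrable hi1
          intro s hs
          exact inv_anti₀ (hgs s hs).1 (hgs s hs).2
        have hcomp : (∫ s in w..(-u₁), (K * (z + s))⁻¹) = |T| + 1 := by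
          have h1 : ∀ s : ℝ, (K * (z + s))⁻¹ = K⁻¹ * (z + s)⁻¹ := fun s => by rw [mul_inv]
          simp_rw [h1]
          rw [intervalIntegral.integral_const_mul]
          have h2 : (∫ s in w..(-u₁), (z + s)⁻¹) = ∫ x in (z + w)..(z + -u₁), x⁻¹ :=
            intervalIntegral.integral_comp_add_left (fun x => x⁻¹) z
          rw [h2, integral_inv (Set.notMem_uIcc_of_lt (by linarith) (by linarith))]
          have h3 : z + w = (z - u₁) * Real.exp (-E) := by rw [hwdef]; ring
          have h4 : z + -u₁ = z - u₁ := by ring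
          rw [h3, h4]
          have h5 : (z - u₁) / ((z - u₁) * Real.exp (-E)) = Real.exp E := by
            rw [div_mul_eq_div_mul_one_div, div_self (ne_of_gt hzu'), one_mul, one_div,
              ← Real.exp_neg, neg_neg]
          rw [h5, Real.log_exp, hEdef, inv_mul_cancel_left₀ hK0.ne']
        linarith [le_abs_self T]
      obtain ⟨vh, hvh0, hvhd, hvhJ⟩ := core_ode_s9 (fun w : ℝ => -Gf (min (max (-w) u₁) z))
        (-u₁) (Set.Ioc (-z) (-u₁))
        ⟨by linarith, le_rfl⟩ (fun w hw => Set.mem_Iic.mpr hw.2) Set.ordConnected_Ioc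
        (fun w hw => ⟨(-z + w) / 2, ⟨by linarith [hw.1], by linarith [hw.1, hw.2]⟩,
          by linarith [hw.1]⟩)
        hgc hgneg hunb
      refine ⟨fun t => -vh t, by show -vh 0 = u₁; rw [hvh0]; ring, ?_, ?_⟩
      · intro t ht
        have h1 := (hvhd t (Set.mem_Ici.mp ht)).neg
        have h2 := hvhJ t (Set.mem_Ici.mp ht)
        have h3 : u₁ ≤ -vh t := by linarith [h2.2]
        have h4 : -vh t < z := by linarith [h2.1]
        rw [max_eq_left h3, min_eq_left h4.le, neg_neg] at h1
        exact h1.hasDerivWithinAt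
      · intro t ht
        have h2 := hvhJ t (Set.mem_Ici.mp ht)
        have h4 : -vh t < z := by linarith [h2.1]
        show -vh t ≤ L
        linarith
end

section
/- (Proposition 3.7 in Riccati form: asymptotic behavior in the strictly subcritical case.) Assume additionally b > 0 and (σ > 0 or a < b), so that G(x) → +∞ as x → −∞, and suppose there exists x* ∈ ℝ with 0 ≤ x* ≤ L and G(x*) ≤ 0. Define ξ := 0 if G(0) = 0, and ξ := inf{x ∈ ℝ : x ≤ L and G(x) ≤ 0} otherwise. Then ξ is a finite real number with ξ ≤ L and G(ξ) = 0; every differentiable v : [0,∞) → ℝ with v(0) = 0, v′(t) = G(v(t)) and v(t) ≤ L for all t ≥ 0 satisfies v(t) → ξ as t → ∞; and for every β ≥ 0 and every Borel measure ν on (0,∞) with ∫ min(x,1) ν(dx) < ∞ and ∫_{[1,∞)} e^{u·x} ν(dx) < ∞ for all real u ≤ L, setting Ψ(u) := β·u + ∫_{(0,∞)} (e^{u·x} − 1) ν(dx), one has (1/t)·∫_0^t Ψ(v(s)) ds → Ψ(ξ) as t → ∞. -/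
open MeasureTheory Real Set Filter
open scoped Topology

namespace S10

lemma exp_ineq0 (y : ℝ) : 0 ≤ Real.exp y - 1 - y := by
  nlinarith [Real.add_one_le_exp y]

lemma exp_ineq4 (y : ℝ) (hy : 0 ≤ y) : Real.exp y - 1 ≤ y * Real.exp y := by
  have h := Real.add_one_le_exp (-y)
  rw [Real.exp_neg] at h
  have hp := Real.exp_pos y
  have := mul_le_mul_of_nonneg_right h hp.le
  rw [inv_mul_cancel₀ hp.ne'] at this
  nlinarith

lemma exp_ineq2 (y : ℝ) (hy : y ≤ 0) : Real.exp y - 1 - y ≤ y ^ 2 := by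
  set f : ℝ → ℝ := fun y => 1 + y + y ^ 2 - Real.exp y with hf
  have hder : ∀ x : ℝ, x ≤ 0 → HasDerivAt f (1 + 2 * x - Real.exp x) x := by
    intro x _
    have : HasDerivAt f (0 + 1 + 2 * x ^ 1 - Real.exp x) x := by
      exact (((hasDerivAt_const x (1:ℝ)).add (hasDerivAt_id x)).add
        ((hasDerivAt_pow 2 x).congr_deriv (by ring))).sub (Real.hasDerivAt_exp x)
    simpa using this
  have hanti : AntitoneOn f (Iic 0) := by
    apply antitoneOn_of_hasDerivWithinAt_nonpos (convex_Iic 0)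
      (fun x hx => ((hder x hx).continuousAt).continuousWithinAt)
      (fun x hx => ((hder x (le_of_lt (by simpa using hx))).hasDerivWithinAt))
    intro x hx
    have hx0 : x < 0 := by simpa using hx
    nlinarith [Real.add_one_le_exp x]
  have := hanti (by simpa using hy) (by simp) hy
  simp only [hf] at this
  simp only [Real.exp_zero] at this
  nlinarith

lemma exp_ineq3 (y : ℝ) (hy : 0 ≤ y) : Real.exp y - 1 - y ≤ y ^ 2 * Real.exp y := by
  set g : ℝ → ℝ := fun y => y ^ 2 * Real.exp y - Real.exp y + 1 + y with hg
  have hder : ∀ x : ℝ, HasDerivAt g (2 * x * Real.exp x + x ^ 2 * Real.exp x - Real.exp x + 1) x := by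
    intro x
    have h1 : HasDerivAt (fun y : ℝ => y ^ 2 * Real.exp y)
        (2 * x * Real.exp x + x ^ 2 * Real.exp x) x := by
      have := ((hasDerivAt_pow 2 x).mul (Real.hasDerivAt_exp x))
      exact this.congr_deriv (by norm_num <;> ring)
    exact ((h1.sub (Real.hasDerivAt_exp x)).add_const 1).add
      ((hasDerivAt_id x))
  have hmono : MonotoneOn g (Ici 0) := by
    apply monotoneOn_of_hasDerivWithinAt_nonneg (convex_Ici 0)
      (fun x _ => (hder x).continuousAt.continuousWithinAt)
      (fun x _ => (hder x).hasDerivWithinAt)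
    intro x hx
    have hx0 : 0 < x := by simpa using hx
    nlinarith [exp_ineq4 x hx0.le, Real.exp_pos x]
  have := hmono (by simp : (0:ℝ) ∈ Ici 0) (by simpa using hy) hy
  simp only [hg, Real.exp_zero] at this
  nlinarith

lemma exp_ineq5 (y : ℝ) (hy : y ≤ 0) : |Real.exp y - 1| ≤ -y := by
  rw [abs_of_nonpos (by nlinarith [Real.exp_le_exp.2 hy, Real.exp_zero] : Real.exp y - 1 ≤ 0)]
  nlinarith [Real.add_one_le_exp y]

/-- quadratic bound on small x -/
lemma bound_small {M w x : ℝ} (hw : |w| ≤ M) (hx : 0 < x) (hx1 : x ≤ 1) :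
    Real.exp (w * x) - 1 - w * x ≤ M ^ 2 * Real.exp M * x ^ 2 := by
  have hM : 0 ≤ M := le_trans (abs_nonneg w) hw
  have hyM : |w * x| ≤ M := by
    rw [abs_mul, abs_of_pos hx]
    calc |w| * x ≤ M * 1 := mul_le_mul hw hx1 hx.le hM
    _ = M := by ring
  have h1 : Real.exp M ≥ 1 := by
    rw [show (1:ℝ) = Real.exp 0 by simp]; exact Real.exp_le_exp.2 hM
  have hww : w ^ 2 ≤ M ^ 2 := by nlinarith [sq_abs w, mul_le_mul hw hw (abs_nonneg w) hM]
  have h2 : (w * x) ^ 2 ≤ M ^ 2 * x ^ 2 := by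
    calc (w * x) ^ 2 = w ^ 2 * x ^ 2 := by ring
    _ ≤ M ^ 2 * x ^ 2 := mul_le_mul_of_nonneg_right hww (sq_nonneg x)
  rcases le_or_gt (w * x) 0 with h | h
  · have := exp_ineq2 (w * x) h
    nlinarith [sq_nonneg (w*x)]
  · have := exp_ineq3 (w * x) h.le
    have hew : Real.exp (w * x) ≤ Real.exp M := Real.exp_le_exp.2 (le_trans (le_abs_self _) hyM)
    nlinarith [sq_nonneg (w * x), Real.exp_pos (w * x)]

/-- linear bound on small x for exp - 1 -/
lemma bound_small' {M w x : ℝ} (hw : |w| ≤ M) (hx : 0 < x) (hx1 : x ≤ 1) :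
    |Real.exp (w * x) - 1| ≤ M * Real.exp M * x := by
  have hM : 0 ≤ M := le_trans (abs_nonneg w) hw
  have h1 : (1:ℝ) ≤ Real.exp M := by
    rw [show (1:ℝ) = Real.exp 0 by simp]; exact Real.exp_le_exp.2 hM
  have hwx : |w * x| ≤ M * x := by
    rw [abs_mul, abs_of_pos hx]
    exact mul_le_mul_of_nonneg_right hw hx.le
  rcases le_or_gt (w * x) 0 with h | h
  · have := exp_ineq5 (w * x) h
    rw [← abs_of_nonpos h] at this
    calc |Real.exp (w*x) - 1| ≤ M * x := this.trans hwx
    _ ≤ M * Real.exp M * x := by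
      nlinarith [mul_nonneg (mul_nonneg hM hx.le) (sub_nonneg.2 h1)]
  · have h4 := exp_ineq4 (w * x) h.le
    have hyM : w * x ≤ M := le_trans (le_abs_self _) (hwx.trans (by nlinarith))
    have hew : Real.exp (w * x) ≤ Real.exp M := Real.exp_le_exp.2 hyM
    rw [abs_of_nonneg (by nlinarith [Real.add_one_le_exp (w*x)] : (0:ℝ) ≤ Real.exp (w*x) - 1)]
    calc Real.exp (w*x) - 1 ≤ (w*x) * Real.exp (w*x) := h4
    _ ≤ (M * x) * Real.exp M := by nlinarith [Real.exp_pos (w*x), le_trans (le_abs_self _) hwx]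
    _ = M * Real.exp M * x := by ring




section Mu
variable {μ : Measure ℝ} {L : EReal}

lemma int_sq (hμint : Integrable (fun x => min (x ^ 2) x) μ) :
    IntegrableOn (fun x => x ^ 2) (Ioo 0 1) μ := by
  refine (hμint.restrict (s := Ioo 0 1)).mono
    (continuous_pow 2).aestronglyMeasurable ?_
  rw [ae_restrict_iff' measurableSet_Ioo]
  refine ae_of_all _ fun x hx => ?_
  obtain ⟨h0, h1⟩ := hx
  have : min (x ^ 2) x = x ^ 2 := min_eq_left (by nlinarith)
  simp [this]

lemma int_x (hμint : Integrable (fun x => min (x ^ 2) x) μ) :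
    IntegrableOn (fun x => x) (Ici 1) μ := by
  refine (hμint.restrict (s := Ici 1)).mono continuous_id.aestronglyMeasurable ?_
  rw [ae_restrict_iff' measurableSet_Ici]
  refine ae_of_all _ fun x hx => ?_
  have h1 : (1:ℝ) ≤ x := hx
  have : min (x ^ 2) x = x := min_eq_right (by nlinarith)
  rw [this]

lemma meas_Ici (hμint : Integrable (fun x => min (x ^ 2) x) μ) : μ (Ici 1) < ⊤ := by
  refine lt_of_le_of_lt (measure_mono ?_) (hμint.measure_ge_lt_top one_pos)
  intro x hx
  have h1 : (1:ℝ) ≤ x := hx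
  have : min (x ^ 2) x = x := min_eq_right (by nlinarith)
  simp only [mem_setOf_eq, this]; exact h1

lemma int_const (hμint : Integrable (fun x => min (x ^ 2) x) μ) :
    IntegrableOn (fun _ => (1:ℝ)) (Ici 1) μ :=
  integrableOn_const (meas_Ici hμint).ne

lemma integrableOn_F (hμint : Integrable (fun x => min (x ^ 2) x) μ)
    (hexp : ∀ u : ℝ, (u : EReal) ≤ L →
      IntegrableOn (fun x => Real.exp (u * x)) (Set.Ici 1) μ)
    {w : ℝ} (hw : (w : EReal) ≤ L) :
    IntegrableOn (fun x => Real.exp (w * x) - 1 - w * x) (Ioi 0) μ := by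
  have hset : Ioo (0:ℝ) 1 ∪ Ici 1 = Ioi 0 := Ioo_union_Ici_eq_Ioi zero_lt_one
  rw [← hset]
  refine IntegrableOn.union ?_ ?_
  · refine Integrable.mono' ((int_sq hμint).const_mul (|w| ^ 2 * Real.exp |w|))
      (Continuous.aestronglyMeasurable (by fun_prop)) ?_
    rw [ae_restrict_iff' measurableSet_Ioo]
    refine ae_of_all _ fun x hx => ?_
    rw [norm_eq_abs, abs_of_nonneg (exp_ineq0 _)]
    exact bound_small le_rfl hx.1 hx.2.le
  · refine Integrable.mono' (((hexp w hw).add (int_const hμint)).add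
      ((int_x hμint).const_mul (|w|)))
      (Continuous.aestronglyMeasurable (by fun_prop)) ?_
    rw [ae_restrict_iff' measurableSet_Ici]
    refine ae_of_all _ fun x hx => ?_
    have h1 : (1:ℝ) ≤ x := hx
    have habs : -(w * x) ≤ |w| * x := by
      calc -(w*x) ≤ |w * x| := neg_le_abs _
      _ = |w| * x := by rw [abs_mul, abs_of_pos (show (0:ℝ) < x by linarith)]
    rw [norm_eq_abs, abs_of_nonneg (exp_ineq0 _)]
    simp only [Pi.add_apply]
    nlinarith [Real.exp_pos (w * x)]

lemma integral_F_nonneg (w : ℝ) :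
    0 ≤ ∫ x in Ioi (0:ℝ), (Real.exp (w * x) - 1 - w * x) ∂μ :=
  integral_nonneg fun x => exp_ineq0 _

lemma continuousOn_integral_F (hμint : Integrable (fun x => min (x ^ 2) x) μ)
    (hexp : ∀ u : ℝ, (u : EReal) ≤ L →
      IntegrableOn (fun x => Real.exp (u * x)) (Set.Ici 1) μ)
    {u₀ : ℝ} (hu₀ : (u₀ : EReal) ≤ L) :
    ContinuousOn (fun w => ∫ x in Ioi (0:ℝ), (Real.exp (w * x) - 1 - w * x) ∂μ)
      (Iic u₀) := by
  intro w₀ hw₀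
  set M := |w₀| + 1 + |u₀| with hM
  have hM0 : 0 ≤ M := by positivity
  set bound : ℝ → ℝ :=
    fun x => if x < 1 then M ^ 2 * Real.exp M * x ^ 2 else Real.exp (u₀ * x) + 1 + M * x
    with hbound
  apply continuousWithinAt_of_dominated (bound := bound)
  · exact Eventually.of_forall fun w => Continuous.aestronglyMeasurable (by fun_prop)
  · filter_upwards [self_mem_nhdsWithin,
      mem_nhdsWithin_of_mem_nhds (Ioo_mem_nhds (by linarith : w₀ - 1 < w₀)
        (by linarith : w₀ < w₀ + 1))] with w hw1 hw2
    have hwM : |w| ≤ M := by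
      rw [abs_le]; rw [mem_Ioo] at hw2
      constructor <;> [nlinarith [abs_nonneg w₀, abs_nonneg u₀, neg_abs_le w₀];
        nlinarith [abs_nonneg w₀, abs_nonneg u₀, le_abs_self w₀]]
    have hwu : w ≤ u₀ := hw1
    rw [ae_restrict_iff' measurableSet_Ioi]
    refine ae_of_all _ fun x hx => ?_
    have hx0 : (0:ℝ) < x := hx
    rw [norm_eq_abs, abs_of_nonneg (exp_ineq0 _), hbound]
    by_cases hx1 : x < 1
    · simp only [hbound, if_pos hx1]
      exact bound_small hwM hx0 hx1.le
    · simp only [hbound, if_neg hx1]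
      push_neg at hx1
      have habs : -(w * x) ≤ M * x := by
        calc -(w*x) ≤ |w * x| := neg_le_abs _
        _ = |w| * x := by rw [abs_mul, abs_of_pos hx0]
        _ ≤ M * x := mul_le_mul_of_nonneg_right hwM hx0.le
      have hew : Real.exp (w * x) ≤ Real.exp (u₀ * x) :=
        Real.exp_le_exp.2 (mul_le_mul_of_nonneg_right hwu hx0.le)
      nlinarith [Real.exp_pos (w * x)]
  · -- integrability of the bound
    have hsplit : Ioo (0:ℝ) 1 ∪ Ici 1 = Ioi 0 := Ioo_union_Ici_eq_Ioi zero_lt_one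
    rw [show (μ.restrict (Ioi (0:ℝ))) = μ.restrict (Ioo 0 1 ∪ Ici 1) by rw [hsplit]]
    rw [show Integrable bound (μ.restrict (Ioo 0 1 ∪ Ici 1)) = IntegrableOn bound (Ioo 0 1 ∪ Ici 1) μ from rfl]
    refine IntegrableOn.union ?_ ?_
    · refine Integrable.congr ((int_sq hμint).const_mul (M ^ 2 * Real.exp M)) ?_
      rw [EventuallyEq, ae_restrict_iff' measurableSet_Ioo]
      exact ae_of_all _ fun x hx => by simp only [hbound, if_pos hx.2]
    · refine Integrable.congr (((hexp u₀ hu₀).add (int_const hμint)).add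
        ((int_x hμint).const_mul M)) ?_
      rw [EventuallyEq, ae_restrict_iff' measurableSet_Ici]
      refine ae_of_all _ fun x hx => ?_
      have h1 : (1:ℝ) ≤ x := hx
      simp only [hbound, if_neg (show ¬ x < 1 by linarith), Pi.add_apply]
  · exact ae_of_all _ fun x => Continuous.continuousWithinAt (by fun_prop)

lemma convexOn_integral_F (hμint : Integrable (fun x => min (x ^ 2) x) μ)
    (hexp : ∀ u : ℝ, (u : EReal) ≤ L →
      IntegrableOn (fun x => Real.exp (u * x)) (Set.Ici 1) μ)
    {u₀ : ℝ} (hu₀ : (u₀ : EReal) ≤ L) :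
    ConvexOn ℝ (Iic u₀) (fun w => ∫ x in Ioi (0:ℝ), (Real.exp (w * x) - 1 - w * x) ∂μ) := by
  refine ⟨convex_Iic u₀, fun w₁ h₁ w₂ h₂ p q hp hq hpq => ?_⟩
  simp only [smul_eq_mul]
  have hw₁L : ((w₁:ℝ) : EReal) ≤ L := le_trans (EReal.coe_le_coe_iff.2 h₁) hu₀
  have hw₂L : ((w₂:ℝ) : EReal) ≤ L := le_trans (EReal.coe_le_coe_iff.2 h₂) hu₀
  have i₁ := integrableOn_F hμint hexp hw₁L
  have i₂ := integrableOn_F hμint hexp hw₂L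
  have hpt : ∀ x : ℝ, Real.exp ((p * w₁ + q * w₂) * x) - 1 - (p * w₁ + q * w₂) * x ≤
      p * (Real.exp (w₁ * x) - 1 - w₁ * x) + q * (Real.exp (w₂ * x) - 1 - w₂ * x) := by
    intro x
    have key := convexOn_exp.2 (mem_univ (w₁ * x)) (mem_univ (w₂ * x)) hp hq hpq
    simp only [smul_eq_mul] at key
    have : (p * w₁ + q * w₂) * x = p * (w₁ * x) + q * (w₂ * x) := by ring
    rw [this]
    nlinarith
  have hcombo : IntegrableOn
      (fun x => p * (Real.exp (w₁ * x) - 1 - w₁ * x) + q * (Real.exp (w₂ * x) - 1 - w₂ * x))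
      (Ioi 0) μ := (i₁.const_mul p).add (i₂.const_mul q)
  have hmid : IntegrableOn
      (fun x => Real.exp ((p * w₁ + q * w₂) * x) - 1 - (p * w₁ + q * w₂) * x) (Ioi 0) μ := by
    refine Integrable.mono' hcombo (Continuous.aestronglyMeasurable (by fun_prop)) ?_
    refine ae_of_all _ fun x => ?_
    rw [norm_eq_abs, abs_of_nonneg (exp_ineq0 _)]
    exact hpt x
  calc ∫ x in Ioi (0:ℝ), (Real.exp ((p * w₁ + q * w₂) * x) - 1 - (p * w₁ + q * w₂) * x) ∂μ
      ≤ ∫ x in Ioi (0:ℝ),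
        (p * (Real.exp (w₁ * x) - 1 - w₁ * x) + q * (Real.exp (w₂ * x) - 1 - w₂ * x)) ∂μ :=
        integral_mono hmid hcombo hpt
    _ = p * (∫ x in Ioi (0:ℝ), (Real.exp (w₁ * x) - 1 - w₁ * x) ∂μ) +
        q * (∫ x in Ioi (0:ℝ), (Real.exp (w₂ * x) - 1 - w₂ * x) ∂μ) := by
        rw [integral_add (i₁.const_mul p) (i₂.const_mul q), integral_const_mul,
          integral_const_mul]

end Mu

section Nu
variable {ν : Measure ℝ} {L : EReal}

lemma nu_int_x (hν : IntegrableOn (fun x => min x 1) (Ioi 0) ν) :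
    IntegrableOn (fun x => x) (Ioo 0 1) ν := by
  refine Integrable.mono (hν.mono_set Ioo_subset_Ioi_self) continuous_id.aestronglyMeasurable ?_
  rw [ae_restrict_iff' measurableSet_Ioo]
  refine ae_of_all _ fun x hx => ?_
  have : min x 1 = x := min_eq_left hx.2.le
  simp [this]

lemma nu_meas_Ici (hν : IntegrableOn (fun x => min x 1) (Ioi 0) ν) : ν (Ici 1) < ⊤ := by
  have h := (hν.measure_ge_lt_top one_pos)
  have hsub : Ici (1:ℝ) ⊆ {x | 1 ≤ min x 1} := by
    intro x hx
    have h1 : (1:ℝ) ≤ x := hx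
    simp only [mem_setOf_eq, min_eq_right h1, le_refl]
  have hmeas : (ν.restrict (Ioi 0)) (Ici 1) < ⊤ :=
    lt_of_le_of_lt (measure_mono hsub) h
  rw [Measure.restrict_apply measurableSet_Ici] at hmeas
  rwa [show Ici (1:ℝ) ∩ Ioi 0 = Ici 1 from inter_eq_self_of_subset_left
    (fun x (hx : x ∈ Ici (1:ℝ)) => mem_Ioi.2 (lt_of_lt_of_le one_pos hx))] at hmeas

lemma nu_int_const (hν : IntegrableOn (fun x => min x 1) (Ioi 0) ν) :
    IntegrableOn (fun _ => (1:ℝ)) (Ici 1) ν :=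
  integrableOn_const (nu_meas_Ici hν).ne

lemma integrableOn_expm1 (hν : IntegrableOn (fun x => min x 1) (Ioi 0) ν)
    (hνexp : ∀ u : ℝ, (u : EReal) ≤ L →
      IntegrableOn (fun x => Real.exp (u * x)) (Set.Ici 1) ν)
    {w : ℝ} (hw : (w : EReal) ≤ L) :
    IntegrableOn (fun x => Real.exp (w * x) - 1) (Ioi 0) ν := by
  have hset : Ioo (0:ℝ) 1 ∪ Ici 1 = Ioi 0 := Ioo_union_Ici_eq_Ioi zero_lt_one
  rw [← hset]
  refine IntegrableOn.union ?_ ?_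
  · refine Integrable.mono' ((nu_int_x hν).const_mul (|w| * Real.exp |w|))
      (Continuous.aestronglyMeasurable (by fun_prop)) ?_
    rw [ae_restrict_iff' measurableSet_Ioo]
    refine ae_of_all _ fun x hx => ?_
    rw [norm_eq_abs]
    exact bound_small' le_rfl hx.1 hx.2.le
  · refine Integrable.mono' ((hνexp w hw).add (nu_int_const hν))
      (Continuous.aestronglyMeasurable (by fun_prop)) ?_
    rw [ae_restrict_iff' measurableSet_Ici]
    refine ae_of_all _ fun x hx => ?_
    rw [norm_eq_abs, abs_sub_comm, abs_sub_le_iff]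
    constructor
    · simp only [Pi.add_apply]
      nlinarith [Real.exp_pos (w * x)]
    · simp only [Pi.add_apply]
      nlinarith [Real.exp_pos (w * x)]

lemma continuousOn_integral_expm1 (hν : IntegrableOn (fun x => min x 1) (Ioi 0) ν)
    (hνexp : ∀ u : ℝ, (u : EReal) ≤ L →
      IntegrableOn (fun x => Real.exp (u * x)) (Set.Ici 1) ν)
    {u₀ : ℝ} (hu₀ : (u₀ : EReal) ≤ L) :
    ContinuousOn (fun w => ∫ x in Ioi (0:ℝ), (Real.exp (w * x) - 1) ∂ν) (Iic u₀) := by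
  intro w₀ hw₀
  set M := |w₀| + 1 + |u₀| with hM
  have hM0 : 0 ≤ M := by positivity
  set bound : ℝ → ℝ :=
    fun x => if x < 1 then M * Real.exp M * x else Real.exp (u₀ * x) + 1
    with hbound
  apply continuousWithinAt_of_dominated (bound := bound)
  · exact Eventually.of_forall fun w => Continuous.aestronglyMeasurable (by fun_prop)
  · filter_upwards [self_mem_nhdsWithin,
      mem_nhdsWithin_of_mem_nhds (Ioo_mem_nhds (by linarith : w₀ - 1 < w₀)
        (by linarith : w₀ < w₀ + 1))] with w hw1 hw2
    have hwM : |w| ≤ M := by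
      rw [abs_le]; rw [mem_Ioo] at hw2
      constructor <;> [nlinarith [abs_nonneg w₀, abs_nonneg u₀, neg_abs_le w₀];
        nlinarith [abs_nonneg w₀, abs_nonneg u₀, le_abs_self w₀]]
    have hwu : w ≤ u₀ := hw1
    rw [ae_restrict_iff' measurableSet_Ioi]
    refine ae_of_all _ fun x hx => ?_
    have hx0 : (0:ℝ) < x := hx
    rw [norm_eq_abs]
    by_cases hx1 : x < 1
    · simp only [hbound, if_pos hx1]
      exact bound_small' hwM hx0 hx1.le
    · simp only [hbound, if_neg hx1]
      push_neg at hx1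
      have hew : Real.exp (w * x) ≤ Real.exp (u₀ * x) :=
        Real.exp_le_exp.2 (mul_le_mul_of_nonneg_right hwu hx0.le)
      rw [abs_sub_comm, abs_sub_le_iff]
      constructor
      · nlinarith [Real.exp_pos (w * x)]
      · nlinarith [Real.exp_pos (w * x)]
  · have hsplit : Ioo (0:ℝ) 1 ∪ Ici 1 = Ioi 0 := Ioo_union_Ici_eq_Ioi zero_lt_one
    rw [show (ν.restrict (Ioi (0:ℝ))) = ν.restrict (Ioo 0 1 ∪ Ici 1) by rw [hsplit]]
    rw [show Integrable bound (ν.restrict (Ioo 0 1 ∪ Ici 1)) =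
      IntegrableOn bound (Ioo 0 1 ∪ Ici 1) ν from rfl]
    refine IntegrableOn.union ?_ ?_
    · refine Integrable.congr ((nu_int_x hν).const_mul (M * Real.exp M)) ?_
      rw [EventuallyEq, ae_restrict_iff' measurableSet_Ioo]
      exact ae_of_all _ fun x hx => by simp only [hbound, if_pos hx.2]
    · refine Integrable.congr ((hνexp u₀ hu₀).add (nu_int_const hν)) ?_
      rw [EventuallyEq, ae_restrict_iff' measurableSet_Ici]
      refine ae_of_all _ fun x hx => ?_
      have h1 : (1:ℝ) ≤ x := hx
      simp only [hbound, if_neg (show ¬ x < 1 by linarith), Pi.add_apply]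
  · exact ae_of_all _ fun x => Continuous.continuousWithinAt (by fun_prop)

end Nu

lemma convexOn_affine (p q : ℝ) {s : Set ℝ} (hs : Convex ℝ s) :
    ConvexOn ℝ s (fun w => p * w + q) := by
  refine ⟨hs, fun x _ y _ u v hu hv huv => le_of_eq ?_⟩
  simp only [smul_eq_mul]
  linear_combination -q * huv

lemma ereal_exists_between {z : ℝ} {L : EReal} (hzL : (z : EReal) < L) :
    ∃ u₀ : ℝ, z < u₀ ∧ (u₀ : EReal) ≤ L := by
  induction L with
  | bot => exact absurd hzL (by simp)
  | coe l => exact ⟨l, EReal.coe_lt_coe_iff.1 hzL, le_rfl⟩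
  | top => exact ⟨z + 1, by linarith, le_top⟩

section G
variable {μ : Measure ℝ} {L : EReal} {G : ℝ → ℝ} {b σ a c : ℝ}

lemma tendsto_G_atBot (hG : G = fun w => -b * w + σ ^ 2 / 2 * w ^ 2 +
      (∫ x in Set.Ioi (0 : ℝ), (Real.exp (w * x) - 1 - w * x) ∂μ) + a * w + c)
    (hsub : 0 < σ ∨ a < b) : Tendsto G atBot atTop := by
  have hlow : ∀ w, σ ^ 2 / 2 * w ^ 2 + ((a - b) * w + c) ≤ G w := by
    intro w
    rw [hG]
    have := integral_F_nonneg (μ := μ) w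
    nlinarith
  rcases hsub with hσpos | hab
  · have h1 : Tendsto (fun u : ℝ => u * (σ ^ 2 / 2 * u + (b - a)) + c) atTop atTop :=
      tendsto_atTop_add_const_right _ c (Filter.Tendsto.atTop_mul_atTop₀ tendsto_id
        (tendsto_atTop_add_const_right _ _ (Filter.Tendsto.const_mul_atTop (by positivity)
          tendsto_id)))
    refine tendsto_atTop_mono ?_ (h1.comp tendsto_neg_atBot_atTop)
    intro w
    have h2 := hlow w
    simp only [Function.comp_apply, id_eq]
    nlinarith
  · have h1 : Tendsto (fun u : ℝ => (b - a) * u + c) atTop atTop :=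
      tendsto_atTop_add_const_right _ c (Filter.Tendsto.const_mul_atTop (by linarith) tendsto_id)
    refine tendsto_atTop_mono ?_ (h1.comp tendsto_neg_atBot_atTop)
    intro w
    have h2 := hlow w
    simp only [Function.comp_apply, id_eq]
    nlinarith [sq_nonneg (σ * w)]

lemma continuousOn_G (hG : G = fun w => -b * w + σ ^ 2 / 2 * w ^ 2 +
      (∫ x in Set.Ioi (0 : ℝ), (Real.exp (w * x) - 1 - w * x) ∂μ) + a * w + c)
    (hμint : Integrable (fun x => min (x ^ 2) x) μ)
    (hexp : ∀ u : ℝ, (u : EReal) ≤ L →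
      IntegrableOn (fun x => Real.exp (u * x)) (Set.Ici 1) μ)
    {u₀ : ℝ} (hu₀ : (u₀ : EReal) ≤ L) : ContinuousOn G (Iic u₀) := by
  rw [hG]
  refine ContinuousOn.add (ContinuousOn.add (ContinuousOn.add (ContinuousOn.add
    (Continuous.continuousOn (by fun_prop)) (Continuous.continuousOn (by fun_prop)))
    (continuousOn_integral_F hμint hexp hu₀)) (Continuous.continuousOn (by fun_prop)))
    continuousOn_const

lemma convexOn_G (hG : G = fun w => -b * w + σ ^ 2 / 2 * w ^ 2 +
      (∫ x in Set.Ioi (0 : ℝ), (Real.exp (w * x) - 1 - w * x) ∂μ) + a * w + c)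
    (hσ : 0 ≤ σ)
    (hμint : Integrable (fun x => min (x ^ 2) x) μ)
    (hexp : ∀ u : ℝ, (u : EReal) ≤ L →
      IntegrableOn (fun x => Real.exp (u * x)) (Set.Ici 1) μ)
    {u₀ : ℝ} (hu₀ : (u₀ : EReal) ≤ L) : ConvexOn ℝ (Iic u₀) G := by
  have hrepr : G = fun w => (∫ x in Set.Ioi (0 : ℝ), (Real.exp (w * x) - 1 - w * x) ∂μ) +
      (σ ^ 2 / 2 * w ^ 2 + ((a - b) * w + c)) := by
    rw [hG]; funext w; ring
  rw [hrepr]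
  refine ConvexOn.add (convexOn_integral_F hμint hexp hu₀) (ConvexOn.add ?_
    (convexOn_affine _ _ (convex_Iic u₀)))
  have h2 : ConvexOn ℝ (Iic u₀) (fun w : ℝ => w ^ 2) :=
    (Even.convexOn_pow even_two).subset (subset_univ _) (convex_Iic u₀)
  have h3 := h2.smul (show (0:ℝ) ≤ σ ^ 2 / 2 by positivity)
  simpa [smul_eq_mul] using h3

lemma lipschitz_near {u₀ : ℝ} (hconv : ConvexOn ℝ (Iic u₀) G)
    (hcont : ContinuousOn G (Iic u₀)) {z : ℝ} (hz : z < u₀) :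
    ∃ K : NNReal, ∃ r : ℝ, 0 < r ∧ LipschitzOnWith K G (Metric.ball z r) := by
  set R := u₀ - z with hR
  have hR0 : (0:ℝ) < R := by simp [hR]; linarith
  have hball : Metric.ball z R ⊆ Iic u₀ := by
    intro y hy
    rw [Metric.mem_ball, Real.dist_eq] at hy
    have := abs_lt.1 hy
    simp only [mem_Iic]
    linarith [this.2]
  have hIcc : Metric.ball z R ⊆ Icc (z - R) (z + R) := by
    intro y hy
    rw [Metric.mem_ball, Real.dist_eq] at hy
    have := abs_lt.1 hy
    exact ⟨by linarith [this.1], by linarith [this.2]⟩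
  have hIccIic : Icc (z - R) (z + R) ⊆ Iic u₀ := fun y hy => by
    simp only [mem_Iic]; have := hy.2; simp only [hR] at this ⊢; linarith
  have hbd : Bornology.IsBounded (G '' Metric.ball z R) := by
    refine Bornology.IsBounded.subset ?_ (image_mono hIcc)
    exact (isCompact_Icc.image_of_continuousOn (hcont.mono hIccIic)).isBounded
  obtain ⟨K, hK⟩ := (hconv.subset hball (convex_ball z R)).exists_lipschitzOnWith_of_isBounded
    (half_lt_self hR0) hbd
  exact ⟨K, R / 2, half_pos hR0, hK⟩

end G

section Dyn
variable {G v : ℝ → ℝ}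

lemma eventually_gt_right {t₂ d : ℝ} (ht₂ : 0 ≤ t₂) (hd : 0 < d)
    (hder : HasDerivWithinAt v d (Ici 0) t₂) : ∀ᶠ u in 𝓝[>] t₂, v t₂ < v u := by
  have h1 : Tendsto (slope v t₂) (𝓝[Ici 0 \ {t₂}] t₂) (𝓝 d) :=
    hasDerivWithinAt_iff_tendsto_slope.1 hder
  have h2 : 𝓝[>] t₂ ≤ 𝓝[Ici 0 \ {t₂}] t₂ :=
    nhdsWithin_mono _ (fun u hu => ⟨le_trans ht₂ (le_of_lt hu), by simp [ne_of_gt (mem_Ioi.1 hu)]⟩)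
  have h3 : ∀ᶠ u in 𝓝[>] t₂, 0 < slope v t₂ u :=
    (h1.mono_left h2).eventually (eventually_gt_nhds hd)
  filter_upwards [h3, self_mem_nhdsWithin] with u hu hu'
  have hu'' : t₂ < u := hu'
  rw [slope_def_field] at hu
  have hden : 0 < u - t₂ := by linarith
  have := (div_pos_iff.1 hu)
  rcases this with ⟨h, _⟩ | ⟨_, h⟩
  · linarith
  · linarith

lemma eventually_lt_right {t₂ d : ℝ} (ht₂ : 0 ≤ t₂) (hd : d < 0)
    (hder : HasDerivWithinAt v d (Ici 0) t₂) : ∀ᶠ u in 𝓝[>] t₂, v u < v t₂ := by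
  have h1 : Tendsto (slope v t₂) (𝓝[Ici 0 \ {t₂}] t₂) (𝓝 d) :=
    hasDerivWithinAt_iff_tendsto_slope.1 hder
  have h2 : 𝓝[>] t₂ ≤ 𝓝[Ici 0 \ {t₂}] t₂ :=
    nhdsWithin_mono _ (fun u hu => ⟨le_trans ht₂ (le_of_lt hu), by simp [ne_of_gt (mem_Ioi.1 hu)]⟩)
  have h3 : ∀ᶠ u in 𝓝[>] t₂, slope v t₂ u < 0 :=
    (h1.mono_left h2).eventually (eventually_lt_nhds hd)
  filter_upwards [h3, self_mem_nhdsWithin] with u hu hu'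
  have hu'' : t₂ < u := hu'
  rw [slope_def_field] at hu
  have hden : 0 < u - t₂ := by linarith
  have := (div_neg_iff.1 hu)
  rcases this with ⟨_, h⟩ | ⟨h, _⟩
  · linarith
  · linarith

lemma stay_above (vcont : ContinuousOn v (Ici 0))
    (hv' : ∀ t ∈ Ici (0:ℝ), HasDerivWithinAt v (G (v t)) (Ici 0) t)
    {z : ℝ} (hGz : 0 < G z) (hv0 : z ≤ v 0) : ∀ t, 0 ≤ t → z ≤ v t := by
  by_contra hcon
  push_neg at hcon
  obtain ⟨t₁, ht₁0, ht₁⟩ := hcon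
  have ht₁pos : 0 < t₁ := by
    rcases eq_or_lt_of_le ht₁0 with h | h
    · exfalso; rw [← h] at ht₁; linarith
    · exact h
  set A := {t | t ∈ Icc 0 t₁ ∧ z ≤ v t} with hA
  have hA0 : (0:ℝ) ∈ A := ⟨⟨le_rfl, ht₁pos.le⟩, hv0⟩
  have hAne : A.Nonempty := ⟨0, hA0⟩
  have hAbdd : BddAbove A := ⟨t₁, fun s hs => hs.1.2⟩
  have hclosed : IsClosed A := by
    have : A = Icc 0 t₁ ∩ v ⁻¹' (Ici z) := rfl
    rw [this]
    exact ContinuousOn.preimage_isClosed_of_isClosed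
      (vcont.mono (fun u hu => hu.1)) isClosed_Icc isClosed_Ici
  set T := sSup A with hT
  have hTA : T ∈ A := hclosed.csSup_mem hAne hAbdd
  have hT0 : 0 ≤ T := hTA.1.1
  have hTt₁ : T < t₁ := by
    rcases eq_or_lt_of_le hTA.1.2 with h | h
    · exfalso; have := hTA.2; rw [h] at this; linarith
    · exact h
  have hafter : ∀ u, T < u → u ≤ t₁ → v u < z := by
    intro u hu hut₁
    by_contra hcon2
    push_neg at hcon2
    have : u ∈ A := ⟨⟨by linarith, hut₁⟩, hcon2⟩
    have := le_csSup hAbdd this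
    linarith
  have hvT : v T = z := by
    refine le_antisymm ?_ hTA.2
    -- closure argument
    have hclosed2 : IsClosed {u | u ∈ Icc T t₁ ∧ v u ≤ z} := by
      have : {u | u ∈ Icc T t₁ ∧ v u ≤ z} = Icc T t₁ ∩ v ⁻¹' (Iic z) := rfl
      rw [this]
      exact ContinuousOn.preimage_isClosed_of_isClosed
        (vcont.mono (fun u hu => le_trans hT0 hu.1)) isClosed_Icc isClosed_Iic
    have hsub : Ioc T t₁ ⊆ {u | u ∈ Icc T t₁ ∧ v u ≤ z} :=
      fun u hu => ⟨⟨hu.1.le, hu.2⟩, (hafter u hu.1 hu.2).le⟩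
    have hTmem : T ∈ closure (Ioc T t₁) := by
      rw [closure_Ioc (ne_of_lt hTt₁)]; exact ⟨le_rfl, hTt₁.le⟩
    have := closure_minimal hsub hclosed2 hTmem
    exact this.2
  -- derivative at T is G z > 0, so v > z just to the right; contradiction
  have hder := hv' T hT0
  rw [hvT] at hder
  have hev := eventually_gt_right hT0 hGz hder
  rw [hvT] at hev
  have hIoc : Ioc T t₁ ∈ 𝓝[>] T := Ioc_mem_nhdsGT hTt₁
  obtain ⟨u, hu1, hu2⟩ := (hev.and (eventually_of_mem hIoc (fun x hx => hx))).exists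
  exact absurd (hafter u hu2.1 hu2.2) (by linarith)

end Dyn

section Dyn2
variable {G v : ℝ → ℝ}

lemma stick (vcont : ContinuousOn v (Ici 0))
    (hv' : ∀ t ∈ Ici (0:ℝ), HasDerivWithinAt v (G (v t)) (Ici 0) t)
    {z : ℝ} (hLip : ∃ K : NNReal, ∃ r : ℝ, 0 < r ∧ LipschitzOnWith K G (Metric.ball z r))
    (hGz : G z = 0) {t₀ : ℝ} (ht₀ : 0 ≤ t₀) (hvt₀ : v t₀ = z) :
    ∀ t, t₀ ≤ t → v t = z := by
  obtain ⟨K, r, hr, hK⟩ := hLip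
  intro t₁ ht₁
  rcases eq_or_lt_of_le ht₁ with rfl | ht₁'
  · exact hvt₀
  set A := {t | t ∈ Icc t₀ t₁ ∧ ∀ u ∈ Icc t₀ t, v u = z} with hA
  have hA0 : t₀ ∈ A := ⟨⟨le_rfl, ht₁⟩, fun u hu => by
    have : u = t₀ := le_antisymm hu.2 hu.1
    rw [this, hvt₀]⟩
  have hAne : A.Nonempty := ⟨t₀, hA0⟩
  have hAbdd : BddAbove A := ⟨t₁, fun s hs => hs.1.2⟩
  set T := sSup A with hT
  have hT1 : t₀ ≤ T := le_csSup hAbdd hA0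
  have hT2 : T ≤ t₁ := csSup_le hAne (fun s hs => hs.1.2)
  have hT0 : 0 ≤ T := le_trans ht₀ hT1
  have key1 : ∀ u, t₀ ≤ u → u < T → v u = z := by
    intro u hu huT
    obtain ⟨s, hsA, hus⟩ := exists_lt_of_lt_csSup hAne huT
    exact hsA.2 u ⟨hu, hus.le⟩
  have key2 : v T = z := by
    rcases eq_or_lt_of_le hT1 with h | h
    · rw [← h, hvt₀]
    · have hclosed : IsClosed {u | u ∈ Icc t₀ T ∧ v u = z} := by
        have : {u | u ∈ Icc t₀ T ∧ v u = z} = Icc t₀ T ∩ v ⁻¹' {z} := rfl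
        rw [this]
        exact ContinuousOn.preimage_isClosed_of_isClosed
          (vcont.mono (fun u hu => le_trans ht₀ hu.1)) isClosed_Icc isClosed_singleton
      have hsub : Ico t₀ T ⊆ {u | u ∈ Icc t₀ T ∧ v u = z} :=
        fun u hu => ⟨⟨hu.1, hu.2.le⟩, key1 u hu.1 hu.2⟩
      have hTmem : T ∈ closure (Ico t₀ T) := by
        rw [closure_Ico (ne_of_lt h)]; exact ⟨h.le, le_rfl⟩
      exact (closure_minimal hsub hclosed hTmem).2
  rcases eq_or_lt_of_le hT2 with h | hTlt
  · rw [← h] at *; exact key2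
  · exfalso
    -- extend past T using uniqueness
    have hcT : ContinuousWithinAt v (Ici 0) T := vcont T hT0
    have hball : ∀ᶠ u in 𝓝[Ici 0] T, v u ∈ Metric.ball z r := by
      apply hcT.eventually_mem
      rw [key2]
      exact Metric.ball_mem_nhds _ hr
    obtain ⟨δ₀, hδ₀, hsubball⟩ := Metric.mem_nhdsWithin_iff.1 hball
    have hδball : ∀ u, 0 ≤ u → |u - T| < δ₀ → v u ∈ Metric.ball z r := fun u hu h2 =>
      hsubball ⟨by rwa [Metric.mem_ball, Real.dist_eq], hu⟩
    set δ := min (δ₀ / 2) (t₁ - T) with hδdef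
    have hδpos : 0 < δ := lt_min (by linarith) (by linarith)
    have hsubIci : Icc T (T + δ) ⊆ Ici (0:ℝ) := fun u hu => le_trans hT0 hu.1
    have huniq : EqOn v (fun _ => z) (Icc T (T + δ)) := by
      apply ODE_solution_unique_of_mem_Icc_right
        (v := fun _ y => G y) (s := fun _ => Metric.ball z r) (K := K)
        (fun _ _ => hK) (vcont.mono hsubIci)
        (fun t ht => (hv' t (le_trans hT0 ht.1)).mono (fun x (hx : t ≤ x) =>
          le_trans (le_trans hT0 ht.1) hx))
        (fun t ht => hδball t (le_trans hT0 ht.1) (by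
          rw [abs_of_nonneg (by linarith [ht.1] : (0:ℝ) ≤ t - T)]
          have := ht.2
          have hd2 : δ ≤ δ₀ / 2 := min_le_left _ _
          linarith))
        continuousOn_const
        (fun t ht => by
          show HasDerivWithinAt (fun _ => z) (G z) (Ici t) t
          rw [hGz]
          exact hasDerivWithinAt_const _ _ _)
        (fun t _ => Metric.mem_ball_self hr)
        key2
    have hmem : T + δ ∈ A := by
      refine ⟨⟨by linarith, by linarith [min_le_right (δ₀/2) (t₁ - T)]⟩, fun u hu => ?_⟩
      rcases lt_or_ge u T with h | h
      · exact key1 u hu.1 h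
      · exact huniq ⟨h, hu.2⟩
    have := le_csSup hAbdd hmem
    linarith

lemma ceiling (vcont : ContinuousOn v (Ici 0))
    (hv' : ∀ t ∈ Ici (0:ℝ), HasDerivWithinAt v (G (v t)) (Ici 0) t)
    {z : ℝ} (hLip : ∃ K : NNReal, ∃ r : ℝ, 0 < r ∧ LipschitzOnWith K G (Metric.ball z r))
    (hGz : G z = 0) (hv0 : v 0 ≤ z) : ∀ t, 0 ≤ t → v t ≤ z := by
  by_contra hcon
  push_neg at hcon
  obtain ⟨t₁, ht₁0, ht₁⟩ := hcon
  have ht₁pos : 0 < t₁ := by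
    rcases eq_or_lt_of_le ht₁0 with h | h
    · exfalso; rw [← h] at ht₁; linarith
    · exact h
  set A := {t | t ∈ Icc 0 t₁ ∧ v t ≤ z} with hA
  have hA0 : (0:ℝ) ∈ A := ⟨⟨le_rfl, ht₁pos.le⟩, hv0⟩
  have hAne : A.Nonempty := ⟨0, hA0⟩
  have hAbdd : BddAbove A := ⟨t₁, fun s hs => hs.1.2⟩
  have hclosed : IsClosed A := by
    have : A = Icc 0 t₁ ∩ v ⁻¹' (Iic z) := rfl
    rw [this]
    exact ContinuousOn.preimage_isClosed_of_isClosed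
      (vcont.mono (fun u hu => hu.1)) isClosed_Icc isClosed_Iic
  set T := sSup A with hT
  have hTA : T ∈ A := hclosed.csSup_mem hAne hAbdd
  have hT0 : 0 ≤ T := hTA.1.1
  have hTt₁ : T < t₁ := by
    rcases eq_or_lt_of_le hTA.1.2 with h | h
    · exfalso; have := hTA.2; rw [h] at this; linarith
    · exact h
  have hafter : ∀ u, T < u → u ≤ t₁ → z < v u := by
    intro u hu hut₁
    by_contra hcon2
    push_neg at hcon2
    have : u ∈ A := ⟨⟨by linarith, hut₁⟩, hcon2⟩
    have := le_csSup hAbdd this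
    linarith
  have hvT : v T = z := by
    refine le_antisymm hTA.2 ?_
    have hclosed2 : IsClosed {u | u ∈ Icc T t₁ ∧ z ≤ v u} := by
      have : {u | u ∈ Icc T t₁ ∧ z ≤ v u} = Icc T t₁ ∩ v ⁻¹' (Ici z) := rfl
      rw [this]
      exact ContinuousOn.preimage_isClosed_of_isClosed
        (vcont.mono (fun u hu => le_trans hT0 hu.1)) isClosed_Icc isClosed_Ici
    have hsub : Ioc T t₁ ⊆ {u | u ∈ Icc T t₁ ∧ z ≤ v u} :=
      fun u hu => ⟨⟨hu.1.le, hu.2⟩, (hafter u hu.1 hu.2).le⟩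
    have hTmem : T ∈ closure (Ioc T t₁) := by
      rw [closure_Ioc (ne_of_lt hTt₁)]; exact ⟨le_rfl, hTt₁.le⟩
    exact (closure_minimal hsub hclosed2 hTmem).2
  have := stick vcont hv' hLip hGz hT0 hvT t₁ (by linarith)
  rw [this] at ht₁
  exact lt_irrefl _ ht₁

end Dyn2

section Dyn3
variable {G v : ℝ → ℝ}

lemma converge_up (vcont : ContinuousOn v (Ici 0))
    (hv' : ∀ t ∈ Ici (0:ℝ), HasDerivWithinAt v (G (v t)) (Ici 0) t)
    {ξ : ℝ} (hGξ : G ξ = 0)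
    (hGpos : ∀ x, 0 ≤ x → x < ξ → 0 < G x)
    (hGconti : ∀ x, 0 ≤ x → x < ξ → ContinuousAt G x)
    (hrange : ∀ t, 0 ≤ t → v t ∈ Icc 0 ξ) :
    Tendsto v atTop (𝓝 ξ) := by
  have hGnonneg : ∀ x, 0 ≤ x → x ≤ ξ → 0 ≤ G x := by
    intro x hx hxξ
    rcases eq_or_lt_of_le hxξ with h | h
    · rw [h, hGξ]
    · exact (hGpos x hx h).le
  have hmono : MonotoneOn v (Ici 0) := by
    apply monotoneOn_of_hasDerivWithinAt_nonneg (convex_Ici 0) vcont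
    · intro t ht
      rw [interior_Ici] at ht ⊢
      exact (hv' t (le_of_lt (mem_Ioi.1 ht))).mono Ioi_subset_Ici_self
    · intro t ht
      rw [interior_Ici] at ht
      have := hrange t (le_of_lt ht)
      exact hGnonneg _ this.1 this.2
  set w : ℝ → ℝ := fun t => v (max t 0) with hw
  have hwmono : Monotone w := by
    intro s t hst
    exact hmono (le_max_right s 0) (le_max_right t 0) (max_le_max hst le_rfl)
  have hwbdd : BddAbove (range w) := by
    refine ⟨ξ, ?_⟩
    rintro y ⟨t, rfl⟩
    exact (hrange _ (le_max_right t 0)).2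
  set η := ⨆ t, w t with hη
  have hwt : Tendsto w atTop (𝓝 η) := tendsto_atTop_ciSup hwmono hwbdd
  have hvw : v =ᶠ[atTop] w := by
    filter_upwards [eventually_ge_atTop (0:ℝ)] with t ht
    rw [hw]; simp [max_eq_left ht]
  have hvt : Tendsto v atTop (𝓝 η) := hwt.congr' hvw.symm
  have hle : ∀ t, 0 ≤ t → v t ≤ η := by
    intro t ht
    have h1 : w t ≤ η := le_ciSup hwbdd t
    have h2 : w t = v t := by rw [hw]; simp [max_eq_left ht]
    linarith
  have hη0 : 0 ≤ η := le_trans (hrange 0 le_rfl).1 (by simpa using hle 0 le_rfl)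
  have hηξ : η ≤ ξ := ciSup_le fun t => (hrange _ (le_max_right t 0)).2
  rcases eq_or_lt_of_le hηξ with h | hηlt
  · rwa [h] at hvt
  exfalso
  have hGη : 0 < G η := hGpos η hη0 hηlt
  set ε := G η / 2 with hε
  have hεpos : 0 < ε := by positivity
  have hev : ∀ᶠ x in 𝓝 η, ε < G x :=
    (hGconti η hη0 hηlt).eventually (eventually_gt_nhds (by rw [hε]; linarith))
  obtain ⟨δ, hδpos, hδ⟩ := Metric.eventually_nhds_iff.1 hev
  have hball : ∀ᶠ t in atTop, v t ∈ Metric.ball η δ := hvt (Metric.ball_mem_nhds _ hδpos)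
  obtain ⟨T₁, hT₁⟩ := eventually_atTop.1 (hball.and (eventually_ge_atTop (0:ℝ)))
  set T := max T₁ 0 with hTdef
  have hT0 : (0:ℝ) ≤ T := le_max_right _ _
  have hεG : ∀ t, T ≤ t → ε ≤ G (v t) := by
    intro t ht
    have h1 := (hT₁ t (le_trans (le_max_left _ _) ht)).1
    exact (hδ (by rwa [Metric.mem_ball] at h1)).le
  have hgmono : MonotoneOn (fun u => v u - ε * u) (Ici T) := by
    apply monotoneOn_of_hasDerivWithinAt_nonneg (convex_Ici T)
      ((vcont.mono (fun u (hu : T ≤ u) => le_trans hT0 hu)).sub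
        (Continuous.continuousOn (by fun_prop)))
    · intro u hu
      rw [interior_Ici] at hu ⊢
      have h1 : HasDerivWithinAt v (G (v u)) (Ioi T) u :=
        (hv' u (le_trans hT0 hu.le)).mono (fun x hx => le_trans hT0 (le_of_lt hx))
      have h2 : HasDerivWithinAt (fun u : ℝ => ε * u) ε (Ioi T) u := by
        simpa using ((hasDerivAt_id u).const_mul ε).hasDerivWithinAt
      exact h1.sub h2
    · intro u hu
      rw [interior_Ici] at hu
      have := hεG u (le_of_lt hu)
      linarith
  have hvTmem := hrange T hT0
  set t2 := T + (ξ - v T + 1) / ε with ht2def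
  have hnum : (0:ℝ) < ξ - v T + 1 := by linarith [hvTmem.2]
  have ht2 : T ≤ t2 := by
    have : 0 ≤ (ξ - v T + 1) / ε := le_of_lt (div_pos hnum hεpos)
    rw [ht2def]
    linarith
  have hg := hgmono (mem_Ici.2 (le_refl T)) (mem_Ici.2 ht2) ht2
  simp only [ht2def] at hg
  have hcancel : ε * ((ξ - v T + 1) / ε) = ξ - v T + 1 := by field_simp
  have hbig : ξ + 1 ≤ v t2 := by
    rw [ht2def]
    nlinarith [hg, hcancel]
  have := (hrange t2 (le_trans hT0 ht2)).2
  linarith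

end Dyn3

lemma lipschitzOnWith_ball_neg {K : NNReal} {G : ℝ → ℝ} {z r : ℝ}
    (h : LipschitzOnWith K G (Metric.ball z r)) :
    LipschitzOnWith K (fun y => -G (-y)) (Metric.ball (-z) r) := by
  intro x hx y hy
  have hx' : -x ∈ Metric.ball z r := by
    rw [Metric.mem_ball, Real.dist_eq] at hx ⊢
    rw [show -x - z = -(x - -z) by ring, abs_neg]; exact hx
  have hy' : -y ∈ Metric.ball z r := by
    rw [Metric.mem_ball, Real.dist_eq] at hy ⊢
    rw [show -y - z = -(y - -z) by ring, abs_neg]; exact hy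
  calc edist (-G (-x)) (-G (-y)) = edist (G (-x)) (G (-y)) := edist_neg_neg _ _
  _ ≤ K * edist (-x) (-y) := h hx' hy'
  _ = K * edist x y := by rw [edist_neg_neg]

lemma cesaro {f : ℝ → ℝ} {Λ : ℝ} (hfc : ContinuousOn f (Ici 0))
    (hf : Tendsto f atTop (𝓝 Λ)) :
    Tendsto (fun t : ℝ => (1 / t) * ∫ s in (0:ℝ)..t, f s) atTop (𝓝 Λ) := by
  rw [Metric.tendsto_atTop]
  intro ε hε
  obtain ⟨T₁, hT₁⟩ := (Metric.tendsto_atTop.1 hf) (ε/4) (by positivity)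
  set T := max T₁ 0 with hTdef
  have hT0 : (0:ℝ) ≤ T := le_max_right _ _
  have hbound : ∀ s, T ≤ s → |f s - Λ| ≤ ε/4 := by
    intro s hs
    have := hT₁ s (le_trans (le_max_left _ _) hs)
    rw [Real.dist_eq] at this; exact this.le
  have hIf : ∀ a b : ℝ, 0 ≤ a → 0 ≤ b → IntervalIntegrable f volume a b := by
    intro a b ha hb
    apply ContinuousOn.intervalIntegrable
    exact hfc.mono (fun x hx => le_trans (le_min ha hb) hx.1)
  set C := |∫ s in (0:ℝ)..T, (f s - Λ)| with hC
  have hC0 : 0 ≤ C := abs_nonneg _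
  refine ⟨max (T + 1) (4 * C / ε + 1), fun t ht => ?_⟩
  have ht1 : T + 1 ≤ t := le_trans (le_max_left _ _) ht
  have ht2 : 4 * C / ε + 1 ≤ t := le_trans (le_max_right _ _) ht
  have htpos : 0 < t := by linarith
  have hTt : T ≤ t := by linarith
  have hg1 : IntervalIntegrable (fun s => f s - Λ) volume 0 T :=
    (hIf 0 T le_rfl hT0).sub intervalIntegrable_const
  have hg2 : IntervalIntegrable (fun s => f s - Λ) volume T t :=
    (hIf T t hT0 htpos.le).sub intervalIntegrable_const
  have hsplit : ∫ s in (0:ℝ)..t, (f s - Λ) =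
      (∫ s in (0:ℝ)..T, (f s - Λ)) + ∫ s in T..t, (f s - Λ) :=
    (intervalIntegral.integral_add_adjacent_intervals hg1 hg2).symm
  have htail : |∫ s in T..t, (f s - Λ)| ≤ ε/4 * |t - T| := by
    rw [← Real.norm_eq_abs]
    apply intervalIntegral.norm_integral_le_of_norm_le_const
    intro x hx
    rw [Set.uIoc_of_le hTt] at hx
    exact hbound x hx.1.le
  have hfint : ∫ s in (0:ℝ)..t, f s = (∫ s in (0:ℝ)..t, (f s - Λ)) + t * Λ := by
    have h0 : IntervalIntegrable f volume 0 t := hIf 0 t le_rfl htpos.le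
    have : ∫ s in (0:ℝ)..t, (f s - Λ) =
        (∫ s in (0:ℝ)..t, f s) - ∫ s in (0:ℝ)..t, (Λ:ℝ) :=
      intervalIntegral.integral_sub h0 intervalIntegrable_const
    rw [this, intervalIntegral.integral_const]
    simp only [smul_eq_mul, sub_zero]
    ring
  have habs : |t - T| = t - T := abs_of_nonneg (by linarith)
  have h5 : |∫ s in (0:ℝ)..t, (f s - Λ)| ≤ C + ε/4 * (t - T) := by
    rw [hsplit]
    refine (abs_add_le _ _).trans ?_
    rw [← hC, ← habs]
    linarith [htail]
  rw [Real.dist_eq]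
  have heq : 1 / t * (∫ s in (0:ℝ)..t, f s) - Λ = 1 / t * ∫ s in (0:ℝ)..t, (f s - Λ) := by
    rw [hfint, mul_add, ← mul_assoc, one_div_mul_cancel htpos.ne', one_mul, add_sub_cancel_right]
  rw [heq, abs_mul, abs_of_pos (by positivity : (0:ℝ) < 1 / t)]
  have hεt : 4 * C + ε ≤ ε * t := by
    have h6 := mul_le_mul_of_nonneg_left ht2 hε.le
    have h7 : ε * (4 * C / ε + 1) = 4 * C + ε := by field_simp
    linarith
  have hmain : 1 / t * (C + ε/4 * (t - T)) < ε := by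
    rw [div_mul_eq_mul_div, div_lt_iff₀ htpos]
    nlinarith
  calc 1 / t * |∫ s in (0:ℝ)..t, (f s - Λ)| ≤ 1 / t * (C + ε/4 * (t - T)) :=
        mul_le_mul_of_nonneg_left h5 (by positivity)
  _ < ε := hmain

end S10

open S10 in
/-- Proposition 3.7 in Riccati form: asymptotic behavior in the strictly
subcritical case: if `b > 0` and (`σ > 0` or `a < b`), so that `G(x) → +∞` as `x → -∞`,
and if there exists `x*` with `0 ≤ x* ≤ L` and `G(x*) ≤ 0`, then with
`ξ := 0` when `G(0) = 0` and `ξ := inf {x : x ≤ L ∧ G(x) ≤ 0}` otherwise, one has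
`ξ ≤ L` and `G(ξ) = 0`; every solution `v` of `v' = G(v)`, `v(0) = 0` staying in
`(-∞, L]` converges to `ξ`; and for every immigration mechanism
`Ψ(u) = β u + ∫_{(0,∞)} (e^{ux} - 1) ν(dx)` one has
`(1/t) ∫_0^t Ψ(v(s)) ds → Ψ(ξ)` as `t → ∞`. -/
theorem statement10 (μ : Measure ℝ) (b σ a c : ℝ) (hσ : 0 ≤ σ)
    (hμ0 : μ (Set.Iic 0) = 0)
    (hμint : Integrable (fun x => min (x ^ 2) x) μ)
    (L : EReal) (hL : 0 < L)
    (hexp : ∀ u : ℝ, (u : EReal) ≤ L →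
      IntegrableOn (fun x => Real.exp (u * x)) (Set.Ici 1) μ)
    (hass : ∀ l : ℝ, L = (l : EReal) →
      IntegrableOn (fun x => x * Real.exp (l * x)) (Set.Ici 1) μ)
    (G : ℝ → ℝ)
    (hG : G = fun w => -b * w + σ ^ 2 / 2 * w ^ 2 +
      (∫ x in Set.Ioi (0 : ℝ), (Real.exp (w * x) - 1 - w * x) ∂μ) + a * w + c)
    (hb : 0 < b) (hsub : 0 < σ ∨ a < b)
    (hxstar : ∃ xstar : ℝ, 0 ≤ xstar ∧ (xstar : EReal) ≤ L ∧ G xstar ≤ 0)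
    (ξ : ℝ)
    (hξ : ξ = if G 0 = 0 then 0 else sInf {x : ℝ | (x : EReal) ≤ L ∧ G x ≤ 0}) :
    Tendsto G atBot atTop ∧
    (ξ : EReal) ≤ L ∧ G ξ = 0 ∧
    (∀ v : ℝ → ℝ, v 0 = 0 →
      (∀ t ∈ Set.Ici (0 : ℝ), HasDerivWithinAt v (G (v t)) (Set.Ici 0) t) →
      (∀ t ∈ Set.Ici (0 : ℝ), ((v t : ℝ) : EReal) ≤ L) →
      Tendsto v atTop (nhds ξ) ∧
      (∀ β : ℝ, 0 ≤ β → ∀ ν : Measure ℝ,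
        IntegrableOn (fun x => min x 1) (Set.Ioi 0) ν →
        (∀ u : ℝ, (u : EReal) ≤ L →
          IntegrableOn (fun x => Real.exp (u * x)) (Set.Ici 1) ν) →
        Tendsto (fun t : ℝ => (1 / t) * ∫ s in (0:ℝ)..t,
            (β * v s + ∫ x in Set.Ioi (0 : ℝ), (Real.exp (v s * x) - 1) ∂ν))
          atTop
          (nhds (β * ξ + ∫ x in Set.Ioi (0 : ℝ), (Real.exp (ξ * x) - 1) ∂ν)))) := by
  have hGtop : Tendsto G atBot atTop := tendsto_G_atBot hG hsub
  obtain ⟨xs, hxs0, hxsL, hxsG⟩ := hxstar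
  have h0L : ((0:ℝ) : EReal) < L := by rw [EReal.coe_zero]; exact hL
  obtain ⟨R, hR⟩ : ∃ R : ℝ, ∀ w ≤ R, 0 < G w :=
    eventually_atBot.1 (hGtop.eventually (eventually_gt_atTop 0))
  have hcontS : ContinuousOn G (Iic xs) := continuousOn_G hG hμint hexp hxsL
  have hconvS : ConvexOn ℝ (Iic xs) G := convexOn_G hG hσ hμint hexp hxsL
  have hLcase : (∃ l : ℝ, L = (l : EReal)) ∨ L = ⊤ := by
    induction L with
    | bot => exact absurd hL (by simp)
    | coe l => exact Or.inl ⟨l, rfl⟩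
    | top => exact Or.inr rfl
  -- main package: basic facts about ξ plus convergence of solutions
  have pack : ((ξ : EReal) ≤ L ∧ G ξ = 0) ∧
      (∀ v : ℝ → ℝ, v 0 = 0 →
        (∀ t ∈ Set.Ici (0 : ℝ), HasDerivWithinAt v (G (v t)) (Set.Ici 0) t) →
        (∀ t ∈ Set.Ici (0 : ℝ), ((v t : ℝ) : EReal) ≤ L) →
        Tendsto v atTop (𝓝 ξ)) := by
    by_cases hG0 : G 0 = 0
    · -- Case A : `ξ = 0` and every solution is constant 0
      have hξ0 : ξ = 0 := by rw [hξ, if_pos hG0]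
      refine ⟨⟨by rw [hξ0]; exact h0L.le, by rw [hξ0]; exact hG0⟩, ?_⟩
      intro v hv0 hv' hvL
      have vcont : ContinuousOn v (Ici 0) := fun s hs => (hv' s hs).continuousWithinAt
      obtain ⟨u₀, h0u₀, hu₀L⟩ := ereal_exists_between h0L
      have hLip := lipschitz_near (convexOn_G hG hσ hμint hexp hu₀L)
        (continuousOn_G hG hμint hexp hu₀L) h0u₀
      have hzero : ∀ t, (0:ℝ) ≤ t → v t = 0 :=
        stick vcont hv' hLip hG0 le_rfl hv0
      rw [hξ0]
      refine Tendsto.congr' ?_ tendsto_const_nhds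
      filter_upwards [eventually_ge_atTop (0:ℝ)] with t ht
      exact (hzero t ht).symm
    · -- `ξ = sInf S`
      have hξ' : ξ = sInf {x : ℝ | (x : EReal) ≤ L ∧ G x ≤ 0} := by rw [hξ, if_neg hG0]
      set S := {x : ℝ | (x : EReal) ≤ L ∧ G x ≤ 0} with hSdef
      set S' := {x : ℝ | x ∈ Iic xs ∧ G x ≤ 0} with hS'def
      have hxsS' : xs ∈ S' := ⟨mem_Iic.2 le_rfl, hxsG⟩
      have hS'ne : S'.Nonempty := ⟨xs, hxsS'⟩
      have hS'bdd : BddBelow S' := by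
        refine ⟨R, fun s hs => ?_⟩
        by_contra hcon
        push_neg at hcon
        exact absurd hs.2 (not_le.2 (hR s hcon.le))
      have hSbdd : BddBelow S := by
        refine ⟨R, fun s hs => ?_⟩
        by_contra hcon
        push_neg at hcon
        exact absurd hs.2 (not_le.2 (hR s hcon.le))
      have hSne : S.Nonempty := ⟨xs, hxsL, hxsG⟩
      have hS'sub : S' ⊆ S := fun x hx =>
        ⟨le_trans (EReal.coe_le_coe_iff.2 hx.1) hxsL, hx.2⟩
      have hSS' : sInf S = sInf S' := by
        refine le_antisymm (csInf_le_csInf hSbdd hS'ne hS'sub) (le_csInf hSne ?_)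
        intro s hs
        rcases le_or_gt s xs with h | h
        · exact csInf_le hS'bdd ⟨h, hs.2⟩
        · exact le_trans (csInf_le hS'bdd hxsS') h.le
      have hS'closed : IsClosed S' := by
        have : S' = Iic xs ∩ G ⁻¹' (Iic 0) := rfl
        rw [this]
        exact ContinuousOn.preimage_isClosed_of_isClosed hcontS isClosed_Iic isClosed_Iic
      have hinf := hS'closed.csInf_mem hS'ne hS'bdd
      have hξS' : ξ ∈ S' := by rw [hξ', hSS']; exact hinf
      have hξxs : ξ ≤ xs := hξS'.1
      have hξL : (ξ : EReal) ≤ L := le_trans (EReal.coe_le_coe_iff.2 hξxs) hxsL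
      have hlb : ∀ x : ℝ, (x : EReal) ≤ L → G x ≤ 0 → ξ ≤ x := by
        intro x h1 h2
        rw [hξ']
        exact csInf_le hSbdd ⟨h1, h2⟩
      have hGξ : G ξ = 0 := by
        refine le_antisymm hξS'.2 ?_
        by_contra hcon
        push_neg at hcon
        have hcξ : ContinuousWithinAt G (Iic xs) ξ := hcontS ξ hξxs
        have hev : ∀ᶠ y in 𝓝[Iic xs] ξ, G y < 0 :=
          hcξ.eventually (eventually_lt_nhds hcon)
        have hmono : 𝓝[Iio ξ] ξ ≤ 𝓝[Iic xs] ξ :=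
          nhdsWithin_mono _ (fun y (hy : y < ξ) => le_trans hy.le hξxs)
        obtain ⟨y, hy1, hy2⟩ := ((hev.filter_mono hmono).and self_mem_nhdsWithin).exists
        have hy3 : y < ξ := hy2
        have : ξ ≤ y := hlb y (le_trans (EReal.coe_le_coe_iff.2 (le_trans hy3.le hξxs)) hxsL)
          hy1.le
        linarith
      have hξne : ξ ≠ 0 := fun h => hG0 (h ▸ hGξ)
      refine ⟨⟨hξL, hGξ⟩, ?_⟩
      intro v hv0 hv' hvL
      have vcont : ContinuousOn v (Ici 0) := fun s hs => (hv' s hs).continuousWithinAt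
      rcases lt_trichotomy (G 0) 0 with hGneg | hGzero | hGpos
      · -- Case C : `G 0 < 0`, `ξ < 0`, solution decreases to `ξ`
        have hξ0 : ξ ≤ 0 := hlb 0 h0L.le hGneg.le
        have hξneg : ξ < 0 := lt_of_le_of_ne hξ0 hξne
        have hGneg' : ∀ x, ξ < x → x ≤ 0 → G x < 0 := by
          intro x hx1 hx2
          have hp : (0:ℝ) ≤ x / ξ := by rw [div_nonneg_iff]; right; exact ⟨hx2, hξneg.le⟩
          have hq : 0 < 1 - x / ξ := by
            have : x / ξ < 1 := by
              rw [div_lt_one_of_neg hξneg]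
              exact hx1
            linarith
          have hmem0 : (0:ℝ) ∈ Iic xs := hxs0
          have hmemξ : ξ ∈ Iic xs := hξxs
          have hcx := hconvS.2 hmemξ hmem0 hp hq.le (by ring)
          simp only [smul_eq_mul, mul_zero, add_zero] at hcx
          have hxeq : x / ξ * ξ = x := div_mul_cancel₀ x (ne_of_lt hξneg)
          rw [hxeq, hGξ, mul_zero, zero_add] at hcx
          calc G x ≤ (1 - x / ξ) * G 0 := hcx
          _ < 0 := mul_neg_of_pos_of_neg hq hGneg
        -- work with the reflected system
        set Gh : ℝ → ℝ := fun y => -G (-y) with hGh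
        set vh : ℝ → ℝ := fun t => -v t with hvh
        set ξh : ℝ := -ξ with hξh
        have hξhpos : 0 < ξh := by rw [hξh]; linarith
        have hvh' : ∀ t ∈ Ici (0:ℝ), HasDerivWithinAt vh (Gh (vh t)) (Ici 0) t := by
          intro t ht
          have := (hv' t ht).neg
          simp only [hGh, hvh, neg_neg]
          exact this
        have vhcont : ContinuousOn vh (Ici 0) := fun s hs => (hvh' s hs).continuousWithinAt
        have hvh0 : vh 0 = 0 := by rw [hvh]; simp [hv0]
        have hup : ∀ t, 0 ≤ t → 0 ≤ vh t := by
          apply stay_above vhcont hvh'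
          · show 0 < Gh 0
            rw [hGh]; simp only [neg_zero]; linarith
          · rw [hvh0]
        have hGhξh : Gh ξh = 0 := by rw [hGh, hξh]; simp [hGξ]
        have hfloor : ∀ t, 0 ≤ t → vh t ≤ ξh := by
          have hξLlt : (ξ : EReal) < L := lt_of_le_of_lt (EReal.coe_le_coe_iff.2 hξ0) h0L
          obtain ⟨u₀, hξu₀, hu₀L⟩ := ereal_exists_between hξLlt
          obtain ⟨K, r, hr, hK⟩ := lipschitz_near (convexOn_G hG hσ hμint hexp hu₀L)
            (continuousOn_G hG hμint hexp hu₀L) hξu₀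
          exact ceiling vhcont hvh' ⟨K, r, hr, lipschitzOnWith_ball_neg hK⟩ hGhξh
            (by rw [hvh0]; exact hξhpos.le)
        have hGhpos : ∀ x, 0 ≤ x → x < ξh → 0 < Gh x := by
          intro x hx1 hx2
          have hx3 : G (-x) < 0 := hGneg' (-x) (by rw [hξh] at hx2; linarith) (by linarith)
          show 0 < -G (-x)
          linarith
        have hGhconti : ∀ x, 0 ≤ x → x < ξh → ContinuousAt Gh x := by
          intro x hx1 hx2
          have hxL : ((-x : ℝ) : EReal) < L :=
            lt_of_le_of_lt (EReal.coe_le_coe_iff.2 (by linarith : -x ≤ (0:ℝ))) h0L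
          obtain ⟨u₀, hxu₀, hu₀L⟩ := ereal_exists_between hxL
          have hGA : ContinuousAt G (-x) :=
            (continuousOn_G hG hμint hexp hu₀L).continuousAt (Iic_mem_nhds hxu₀)
          have : ContinuousAt (fun y : ℝ => G (-y)) x :=
            hGA.comp continuous_neg.continuousAt
          exact this.neg
        have hrange : ∀ t, 0 ≤ t → vh t ∈ Icc 0 ξh := fun t ht => ⟨hup t ht, hfloor t ht⟩
        have htendh : Tendsto vh atTop (𝓝 ξh) :=
          converge_up vhcont hvh' hGhξh hGhpos hGhconti hrange
        have := htendh.neg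
        rw [hξh, neg_neg] at this
        refine this.congr ?_
        intro t; rw [hvh]; simp
      · exact absurd hGzero hG0
      · -- Case B : `G 0 > 0`, `ξ > 0`, solution increases to `ξ`
        have hξnonneg : 0 ≤ ξ := by
          by_contra hcon
          push_neg at hcon
          have hxspos : 0 < xs := by
            rcases eq_or_lt_of_le hxs0 with h | h
            · exfalso; rw [← h] at hxsG; linarith
            · exact h
          have hden : 0 < xs - ξ := by linarith
          have hp : (0:ℝ) ≤ xs / (xs - ξ) := by positivity
          have hq : (0:ℝ) ≤ -ξ / (xs - ξ) := by
            apply div_nonneg (by linarith) hden.le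
          have hcx := hconvS.2 (mem_Iic.2 hξxs) (mem_Iic.2 (le_refl xs)) hp hq
            (by field_simp; ring)
          simp only [smul_eq_mul] at hcx
          have hzero : xs / (xs - ξ) * ξ + -ξ / (xs - ξ) * xs = 0 := by
            field_simp
            ring
          rw [hzero] at hcx
          have : G 0 ≤ 0 := by
            calc G 0 ≤ xs / (xs - ξ) * G ξ + -ξ / (xs - ξ) * G xs := hcx
            _ ≤ 0 := by
              rw [hGξ, mul_zero, zero_add]
              exact mul_nonpos_of_nonneg_of_nonpos hq hxsG
          linarith
        have hξpos : 0 < ξ := lt_of_le_of_ne hξnonneg (Ne.symm hξne)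
        have hGpos' : ∀ x, 0 ≤ x → x < ξ → 0 < G x := by
          intro x hx1 hx2
          by_contra hcon
          push_neg at hcon
          have := hlb x (le_trans (le_of_lt (EReal.coe_lt_coe_iff.2 hx2)) hξL) hcon
          linarith
        have hGconti : ∀ x, 0 ≤ x → x < ξ → ContinuousAt G x := by
          intro x hx1 hx2
          have hxL : ((x : ℝ) : EReal) < L := lt_of_lt_of_le (EReal.coe_lt_coe_iff.2 hx2) hξL
          obtain ⟨u₀, hxu₀, hu₀L⟩ := ereal_exists_between hxL
          exact (continuousOn_G hG hμint hexp hu₀L).continuousAt (Iic_mem_nhds hxu₀)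
        have hlow : ∀ t, 0 ≤ t → 0 ≤ v t :=
          stay_above vcont hv' hGpos (le_of_eq hv0.symm)
        have hup : ∀ t, 0 ≤ t → v t ≤ ξ := by
          rcases eq_or_lt_of_le hξL with hEq | hLt
          · intro t ht
            have := hvL t ht
            rw [← hEq] at this
            exact EReal.coe_le_coe_iff.1 this
          · obtain ⟨u₀, hξu₀, hu₀L⟩ := ereal_exists_between hLt
            have hLip := lipschitz_near (convexOn_G hG hσ hμint hexp hu₀L)
              (continuousOn_G hG hμint hexp hu₀L) hξu₀
            exact ceiling vcont hv' hLip hGξ (by rw [hv0]; exact hξpos.le)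
        exact converge_up vcont hv' hGξ hGpos' hGconti (fun t ht => ⟨hlow t ht, hup t ht⟩)
  obtain ⟨⟨hξL, hGξ⟩, hconv⟩ := pack
  refine ⟨hGtop, hξL, hGξ, fun v hv0 hv' hvL => ?_⟩
  have vcont : ContinuousOn v (Ici 0) := fun s hs => (hv' s hs).continuousWithinAt
  have htendv : Tendsto v atTop (𝓝 ξ) := hconv v hv0 hv' hvL
  refine ⟨htendv, fun β hβ ν hν1 hν2 => ?_⟩
  set Iν : ℝ → ℝ := fun u => ∫ x in Ioi (0:ℝ), (Real.exp (u * x) - 1) ∂ν with hIν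
  -- choose a cutoff `u₂` valid along `atTop`
  obtain ⟨u₂, hu₂L, hev2, hξu₂⟩ : ∃ u₂ : ℝ, (u₂ : EReal) ≤ L ∧
      (∀ᶠ t in atTop, v t ≤ u₂) ∧ ξ ≤ u₂ := by
    rcases hLcase with ⟨l, rfl⟩ | rfl
    · refine ⟨l, le_rfl, ?_, EReal.coe_le_coe_iff.1 hξL⟩
      filter_upwards [eventually_ge_atTop (0:ℝ)] with t ht
      exact EReal.coe_le_coe_iff.1 (hvL t ht)
    · refine ⟨ξ + 1, le_top, ?_, by linarith⟩
      exact htendv.eventually (eventually_le_nhds (lt_add_one ξ))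
  have htendΨ : Tendsto (fun s => β * v s + Iν (v s)) atTop (𝓝 (β * ξ + Iν ξ)) := by
    have hcIν : ContinuousWithinAt Iν (Iic u₂) ξ :=
      (continuousOn_integral_expm1 hν1 hν2 hu₂L) ξ hξu₂
    have hv2 : Tendsto v atTop (𝓝[Iic u₂] ξ) := tendsto_nhdsWithin_iff.2 ⟨htendv, hev2⟩
    exact Tendsto.add (htendv.const_mul β) (hcIν.tendsto.comp hv2)
  have hcontf : ContinuousOn (fun s => β * v s + Iν (v s)) (Ici 0) := by
    intro s₀ hs₀
    obtain ⟨u₃, hu₃L, hevs, hmem⟩ : ∃ u₃ : ℝ, (u₃ : EReal) ≤ L ∧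
        (∀ᶠ u in 𝓝[Ici 0] s₀, v u ≤ u₃) ∧ v s₀ ≤ u₃ := by
      rcases hLcase with ⟨l, rfl⟩ | rfl
      · refine ⟨l, le_rfl, ?_, EReal.coe_le_coe_iff.1 (hvL s₀ hs₀)⟩
        exact eventually_mem_nhdsWithin.mono (fun u hu => EReal.coe_le_coe_iff.1 (hvL u hu))
      · refine ⟨v s₀ + 1, le_top, ?_, le_of_lt (lt_add_one _)⟩
        have := (vcont s₀ hs₀).eventually_mem (Iio_mem_nhds (lt_add_one (v s₀)))
        exact this.mono (fun u hu => le_of_lt hu)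
    refine ContinuousWithinAt.add (continuousWithinAt_const.mul (vcont s₀ hs₀)) ?_
    have hcIν : ContinuousWithinAt Iν (Iic u₃) (v s₀) :=
      (continuousOn_integral_expm1 hν1 hν2 hu₃L) (v s₀) hmem
    exact hcIν.tendsto.comp (tendsto_nhdsWithin_iff.2 ⟨vcont s₀ hs₀, hevs⟩)
  exact cesaro hcontf htendΨ
end

section
/- (Lévy exponent of the spectrally positive α-stable process; formula (5.1) for the α-CIR branching mechanism.) For every α ∈ (1,2), C > 0, η ≥ 0 and every u ≤ 0: ∫_{(0,∞)} (e^{u·z} − 1 − u·z) · C · η^α · z^{−1−α} dz = C · Γ(−α) · (−η·u)^α. -/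
open MeasureTheory Real Set
open Filter Topology

private lemma s11_nonneg (z : ℝ) : 0 ≤ Real.exp (-z) - 1 + z := by
  have := Real.add_one_le_exp (-z); linarith

private lemma s11_one_sub_exp_le {z : ℝ} (hz : 0 ≤ z) : 1 - Real.exp (-z) ≤ z := by
  have := Real.add_one_le_exp (-z); linarith

private lemma s11_one_sub_exp_nonneg {z : ℝ} (hz : 0 ≤ z) : 0 ≤ 1 - Real.exp (-z) := by
  have : Real.exp (-z) ≤ 1 := Real.exp_le_one_iff.mpr (by linarith)
  linarith

private lemma s11_quad {z : ℝ} (hz : 0 ≤ z) : Real.exp (-z) - 1 + z ≤ z ^ 2 / 2 := by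
  have key : ∀ x : ℝ, HasDerivAt (fun t => t ^ 2 / 2 - (Real.exp (-t) - 1 + t))
      (x - (1 - Real.exp (-x))) x := by
    intro x
    have h1 : HasDerivAt (fun t : ℝ => t ^ 2 / 2) x x := by
      have := (hasDerivAt_pow 2 x).div_const 2
      simpa using this
    have h2 : HasDerivAt (fun t : ℝ => Real.exp (-t)) (-Real.exp (-x)) x := by
      simpa [Function.comp_def] using (Real.hasDerivAt_exp (-x)).comp x (hasDerivAt_neg x)
    have := h1.sub (((h2.sub_const 1).add (hasDerivAt_id x)))
    refine this.congr_deriv ?_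
    ring
  have mono : MonotoneOn (fun t => t ^ 2 / 2 - (Real.exp (-t) - 1 + t)) (Set.Ici 0) := by
    apply monotoneOn_of_deriv_nonneg (convex_Ici 0)
    · exact Continuous.continuousOn (by continuity)
    · intro x _
      exact ((key x).differentiableAt).differentiableWithinAt
    · intro x hx
      rw [(key x).deriv]
      rw [interior_Ici, Set.mem_Ioi] at hx
      have := s11_one_sub_exp_le hx.le
      linarith
  have h0 := mono (Set.self_mem_Ici) hz hz
  simp only [Real.exp_zero, neg_zero] at h0
  norm_num at h0
  linarith

/-- generic integrability criterion on `Ioi 0` with power bounds. -/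
private lemma s11_integrable {f : ℝ → ℝ} {p q : ℝ} (hp : -1 < p) (hq : q < -1)
    (hmeas : ContinuousOn f (Set.Ioi 0))
    (h0 : ∀ z ∈ Set.Ioc (0:ℝ) 1, |f z| ≤ z ^ p)
    (h1 : ∀ z ∈ Set.Ioi (1:ℝ), |f z| ≤ z ^ q) :
    IntegrableOn f (Set.Ioi (0:ℝ)) := by
  have hsplit : Set.Ioc (0:ℝ) 1 ∪ Set.Ioi 1 = Set.Ioi 0 :=
    Set.Ioc_union_Ioi_eq_Ioi zero_le_one
  rw [← hsplit]
  apply IntegrableOn.union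
  · have hg : IntegrableOn (fun z : ℝ => z ^ p) (Set.Ioc 0 1) :=
      (intervalIntegral.intervalIntegrable_rpow' (a := 0) (b := 1) hp).1
    refine hg.integrable.mono
      ((hmeas.mono Set.Ioc_subset_Ioi_self).aestronglyMeasurable measurableSet_Ioc) ?_
    rw [ae_restrict_iff' measurableSet_Ioc]
    refine ae_of_all _ fun z hz => ?_
    rw [Real.norm_eq_abs, Real.norm_eq_abs, abs_of_nonneg (Real.rpow_nonneg hz.1.le p)]
    exact h0 z hz
  · have hg : IntegrableOn (fun z : ℝ => z ^ q) (Set.Ioi 1) :=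
      integrableOn_Ioi_rpow_of_lt hq one_pos
    refine hg.integrable.mono
      ((hmeas.mono (Set.Ioi_subset_Ioi zero_le_one)).aestronglyMeasurable measurableSet_Ioi) ?_
    rw [ae_restrict_iff' measurableSet_Ioi]
    refine ae_of_all _ fun z hz => ?_
    have hz0 : (0:ℝ) < z := lt_trans one_pos hz
    rw [Real.norm_eq_abs, Real.norm_eq_abs, abs_of_nonneg (Real.rpow_nonneg hz0.le q)]
    exact h1 z hz

private lemma s11_contOn (c : ℝ) (f : ℝ → ℝ) (hf : Continuous f) :
    ContinuousOn (fun z : ℝ => f z * z ^ c) (Set.Ioi 0) := by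
  apply hf.continuousOn.mul
  exact fun x hx => (Real.continuousAt_rpow_const x c (Or.inl (ne_of_gt hx))).continuousWithinAt

private lemma s11_intA {α : ℝ} (hα1 : 1 < α) (hα2 : α < 2) :
    IntegrableOn (fun z : ℝ => (Real.exp (-z) - 1 + z) * z ^ (-1 - α)) (Set.Ioi (0:ℝ)) := by
  apply s11_integrable (p := 1 - α) (q := -α) (by linarith) (by linarith)
  · exact s11_contOn _ _ (by continuity)
  · intro z hz
    rw [abs_of_nonneg (mul_nonneg (s11_nonneg z) (Real.rpow_nonneg hz.1.le _))]
    have h1 : Real.exp (-z) - 1 + z ≤ z ^ (2:ℝ) := by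
      have := s11_quad hz.1.le
      rw [show z ^ (2:ℝ) = z ^ (2:ℕ) from Real.rpow_natCast z 2]
      nlinarith [sq_nonneg z]
    calc (Real.exp (-z) - 1 + z) * z ^ (-1 - α) ≤ z ^ (2:ℝ) * z ^ (-1 - α) :=
          mul_le_mul_of_nonneg_right h1 (Real.rpow_nonneg hz.1.le _)
      _ = z ^ (1 - α) := by rw [← Real.rpow_add hz.1]; ring_nf
  · intro z hz
    have hz0 : (0:ℝ) < z := lt_trans one_pos hz
    rw [abs_of_nonneg (mul_nonneg (s11_nonneg z) (Real.rpow_nonneg hz0.le _))]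
    have h1 : Real.exp (-z) - 1 + z ≤ z ^ (1:ℝ) := by
      rw [Real.rpow_one]
      have : Real.exp (-z) ≤ 1 := Real.exp_le_one_iff.mpr (by linarith)
      linarith
    calc (Real.exp (-z) - 1 + z) * z ^ (-1 - α) ≤ z ^ (1:ℝ) * z ^ (-1 - α) :=
          mul_le_mul_of_nonneg_right h1 (Real.rpow_nonneg hz0.le _)
      _ = z ^ (-α) := by rw [← Real.rpow_add hz0]; ring_nf

private lemma s11_intB {α : ℝ} (hα1 : 1 < α) (hα2 : α < 2) :
    IntegrableOn (fun z : ℝ => (1 - Real.exp (-z)) * z ^ (-α)) (Set.Ioi (0:ℝ)) := by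
  apply s11_integrable (p := 1 - α) (q := -α) (by linarith) (by linarith)
  · exact s11_contOn _ _ (by continuity)
  · intro z hz
    rw [abs_of_nonneg (mul_nonneg (s11_one_sub_exp_nonneg hz.1.le) (Real.rpow_nonneg hz.1.le _))]
    have h1 : 1 - Real.exp (-z) ≤ z ^ (1:ℝ) := by
      rw [Real.rpow_one]; exact s11_one_sub_exp_le hz.1.le
    calc (1 - Real.exp (-z)) * z ^ (-α) ≤ z ^ (1:ℝ) * z ^ (-α) :=
          mul_le_mul_of_nonneg_right h1 (Real.rpow_nonneg hz.1.le _)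
      _ = z ^ (1 - α) := by rw [← Real.rpow_add hz.1]; ring_nf
  · intro z hz
    have hz0 : (0:ℝ) < z := lt_trans one_pos hz
    rw [abs_of_nonneg (mul_nonneg (s11_one_sub_exp_nonneg hz0.le) (Real.rpow_nonneg hz0.le _))]
    have h1 : 1 - Real.exp (-z) ≤ 1 := by
      have := Real.exp_pos (-z); linarith
    calc (1 - Real.exp (-z)) * z ^ (-α) ≤ 1 * z ^ (-α) :=
          mul_le_mul_of_nonneg_right h1 (Real.rpow_nonneg hz0.le _)
      _ = z ^ (-α) := one_mul _

private lemma s11_hE (x : ℝ) :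
    HasDerivAt (fun t : ℝ => Real.exp (-t) - 1 + t) (1 - Real.exp (-x)) x := by
  have h2 : HasDerivAt (fun t : ℝ => Real.exp (-t)) (-Real.exp (-x)) x := by
    simpa [Function.comp_def] using (Real.hasDerivAt_exp (-x)).comp x (hasDerivAt_neg x)
  have := (h2.sub_const 1).add (hasDerivAt_id x)
  refine this.congr_deriv ?_
  ring

private lemma s11_step1 {α : ℝ} (hα1 : 1 < α) (hα2 : α < 2) :
    ∫ z in Set.Ioi (0:ℝ), (1 - Real.exp (-z)) * z ^ (-α)
      = α * ∫ z in Set.Ioi (0:ℝ), (Real.exp (-z) - 1 + z) * z ^ (-1 - α) := by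
  have h := integral_Ioi_of_hasDerivAt_of_tendsto (a := 0)
    (f := fun z => (Real.exp (-z) - 1 + z) * z ^ (-α))
    (f' := fun z => (1 - Real.exp (-z)) * z ^ (-α)
      - α * ((Real.exp (-z) - 1 + z) * z ^ (-1 - α)))
    (m := 0) ?_ ?_ ?_ ?_
  · rw [integral_sub (s11_intB hα1 hα2) ((s11_intA hα1 hα2).const_mul α),
      integral_const_mul] at h
    norm_num at h
    linarith
  · -- continuity at 0 within Ici 0
    unfold ContinuousWithinAt
    rw [show (fun z : ℝ => (Real.exp (-z) - 1 + z) * z ^ (-α)) 0 = 0 by norm_num]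
    apply squeeze_zero' (g := fun z : ℝ => z ^ (2 - α))
    · filter_upwards [self_mem_nhdsWithin] with z hz
      exact mul_nonneg (s11_nonneg z) (Real.rpow_nonneg hz _)
    · filter_upwards [self_mem_nhdsWithin] with z hz
      rcases eq_or_lt_of_le (Set.mem_Ici.mp hz) with h | h
      · rw [← h]
        rw [Real.zero_rpow (show (2:ℝ) - α ≠ 0 from ne_of_gt (by linarith))]
        norm_num
      · have h1 : Real.exp (-z) - 1 + z ≤ z ^ (2:ℝ) := by
          have := s11_quad h.le
          rw [show z ^ (2:ℝ) = z ^ (2:ℕ) from Real.rpow_natCast z 2]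
          nlinarith [sq_nonneg z]
        calc (Real.exp (-z) - 1 + z) * z ^ (-α) ≤ z ^ (2:ℝ) * z ^ (-α) :=
              mul_le_mul_of_nonneg_right h1 (Real.rpow_nonneg h.le _)
          _ = z ^ (2 - α) := by rw [← Real.rpow_add h]; ring_nf
    · have := (Real.continuousAt_rpow_const 0 (2 - α) (Or.inr (by linarith))).continuousWithinAt
        (s := Set.Ici 0)
      show Tendsto _ _ _
      rw [ContinuousWithinAt, Real.zero_rpow (ne_of_gt (by linarith : (0:ℝ) < 2 - α))] at this
      exact this
  · intro x hx
    have hR : HasDerivAt (fun t : ℝ => t ^ (-α)) (-α * x ^ (-α - 1)) x :=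
      Real.hasDerivAt_rpow_const (Or.inl (ne_of_gt hx))
    have := (s11_hE x).mul hR
    refine this.congr_deriv ?_
    rw [show -α - 1 = -1 - α by ring]; ring
  · exact (s11_intB hα1 hα2).sub ((s11_intA hα1 hα2).const_mul α)
  · apply squeeze_zero' (g := fun z : ℝ => z ^ (1 - α))
    · filter_upwards [eventually_ge_atTop (0:ℝ)] with z hz
      exact mul_nonneg (s11_nonneg z) (Real.rpow_nonneg hz _)
    · filter_upwards [eventually_gt_atTop (0:ℝ)] with z hz
      have h1 : Real.exp (-z) - 1 + z ≤ z ^ (1:ℝ) := by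
        rw [Real.rpow_one]
        have : Real.exp (-z) ≤ 1 := Real.exp_le_one_iff.mpr (by linarith)
        linarith
      calc (Real.exp (-z) - 1 + z) * z ^ (-α) ≤ z ^ (1:ℝ) * z ^ (-α) :=
            mul_le_mul_of_nonneg_right h1 (Real.rpow_nonneg hz.le _)
        _ = z ^ (1 - α) := by rw [← Real.rpow_add hz]; ring_nf
    · have := tendsto_rpow_neg_atTop (show (0:ℝ) < α - 1 by linarith)
      rw [show -(α - 1) = 1 - α by ring] at this
      exact this

private lemma s11_intC {α : ℝ} (hα2 : α < 2) :
    IntegrableOn (fun z : ℝ => Real.exp (-z) * z ^ (1 - α)) (Set.Ioi (0:ℝ)) := by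
  have h := Real.GammaIntegral_convergent (show (0:ℝ) < 2 - α by linarith)
  rw [show (2:ℝ) - α - 1 = 1 - α by ring] at h
  exact h

private lemma s11_step2 {α : ℝ} (hα1 : 1 < α) (hα2 : α < 2) :
    ∫ z in Set.Ioi (0:ℝ), Real.exp (-z) * z ^ (1 - α)
      = (α - 1) * ∫ z in Set.Ioi (0:ℝ), (1 - Real.exp (-z)) * z ^ (-α) := by
  have h := integral_Ioi_of_hasDerivAt_of_tendsto (a := 0)
    (f := fun z => (1 - Real.exp (-z)) * z ^ (1 - α))
    (f' := fun z => Real.exp (-z) * z ^ (1 - α)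
      - (α - 1) * ((1 - Real.exp (-z)) * z ^ (-α)))
    (m := 0) ?_ ?_ ?_ ?_
  · rw [integral_sub (s11_intC hα2) ((s11_intB hα1 hα2).const_mul (α - 1)),
      integral_const_mul] at h
    norm_num at h
    linarith
  · unfold ContinuousWithinAt
    rw [show (fun z : ℝ => (1 - Real.exp (-z)) * z ^ (1 - α)) 0 = 0 by norm_num]
    apply squeeze_zero' (g := fun z : ℝ => z ^ (2 - α))
    · filter_upwards [self_mem_nhdsWithin] with z hz
      exact mul_nonneg (s11_one_sub_exp_nonneg hz) (Real.rpow_nonneg hz _)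
    · filter_upwards [self_mem_nhdsWithin] with z hz
      rcases eq_or_lt_of_le (Set.mem_Ici.mp hz) with h | h
      · rw [← h]
        rw [Real.zero_rpow (show (2:ℝ) - α ≠ 0 from ne_of_gt (by linarith)),
          Real.zero_rpow (show (1:ℝ) - α ≠ 0 from ne_of_lt (by linarith))]
        norm_num
      · have h1 : 1 - Real.exp (-z) ≤ z ^ (1:ℝ) := by
          rw [Real.rpow_one]; exact s11_one_sub_exp_le h.le
        calc (1 - Real.exp (-z)) * z ^ (1 - α) ≤ z ^ (1:ℝ) * z ^ (1 - α) :=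
              mul_le_mul_of_nonneg_right h1 (Real.rpow_nonneg h.le _)
          _ = z ^ (2 - α) := by rw [← Real.rpow_add h]; ring_nf
    · have := (Real.continuousAt_rpow_const 0 (2 - α) (Or.inr (by linarith))).continuousWithinAt
        (s := Set.Ici 0)
      show Tendsto _ _ _
      rw [ContinuousWithinAt, Real.zero_rpow (ne_of_gt (by linarith : (0:ℝ) < 2 - α))] at this
      exact this
  · intro x hx
    have hR : HasDerivAt (fun t : ℝ => t ^ (1 - α)) ((1 - α) * x ^ (1 - α - 1)) x :=
      Real.hasDerivAt_rpow_const (Or.inl (ne_of_gt hx))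
    have hE : HasDerivAt (fun t : ℝ => 1 - Real.exp (-t)) (Real.exp (-x)) x := by
      have h2 : HasDerivAt (fun t : ℝ => Real.exp (-t)) (-Real.exp (-x)) x := by
        simpa [Function.comp_def] using (Real.hasDerivAt_exp (-x)).comp x (hasDerivAt_neg x)
      have := (hasDerivAt_const x (1:ℝ)).sub h2
      exact this.congr_deriv (by ring)
    have := hE.mul hR
    refine this.congr_deriv ?_
    rw [show (1:ℝ) - α - 1 = -α by ring]; ring
  · exact (s11_intC hα2).sub ((s11_intB hα1 hα2).const_mul (α - 1))
  · apply squeeze_zero' (g := fun z : ℝ => z ^ (1 - α))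
    · filter_upwards [eventually_ge_atTop (0:ℝ)] with z hz
      exact mul_nonneg (s11_one_sub_exp_nonneg hz) (Real.rpow_nonneg hz _)
    · filter_upwards [eventually_gt_atTop (0:ℝ)] with z hz
      have h1 : 1 - Real.exp (-z) ≤ 1 := by
        have := Real.exp_pos (-z); linarith
      calc (1 - Real.exp (-z)) * z ^ (1 - α) ≤ 1 * z ^ (1 - α) :=
            mul_le_mul_of_nonneg_right h1 (Real.rpow_nonneg hz.le _)
        _ = z ^ (1 - α) := one_mul _
    · have := tendsto_rpow_neg_atTop (show (0:ℝ) < α - 1 by linarith)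
      rw [show -(α - 1) = 1 - α by ring] at this
      exact this

private lemma s11_I {α : ℝ} (hα1 : 1 < α) (hα2 : α < 2) :
    ∫ z in Set.Ioi (0:ℝ), (Real.exp (-z) - 1 + z) * z ^ (-1 - α) = Real.Gamma (-α) := by
  have h1 := s11_step1 hα1 hα2
  have h2 := s11_step2 hα1 hα2
  have hg : Real.Gamma (2 - α) = ∫ z in Set.Ioi (0:ℝ), Real.exp (-z) * z ^ (1 - α) := by
    rw [Real.Gamma_eq_integral (show (0:ℝ) < 2 - α by linarith),
      show (2:ℝ) - α - 1 = 1 - α by ring]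
  have hGamma : Real.Gamma (2 - α) = α * (α - 1) * Real.Gamma (-α) := by
    have e1 : Real.Gamma (-α + 1) = -α * Real.Gamma (-α) :=
      Real.Gamma_add_one (by intro h; linarith)
    have e2 : Real.Gamma (-α + 1 + 1) = (-α + 1) * Real.Gamma (-α + 1) :=
      Real.Gamma_add_one (by intro h; linarith)
    rw [show (2:ℝ) - α = -α + 1 + 1 by ring, e2, e1]; ring
  have hpos : (0:ℝ) < α * (α - 1) := by nlinarith
  apply mul_left_cancel₀ (ne_of_gt hpos)
  linear_combination hGamma - hg - h2 - (α - 1) * h1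

private lemma s11_key {α : ℝ} (hα1 : 1 < α) (hα2 : α < 2) {s : ℝ} (hs : 0 < s) :
    ∫ z in Set.Ioi (0:ℝ), (Real.exp (-(s * z)) - 1 + s * z) * z ^ (-1 - α)
      = Real.Gamma (-α) * s ^ α := by
  have hss : s ^ ((1:ℝ) + α) * s ^ (-1 - α) = 1 := by
    rw [← Real.rpow_add hs, show (1:ℝ) + α + (-1 - α) = 0 by ring, Real.rpow_zero]
  have hcongr : Set.EqOn
      (fun z : ℝ => (Real.exp (-(s * z)) - 1 + s * z) * z ^ (-1 - α))
      (fun z : ℝ => s ^ ((1:ℝ) + α) *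
        ((Real.exp (-(s * z)) - 1 + s * z) * (s * z) ^ (-1 - α))) (Set.Ioi 0) := by
    intro z hz
    have hz0 : (0:ℝ) < z := hz
    simp only
    rw [Real.mul_rpow hs.le hz0.le]
    calc (Real.exp (-(s * z)) - 1 + s * z) * z ^ (-1 - α)
        = (s ^ ((1:ℝ) + α) * s ^ (-1 - α)) *
            ((Real.exp (-(s * z)) - 1 + s * z) * z ^ (-1 - α)) := by rw [hss, one_mul]
      _ = s ^ ((1:ℝ) + α) *
            ((Real.exp (-(s * z)) - 1 + s * z) * (s ^ (-1 - α) * z ^ (-1 - α))) := by ring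
  rw [setIntegral_congr_fun measurableSet_Ioi hcongr, integral_const_mul,
    integral_comp_mul_left_Ioi (fun w : ℝ => (Real.exp (-w) - 1 + w) * w ^ (-1 - α)) 0 hs,
    mul_zero, smul_eq_mul, s11_I hα1 hα2]
  have : s ^ ((1:ℝ) + α) * s⁻¹ = s ^ α := by
    rw [← Real.rpow_neg_one s, ← Real.rpow_add hs, show (1:ℝ) + α + -1 = α by ring]
  rw [← mul_assoc, this, mul_comm]

/-- Lévy exponent of the spectrally positive α-stable process, formula (5.1):
for `α ∈ (1,2)`, `C > 0`, `η ≥ 0` and `u ≤ 0`,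
`∫_{(0,∞)} (e^{uz} - 1 - uz) C η^α z^{-1-α} dz = C Γ(-α) (-ηu)^α`. -/
theorem statement11 (α C η u : ℝ) (hα1 : 1 < α) (hα2 : α < 2)
    (hC : 0 < C) (hη : 0 ≤ η) (hu : u ≤ 0) :
    ∫ z in Set.Ioi (0 : ℝ),
        (Real.exp (u * z) - 1 - u * z) * (C * η ^ α * z ^ (-1 - α)) =
      C * Real.Gamma (-α) * (-(η * u)) ^ α := by
  have hα0 : α ≠ 0 := ne_of_gt (by linarith)
  rcases eq_or_lt_of_le hu with rfl | hu'
  · simp [Real.zero_rpow hα0]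
  rcases eq_or_lt_of_le hη with rfl | hη'
  · simp [Real.zero_rpow hα0]
  have hrw : ∀ z : ℝ, (Real.exp (u * z) - 1 - u * z) * (C * η ^ α * z ^ (-1 - α))
      = (C * η ^ α) * ((Real.exp (-(-u * z)) - 1 + -u * z) * z ^ (-1 - α)) := by
    intro z; rw [show -(-u * z) = u * z by ring]; ring
  simp_rw [hrw]
  rw [integral_const_mul, s11_key hα1 hα2 (show (0:ℝ) < -u by linarith),
    show -(η * u) = η * (-u) by ring, Real.mul_rpow hη (by linarith : (0:ℝ) ≤ -u)]
  ring
end
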